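/- arXiv:1601.02516 — 9 statements merged into one kernel-verified Lean document; each statement's English description precedes it below -/
import Mathlib

section
/- Let q be a division kernel on [0,M] satisfying Assumption (Q), and let f : [0,M] → [0,∞) be a bounded measurable non-increasing function. Then the map x ↦ ∫_0^1 q(x,α) f(αx) f((1−α)x) dα is non-increasing on [0,M]. -/
open MeasureTheory Set Filter

namespace DivAux

/-- primitive -/
noncomputable def F (ρ : ℝ → ℝ) (u : ℝ) : ℝ := ∫ t in (0:ℝ)..u, ρ t

/-- truncated generalized inverse -/
noncomputable def Finv (ρ : ℝ → ℝ) (v : ℝ) : ℝ :=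
  sInf {u ∈ Icc (0:ℝ) 1 | min v 1 ≤ F ρ u}

variable {ρ : ℝ → ℝ}

lemma hii (h1 : (∫ t in (0:ℝ)..1, ρ t) = 1) : IntervalIntegrable ρ volume 0 1 := by
  by_contra h
  rw [intervalIntegral.integral_undef h] at h1; norm_num at h1

lemma F_zero : F ρ 0 = 0 := intervalIntegral.integral_same

lemma F_one (h1 : (∫ t in (0:ℝ)..1, ρ t) = 1) : F ρ 1 = 1 := h1

lemma F_mono (h0 : ∀ α ∈ Icc (0:ℝ) 1, 0 ≤ ρ α) (h1 : (∫ t in (0:ℝ)..1, ρ t) = 1) :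
    MonotoneOn (F ρ) (Icc 0 1) := by
  intro a ha b hb hab
  have h2 : IntervalIntegrable ρ volume 0 a :=
    (hii h1).mono_set (by rw [uIcc_of_le ha.1, uIcc_of_le zero_le_one]; exact Icc_subset_Icc le_rfl ha.2)
  have h3 : IntervalIntegrable ρ volume a b :=
    (hii h1).mono_set (by rw [uIcc_of_le hab, uIcc_of_le zero_le_one]; exact Icc_subset_Icc ha.1 hb.2)
  have key : F ρ a + ∫ t in a..b, ρ t = F ρ b :=
    intervalIntegral.integral_add_adjacent_intervals h2 h3
  have pos : 0 ≤ ∫ t in a..b, ρ t :=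
    intervalIntegral.integral_nonneg hab (fun u hu => h0 u ⟨le_trans ha.1 hu.1, le_trans hu.2 hb.2⟩)
  linarith

lemma F_cont (h1 : (∫ t in (0:ℝ)..1, ρ t) = 1) : ContinuousOn (F ρ) (Icc 0 1) := by
  have := intervalIntegral.continuousOn_primitive_interval' (hii h1)
    (a := 0) (by rw [uIcc_of_le zero_le_one]; exact ⟨le_rfl, zero_le_one⟩)
  rwa [uIcc_of_le zero_le_one] at this

lemma one_mem_S (h1 : (∫ t in (0:ℝ)..1, ρ t) = 1) (v : ℝ) :
    (1:ℝ) ∈ {u ∈ Icc (0:ℝ) 1 | min v 1 ≤ F ρ u} :=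
  ⟨⟨zero_le_one, le_rfl⟩, by rw [F_one h1]; exact min_le_right _ _⟩

lemma bdd_S (v : ℝ) : BddBelow {u ∈ Icc (0:ℝ) 1 | min v 1 ≤ F ρ u} :=
  ⟨0, fun u hu => hu.1.1⟩

lemma Finv_mem (h1 : (∫ t in (0:ℝ)..1, ρ t) = 1) (v : ℝ) : Finv ρ v ∈ Icc (0:ℝ) 1 :=
  ⟨le_csInf ⟨1, one_mem_S h1 v⟩ (fun u hu => hu.1.1), csInf_le (bdd_S v) (one_mem_S h1 v)⟩

lemma Finv_mono (h1 : (∫ t in (0:ℝ)..1, ρ t) = 1) : Monotone (Finv ρ) := by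
  intro v w hvw
  exact csInf_le_csInf (bdd_S v) ⟨1, one_mem_S h1 w⟩
    (fun u hu => ⟨hu.1, le_trans (min_le_min_right 1 hvw) hu.2⟩)

lemma S_closed (h1 : (∫ t in (0:ℝ)..1, ρ t) = 1) (v : ℝ) :
    IsClosed {u ∈ Icc (0:ℝ) 1 | min v 1 ≤ F ρ u} := by
  have : {u ∈ Icc (0:ℝ) 1 | min v 1 ≤ F ρ u} = Icc 0 1 ∩ F ρ ⁻¹' Ici (min v 1) := by
    ext u; simp [mem_preimage, mem_Ici]
  rw [this]
  exact (F_cont h1).preimage_isClosed_of_isClosed isClosed_Icc isClosed_Ici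

lemma Finv_mem_S (h1 : (∫ t in (0:ℝ)..1, ρ t) = 1) (v : ℝ) :
    Finv ρ v ∈ {u ∈ Icc (0:ℝ) 1 | min v 1 ≤ F ρ u} :=
  (S_closed h1 v).csInf_mem ⟨1, one_mem_S h1 v⟩ (bdd_S v)

lemma galois (h0 : ∀ α ∈ Icc (0:ℝ) 1, 0 ≤ ρ α) (h1 : (∫ t in (0:ℝ)..1, ρ t) = 1)
    (v : ℝ) {t : ℝ} (ht : t ∈ Icc (0:ℝ) 1) :
    Finv ρ v ≤ t ↔ min v 1 ≤ F ρ t := by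
  constructor
  · intro h
    exact le_trans (Finv_mem_S h1 v).2 (F_mono h0 h1 (Finv_mem h1 v) ht h)
  · intro h
    exact csInf_le (bdd_S v) ⟨ht, h⟩

lemma map_eq (hm : Measurable ρ) (h0 : ∀ α ∈ Icc (0:ℝ) 1, 0 ≤ ρ α)
    (h1 : (∫ t in (0:ℝ)..1, ρ t) = 1) :
    Measure.map (Finv ρ) (volume.restrict (Ioo (0:ℝ) 1)) =
      (volume.restrict (Ioc (0:ℝ) 1)).withDensity (fun α => ENNReal.ofReal (ρ α)) := by
  have hFm : Measurable (Finv ρ) := (Finv_mono h1).measurable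
  haveI : IsFiniteMeasure ((volume.restrict (Ioo (0:ℝ) 1)).map (Finv ρ)) :=
    Measure.isFiniteMeasure_map _ _
  refine Measure.ext_of_Iic _ _ (fun t => ?_)
  rw [Measure.map_apply hFm measurableSet_Iic,
    Measure.restrict_apply (hFm measurableSet_Iic),
    withDensity_apply _ measurableSet_Iic, Measure.restrict_restrict measurableSet_Iic]
  have hint : IntegrableOn ρ (Ioc (0:ℝ) 1) volume := by
    have := hii h1
    rwa [intervalIntegrable_iff_integrableOn_Ioc_of_le zero_le_one] at this
  have hlint : ∀ s : Set ℝ, s ⊆ Ioc (0:ℝ) 1 → MeasurableSet s →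
      (∫⁻ α in s, ENNReal.ofReal (ρ α)) = ENNReal.ofReal (∫ α in s, ρ α) := by
    intro s hs hsm
    rw [← ofReal_integral_eq_lintegral_ofReal (hint.mono_set hs)]
    exact Filter.Eventually.filter_mono (ae_mono (Measure.restrict_mono hs le_rfl))
      (ae_restrict_of_forall_mem measurableSet_Ioc
        (fun α hα => h0 α ⟨hα.1.le, hα.2⟩))
  rcases lt_or_ge t 0 with htneg | ht0
  · have e1 : Finv ρ ⁻¹' Iic t ∩ Ioo 0 1 = (∅ : Set ℝ) := by
      ext v; simp only [mem_inter_iff, mem_preimage, mem_Iic, mem_empty_iff_false, iff_false]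
      rintro ⟨hle, _⟩
      exact absurd (le_trans (Finv_mem h1 v).1 hle) (not_le.mpr htneg)
    have e2 : Iic t ∩ Ioc (0:ℝ) 1 = (∅ : Set ℝ) := by
      ext α; simp only [mem_inter_iff, mem_Iic, mem_Ioc, mem_empty_iff_false, iff_false]
      rintro ⟨hle, h0', _⟩; linarith
    rw [e1, e2]; simp
  rcases le_or_gt t 1 with ht1 | ht1
  · -- main case t ∈ [0,1]
    set c := F ρ t with hc
    have hc0 : 0 ≤ c := by
      rw [hc, ← F_zero (ρ := ρ)]
      exact F_mono h0 h1 ⟨le_rfl, zero_le_one⟩ ⟨ht0, ht1⟩ ht0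
    have hc1 : c ≤ 1 := by
      rw [hc, ← F_one h1]
      exact F_mono h0 h1 ⟨ht0, ht1⟩ ⟨zero_le_one, le_rfl⟩ ht1
    have e1 : Finv ρ ⁻¹' Iic t ∩ Ioo 0 1 = Iic c ∩ Ioo 0 1 := by
      ext v
      simp only [mem_inter_iff, mem_preimage, mem_Iic, mem_Ioo]
      constructor
      · rintro ⟨hle, hv⟩
        refine ⟨?_, hv⟩
        have := (galois h0 h1 v ⟨ht0, ht1⟩).mp hle
        rwa [min_eq_left hv.2.le] at this
      · rintro ⟨hle, hv⟩
        refine ⟨?_, hv⟩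
        refine (galois h0 h1 v ⟨ht0, ht1⟩).mpr ?_
        rwa [min_eq_left hv.2.le]
    have e2 : Iic t ∩ Ioc (0:ℝ) 1 = Ioc 0 t := by
      ext α
      simp only [mem_inter_iff, mem_Iic, mem_Ioc]
      exact ⟨fun ⟨h, h', _⟩ => ⟨h', h⟩, fun ⟨h, h'⟩ => ⟨h', h, h'.trans ht1⟩⟩
    rw [e1, e2, hlint _ (fun α hα => ⟨hα.1, hα.2.trans ht1⟩) measurableSet_Ioc]
    have : (∫ α in Ioc (0:ℝ) t, ρ α) = c := by
      rw [hc, F, intervalIntegral.integral_of_le ht0]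
    rw [this]
    -- volume (Iic c ∩ Ioo 0 1) = ofReal c
    refine le_antisymm ?_ ?_
    · calc volume (Iic c ∩ Ioo 0 1) ≤ volume (Ioc 0 c) := by
            apply measure_mono
            rintro v ⟨hvc, hv0, _⟩
            exact ⟨hv0, hvc⟩
          _ = ENNReal.ofReal c := by rw [Real.volume_Ioc, sub_zero]
    · calc ENNReal.ofReal c = volume (Ioo 0 c) := by rw [Real.volume_Ioo, sub_zero]
          _ ≤ volume (Iic c ∩ Ioo 0 1) := by
            apply measure_mono
            rintro v ⟨hv0, hvc⟩
            exact ⟨hvc.le, hv0, lt_of_lt_of_le hvc hc1⟩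
  · -- t > 1
    have e1 : Finv ρ ⁻¹' Iic t ∩ Ioo 0 1 = Ioo (0:ℝ) 1 := by
      apply inter_eq_right.mpr
      intro v _
      exact le_trans (Finv_mem h1 v).2 ht1.le
    have e2 : Iic t ∩ Ioc (0:ℝ) 1 = Ioc 0 1 := by
      apply inter_eq_right.mpr
      intro α hα
      exact hα.2.trans ht1.le
    rw [e1, e2, hlint _ le_rfl measurableSet_Ioc]
    have : (∫ α in Ioc (0:ℝ) 1, ρ α) = 1 := by
      rw [← intervalIntegral.integral_of_le zero_le_one]; exact h1
    rw [this, Real.volume_Ioo, sub_zero]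

lemma change_of_var (hm : Measurable ρ) (h0 : ∀ α ∈ Icc (0:ℝ) 1, 0 ≤ ρ α)
    (h1 : (∫ t in (0:ℝ)..1, ρ t) = 1) {g : ℝ → ℝ} (hg : Measurable g) :
    (∫ v in Ioo (0:ℝ) 1, g (Finv ρ v)) = ∫ α in Ioc (0:ℝ) 1, ρ α * g α := by
  have hFm : Measurable (Finv ρ) := (Finv_mono h1).measurable
  calc (∫ v in Ioo (0:ℝ) 1, g (Finv ρ v))
      = ∫ u, g u ∂(Measure.map (Finv ρ) (volume.restrict (Ioo (0:ℝ) 1))) :=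
        (integral_map hFm.aemeasurable hg.aestronglyMeasurable).symm
    _ = ∫ u, g u ∂((volume.restrict (Ioc (0:ℝ) 1)).withDensity
          (fun α => ENNReal.ofReal (ρ α))) := by rw [map_eq hm h0 h1]
    _ = ∫ α in Ioc (0:ℝ) 1, (ρ α).toNNReal • g α := by
        rw [← integral_withDensity_eq_integral_smul
          (f := fun α => (ρ α).toNNReal) (measurable_real_toNNReal.comp hm) g]
        rfl
    _ = ∫ α in Ioc (0:ℝ) 1, ρ α * g α := by
        refine setIntegral_congr_fun measurableSet_Ioc (fun α hα => ?_)
        simp only [NNReal.smul_def, smul_eq_mul]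
        rw [Real.coe_toNNReal _ (h0 α ⟨hα.1.le, hα.2⟩)]

end DivAux

/-- Cumulative distribution function `F_x(u) = ∫_0^u q(x,α) dα` associated to a
division kernel. -/
noncomputable def cdf (q : ℝ → ℝ → ℝ) (x u : ℝ) : ℝ := ∫ α in (0:ℝ)..u, q x α

/-- Generalized inverse `F_x^{-1}(v) = inf {u ∈ [0,1] : F_x(u) ≥ v}`. -/
noncomputable def cdfInv (q : ℝ → ℝ → ℝ) (x v : ℝ) : ℝ :=
  sInf {u ∈ Set.Icc (0:ℝ) 1 | v ≤ cdf q x u}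

/-- A division kernel on `[0,M]`: measurable, nonnegative, a probability density in the
second variable, symmetric with respect to `1/2`. -/
def IsDivisionKernel (M : ℝ) (q : ℝ → ℝ → ℝ) : Prop :=
  Measurable (Function.uncurry q) ∧
  (∀ x ∈ Set.Icc (0:ℝ) M, ∀ α ∈ Set.Icc (0:ℝ) 1, 0 ≤ q x α) ∧
  (∀ x ∈ Set.Icc (0:ℝ) M, (∫ α in (0:ℝ)..1, q x α) = 1) ∧
  (∀ x ∈ Set.Icc (0:ℝ) M, ∀ α ∈ Set.Icc (0:ℝ) 1, q x α = q x (1 - α))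

/-- Assumption (Q): for all `u ∈ (0,1)` and `0 ≤ x ≤ y ≤ M`,
`x·F_x^{-1}(u) ≤ y·F_y^{-1}(u)` and `x·(1 − F_x^{-1}(u)) ≤ y·(1 − F_y^{-1}(u))`. -/
def AssumptionQ (M : ℝ) (q : ℝ → ℝ → ℝ) : Prop :=
  ∀ u ∈ Set.Ioo (0:ℝ) 1, ∀ x y : ℝ, 0 ≤ x → x ≤ y → y ≤ M →
    x * cdfInv q x u ≤ y * cdfInv q y u ∧
    x * (1 - cdfInv q x u) ≤ y * (1 - cdfInv q y u)

/-- If `q` is a division kernel satisfying Assumption (Q) and `f : [0,M] → [0,∞)` is a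
bounded measurable non-increasing function, then
`x ↦ ∫_0^1 q(x,α) f(αx) f((1−α)x) dα` is non-increasing on `[0,M]`. -/
theorem statement0 (M : ℝ) (hM : 0 < M) (q : ℝ → ℝ → ℝ)
    (hq : IsDivisionKernel M q) (hQ : AssumptionQ M q)
    (f : ℝ → ℝ) (hf_meas : Measurable f)
    (hf_bdd : ∃ C : ℝ, ∀ z ∈ Set.Icc (0:ℝ) M, f z ≤ C)
    (hf_nonneg : ∀ z ∈ Set.Icc (0:ℝ) M, 0 ≤ f z)
    (hf_anti : AntitoneOn f (Set.Icc 0 M)) :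
    AntitoneOn (fun x => ∫ α in (0:ℝ)..1, q x α * f (α * x) * f ((1 - α) * x))
      (Set.Icc 0 M) := by
  obtain ⟨hmeas, hnn, hone, _⟩ := hq
  obtain ⟨C, hC⟩ := hf_bdd
  have hC0 : 0 ≤ C := le_trans (hf_nonneg 0 ⟨le_rfl, hM.le⟩) (hC 0 ⟨le_rfl, hM.le⟩)
  have hqz : ∀ z : ℝ, Measurable (q z) := fun z =>
    hmeas.comp (measurable_prodMk_left)
  intro x hx y hy hxy
  -- rewrite both sides via the change of variables
  have key : ∀ z ∈ Set.Icc (0:ℝ) M,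
      (∫ α in (0:ℝ)..1, q z α * f (α * z) * f ((1 - α) * z)) =
      ∫ v in Ioo (0:ℝ) 1,
        f (DivAux.Finv (q z) v * z) * f ((1 - DivAux.Finv (q z) v) * z) := by
    intro z hz
    have hg : Measurable (fun α : ℝ => f (α * z) * f ((1 - α) * z)) :=
      (hf_meas.comp (measurable_id.mul_const z)).mul
        (hf_meas.comp ((measurable_const.sub measurable_id).mul_const z))
    rw [intervalIntegral.integral_of_le zero_le_one]
    have assoc : (∫ α in Ioc (0:ℝ) 1, q z α * f (α * z) * f ((1 - α) * z)) =
        ∫ α in Ioc (0:ℝ) 1, q z α * (f (α * z) * f ((1 - α) * z)) :=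
      setIntegral_congr_fun measurableSet_Ioc (fun α _ => by ring)
    rw [assoc, ← DivAux.change_of_var (hqz z) (hnn z hz) (hone z hz) hg]
  simp only
  rw [key x hx, key y hy]
  -- membership facts
  have hmemx : ∀ a ∈ Icc (0:ℝ) 1, ∀ z ∈ Set.Icc (0:ℝ) M, a * z ∈ Set.Icc (0:ℝ) M := by
    intro a ha z hz
    constructor
    · exact mul_nonneg ha.1 hz.1
    · calc a * z ≤ 1 * z := mul_le_mul_of_nonneg_right ha.2 hz.1
        _ = z := one_mul z
        _ ≤ M := hz.2
  -- integrability
  have hint : ∀ z ∈ Set.Icc (0:ℝ) M, IntegrableOn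
      (fun v => f (DivAux.Finv (q z) v * z) * f ((1 - DivAux.Finv (q z) v) * z))
      (Ioo (0:ℝ) 1) volume := by
    intro z hz
    have hFm : Measurable (DivAux.Finv (q z)) := (DivAux.Finv_mono (hone z hz)).measurable
    have hgm : Measurable (fun v =>
        f (DivAux.Finv (q z) v * z) * f ((1 - DivAux.Finv (q z) v) * z)) :=
      (hf_meas.comp (hFm.mul_const z)).mul
        (hf_meas.comp ((measurable_const.sub hFm).mul_const z))
    refine Integrable.mono' (integrable_const (C * C)) hgm.aestronglyMeasurable
      (ae_of_all _ (fun v => ?_))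
    have hmem1 : DivAux.Finv (q z) v * z ∈ Set.Icc (0:ℝ) M :=
      hmemx _ (DivAux.Finv_mem (hone z hz) v) z hz
    have hmem2 : (1 - DivAux.Finv (q z) v) * z ∈ Set.Icc (0:ℝ) M := by
      refine hmemx _ ?_ z hz
      have := DivAux.Finv_mem (hone z hz) v
      constructor <;> [linarith [this.2]; linarith [this.1]]
    rw [Real.norm_eq_abs, abs_of_nonneg
      (mul_nonneg (hf_nonneg _ hmem1) (hf_nonneg _ hmem2))]
    exact mul_le_mul (hC _ hmem1) (hC _ hmem2) (hf_nonneg _ hmem2) hC0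
  -- pointwise comparison
  refine setIntegral_mono_on (hint y hy) (hint x hx) measurableSet_Ioo (fun v hv => ?_)
  have hcdfinv : ∀ z : ℝ, cdfInv q z v = DivAux.Finv (q z) v := by
    intro z
    unfold cdfInv DivAux.Finv DivAux.F cdf
    rw [min_eq_left hv.2.le]
  obtain ⟨hQ1, hQ2⟩ := hQ v hv x y hx.1 hxy hy.2
  rw [hcdfinv x, hcdfinv y] at hQ1 hQ2
  set a := DivAux.Finv (q x) v with ha
  set b := DivAux.Finv (q y) v with hb
  have haI : a ∈ Icc (0:ℝ) 1 := DivAux.Finv_mem (hone x hx) v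
  have hbI : b ∈ Icc (0:ℝ) 1 := DivAux.Finv_mem (hone y hy) v
  have hmem1x : a * x ∈ Set.Icc (0:ℝ) M := hmemx a haI x hx
  have hmem1y : b * y ∈ Set.Icc (0:ℝ) M := hmemx b hbI y hy
  have hmem2x : (1 - a) * x ∈ Set.Icc (0:ℝ) M := by
    refine hmemx _ ?_ x hx
    constructor <;> [linarith [haI.2]; linarith [haI.1]]
  have hmem2y : (1 - b) * y ∈ Set.Icc (0:ℝ) M := by
    refine hmemx _ ?_ y hy
    constructor <;> [linarith [hbI.2]; linarith [hbI.1]]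
  have h1 : f (b * y) ≤ f (a * x) := by
    apply hf_anti hmem1x hmem1y
    calc a * x = x * a := mul_comm _ _
      _ ≤ y * b := hQ1
      _ = b * y := mul_comm _ _
  have h2 : f ((1 - b) * y) ≤ f ((1 - a) * x) := by
    apply hf_anti hmem2x hmem2y
    calc (1 - a) * x = x * (1 - a) := mul_comm _ _
      _ ≤ y * (1 - b) := hQ2
      _ = (1 - b) * y := mul_comm _ _
  exact mul_le_mul h1 h2 (hf_nonneg _ hmem2y) (hf_nonneg _ hmem1x)
end

section
/- Let l ∈ C¹([0,M], (0,1/2)) and define the division kernel q(x,α) = 1_{{l(x) ≤ α ≤ 1−l(x)}}/(1 − 2 l(x)). Then for every x ∈ [0,M] and u ∈ (0,1), the generalized inverse of the cumulative distribution function F_x is F_x^{-1}(u) = (1 − 2u) l(x) + u. Moreover, if 0 ≤ x l'(x) + l(x) ≤ 1 for every x ∈ (0,M), then q satisfies Assumption (Q). -/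
open MeasureTheory Set Filter

theorem intervalIntegral_indicator_Icc_const {a b c s : ℝ} (ha : 0 < a) (hs : 0 ≤ s)
    (hsb : s ≤ b) :
    ∫ α in (0:ℝ)..s, (Icc a b).indicator (fun _ => c) α = max (s - a) 0 * c := by
  have hinter : Icc a b ∩ Ioc 0 s = Icc a s := by
    ext α
    simp only [mem_inter_iff, mem_Icc, mem_Ioc]
    constructor
    · rintro ⟨⟨haα, -⟩, -, hαs⟩
      exact ⟨haα, hαs⟩
    · rintro ⟨haα, hαs⟩
      exact ⟨⟨haα, hαs.trans hsb⟩, ha.trans_le haα, hαs⟩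
  rw [intervalIntegral.integral_of_le hs, integral_indicator_const _ measurableSet_Icc,
    measureReal_restrict_apply measurableSet_Icc, hinter, Real.volume_real_Icc, smul_eq_mul]

theorem cdfInv_eq_of_eq_indicator {q : ℝ → ℝ → ℝ} {x a b v : ℝ}
    (hq : q x = (Icc a b).indicator fun _ => (b - a)⁻¹) (ha : 0 < a) (hab : a < b)
    (hb : b ≤ 1) (hv : v ∈ Ioo 0 1) :
    cdfInv q x v = a + v * (b - a) := by
  obtain ⟨hv0, hv1⟩ := hv
  have hba : 0 < b - a := sub_pos.2 hab
  have hcdf : ∀ s ∈ Icc 0 b, cdf q x s = max (s - a) 0 * (b - a)⁻¹ := fun s hs => by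
    rw [cdf, hq, intervalIntegral_indicator_Icc_const ha hs.1 hs.2]
  have hlt : a + v * (b - a) < b := by nlinarith
  have hpos : 0 < v * (b - a) := mul_pos hv0 hba
  refine IsLeast.csInf_eq ⟨⟨⟨by linarith, by linarith⟩, ?_⟩, ?_⟩
  · rw [hcdf _ ⟨by linarith, hlt.le⟩, add_sub_cancel_left, max_eq_left hpos.le,
      mul_inv_cancel_right₀ hba.ne']
  · rintro s ⟨⟨hs0, -⟩, hvs⟩
    by_contra! hst
    rw [hcdf s ⟨hs0, by linarith⟩] at hvs
    have : max (s - a) 0 * (b - a)⁻¹ < v * (b - a) * (b - a)⁻¹ :=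
      mul_lt_mul_of_pos_right (max_lt (by linarith) hpos) (inv_pos.2 hba)
    rw [mul_inv_cancel_right₀ hba.ne'] at this
    linarith

theorem monotoneOn_mul_affine_of_deriv_bounds {l : ℝ → ℝ} {a b u : ℝ} (hu : u ∈ Icc 0 1)
    (hc : ContinuousOn l (Icc a b)) (hd : DifferentiableOn ℝ l (Ioo a b))
    (hD : ∀ x ∈ Ioo a b, 0 ≤ x * deriv l x + l x ∧ x * deriv l x + l x ≤ 1) :
    MonotoneOn (fun x => x * ((1 - 2 * u) * l x + u)) (Icc a b) := by
  have hderiv : ∀ x ∈ Ioo a b, HasDerivAt (fun x => x * ((1 - 2 * u) * l x + u))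
      (1 * ((1 - 2 * u) * l x + u) + x * ((1 - 2 * u) * deriv l x)) x := fun x hx =>
    (hasDerivAt_id x).mul
      (((hd.differentiableAt (Ioo_mem_nhds hx.1 hx.2)).hasDerivAt.const_mul _).add_const u)
  rw [← interior_Icc] at hderiv hD
  refine monotoneOn_of_hasDerivWithinAt_nonneg (convex_Icc a b)
    (continuousOn_id.mul ((continuousOn_const.mul hc).add continuousOn_const))
    (fun x hx => (hderiv x hx).hasDerivWithinAt) fun x hx => ?_
  obtain ⟨hD0, hD1⟩ := hD x hx
  -- the derivative is `(1 - u) D + u (1 - D)` with `D = x l'(x) + l(x) ∈ [0, 1]`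
  nlinarith [mul_nonneg hD0 (sub_nonneg.2 hu.2), mul_nonneg hu.1 (sub_nonneg.2 hD1)]

theorem statement2_general (M : ℝ) (l : ℝ → ℝ)
    (hl_diff : ContDiffOn ℝ 1 l (Set.Icc 0 M))
    (hl_range : ∀ x ∈ Set.Icc (0:ℝ) M, l x ∈ Set.Ioo (0:ℝ) (1/2))
    (q : ℝ → ℝ → ℝ)
    (hq_def : ∀ x α : ℝ, q x α = if l x ≤ α ∧ α ≤ 1 - l x then (1 - 2 * l x)⁻¹ else 0) :
    (∀ x ∈ Set.Icc (0:ℝ) M, ∀ u ∈ Set.Ioo (0:ℝ) 1,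
      cdfInv q x u = (1 - 2 * u) * l x + u) ∧
    ((∀ x ∈ Set.Ioo (0:ℝ) M, 0 ≤ x * deriv l x + l x ∧ x * deriv l x + l x ≤ 1) →
      AssumptionQ M q) := by
  have hinv : ∀ x ∈ Icc (0:ℝ) M, ∀ u ∈ Ioo (0:ℝ) 1, cdfInv q x u = (1 - 2 * u) * l x + u := by
    intro x hx u hu
    obtain ⟨hl0, hl1⟩ := hl_range x hx
    have hq : q x = (Icc (l x) (1 - l x)).indicator fun _ => (1 - l x - l x)⁻¹ := by
      ext α
      simp only [hq_def, indicator_apply, mem_Icc, sub_sub, ← two_mul]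
    rw [cdfInv_eq_of_eq_indicator hq hl0 (by linarith) (by linarith) hu]
    ring
  refine ⟨hinv, fun hD u hu x y hx hxy hyM => ?_⟩
  have hxI : x ∈ Icc 0 M := ⟨hx, hxy.trans hyM⟩
  have hyI : y ∈ Icc 0 M := ⟨hx.trans hxy, hyM⟩
  have hmono : ∀ w ∈ Icc (0:ℝ) 1, MonotoneOn (fun x => x * ((1 - 2 * w) * l x + w)) (Icc 0 M) :=
    fun w hw => monotoneOn_mul_affine_of_deriv_bounds hw hl_diff.continuousOn
      ((hl_diff.differentiableOn one_ne_zero).mono Ioo_subset_Icc_self) hD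
  -- symmetry of the kernel: `1 - F_x⁻¹(u) = F_x⁻¹(1 - u)`
  have hsymm : ∀ t, t * (1 - ((1 - 2 * u) * l t + u)) = t * ((1 - 2 * (1 - u)) * l t + (1 - u)) :=
    fun t => by ring
  rw [hinv x hxI u hu, hinv y hyI u hu, hsymm, hsymm]
  exact ⟨hmono u (Ioo_subset_Icc_self hu) hxI hyI hxy,
    hmono (1 - u) ⟨by linarith [hu.2], by linarith [hu.1]⟩ hxI hyI hxy⟩

/-- For the uniform division kernel `q(x,α) = 1_{l(x) ≤ α ≤ 1−l(x)}/(1 − 2 l(x))` with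
`l ∈ C¹([0,M],(0,1/2))`, the generalized inverse of the cdf is
`F_x^{-1}(u) = (1 − 2u) l(x) + u`; moreover if `0 ≤ x l'(x) + l(x) ≤ 1` on `(0,M)` then
`q` satisfies Assumption (Q). -/
theorem statement2 (M : ℝ) (hM : 0 < M) (l : ℝ → ℝ)
    (hl_diff : ContDiffOn ℝ 1 l (Set.Icc 0 M))
    (hl_range : ∀ x ∈ Set.Icc (0:ℝ) M, l x ∈ Set.Ioo (0:ℝ) (1/2))
    (q : ℝ → ℝ → ℝ)
    (hq_def : ∀ x α : ℝ, q x α = if l x ≤ α ∧ α ≤ 1 - l x then (1 - 2 * l x)⁻¹ else 0) :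
    (∀ x ∈ Set.Icc (0:ℝ) M, ∀ u ∈ Set.Ioo (0:ℝ) 1,
      cdfInv q x u = (1 - 2 * u) * l x + u) ∧
    ((∀ x ∈ Set.Ioo (0:ℝ) M, 0 ≤ x * deriv l x + l x ∧ x * deriv l x + l x ≤ 1) →
      AssumptionQ M q) :=
  statement2_general M l hl_diff hl_range q hq_def
end

section
/- Let l ∈ C¹([0,M], (0,1/2)), let β ≥ 0 be a constant, set C(x) = 2(1/2 − l(x))^{β+1}/(β+1), and define the division kernel q(x,α) = ((α − l(x))^β / C(x)) 1_{{l(x) ≤ α ≤ 1/2}} + ((1 − α − l(x))^β / C(x)) 1_{{1/2 < α ≤ 1 − l(x)}}. Then for every x ∈ [0,M] and u ∈ (0,1): F_x^{-1}(u) = (1/2 − l(x))(2u)^{1/(β+1)} + l(x) if 0 < u ≤ 1/2, and F_x^{-1}(u) = 1 − l(x) − (1/2 − l(x))(2(1−u))^{1/(β+1)} if 1/2 < u < 1. Moreover, if 0 ≤ l(x) + x l'(x) ≤ 1 for every x ∈ (0,M), then q satisfies Assumption (Q). -/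
open MeasureTheory Set Filter

/-!
Below `l` the cdf vanishes, on `[l, 1/2]` it equals `((t - l)/(1/2 - l))^(β+1)/2` and on
`[1/2, 1 - l]` it equals `1 - ((1 - l - t)/(1/2 - l))^(β+1)/2`; since it is strictly increasing
wherever it lies in `(0,1)`, `F⁻¹(u)` is the solution of `F(t) = u`, which gives the formula.
For (Q), with `c = (2u)^(1/(β+1))` (resp. `(2(1-u))^(1/(β+1))`), both `x F_x⁻¹(u)` and
`x (1 - F_x⁻¹(u))` are combinations with nonnegative coefficients of `x`, `x l(x)` and
`x - x l(x)`; the last two are nondecreasing because their derivatives are `l + x l'` and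
`1 - l - x l'`.
-/

lemma intervalIntegral_congr_Ioo {f g : ℝ → ℝ} {a b : ℝ} (hab : a ≤ b) (h : EqOn f g (Ioo a b)) :
    ∫ x in a..b, f x = ∫ x in a..b, g x := by
  simp only [intervalIntegral.integral_of_le hab, integral_Ioc_eq_integral_Ioo]
  exact setIntegral_congr_fun measurableSet_Ioo h

lemma sInf_Icc_setOf_le_eq {F : ℝ → ℝ} {a b u t₀ : ℝ} (ht₀ : t₀ ∈ Icc a b) (hF : F t₀ = u)
    (hlt : ∀ t ∈ Ico a t₀, F t < u) : sInf {t ∈ Icc a b | u ≤ F t} = t₀ :=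
  IsLeast.csInf_eq ⟨⟨ht₀, hF.ge⟩, fun t ⟨ht, hut⟩ =>
    not_lt.1 fun h => (hlt t ⟨ht.1, h⟩).not_ge hut⟩

/-- `q(x, ·)` of the theorem for `l(x) = L`, with `C(x)` written out. -/
noncomputable def powerKernel (β L α : ℝ) : ℝ :=
  (if L ≤ α ∧ α ≤ 1/2 then (α - L) ^ β / (2 * (1/2 - L) ^ (β + 1) / (β + 1)) else 0)
  + (if 1/2 < α ∧ α ≤ 1 - L then (1 - α - L) ^ β / (2 * (1/2 - L) ^ (β + 1) / (β + 1)) else 0)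

section powerKernel

variable {β L : ℝ}

lemma powerKernel_eqOn_Iio (hL : L < 1/2) : EqOn (powerKernel β L) 0 (Iio L) := by
  intro α hα
  rw [powerKernel, if_neg fun h => not_le.2 hα.out h.1,
    if_neg fun h => by linarith [hα.out, h.1], add_zero, Pi.zero_apply]

lemma powerKernel_eqOn_Icc :
    EqOn (powerKernel β L) (fun α => (α - L) ^ β / (2 * (1/2 - L) ^ (β + 1) / (β + 1)))
      (Icc L (1/2)) := by
  intro α hα
  rw [powerKernel, if_pos ⟨hα.1, hα.2⟩, if_neg fun h => not_lt.2 hα.2 h.1, add_zero]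

lemma powerKernel_eqOn_Ioc :
    EqOn (powerKernel β L) (fun α => (1 - L - α) ^ β / (2 * (1/2 - L) ^ (β + 1) / (β + 1)))
      (Ioc (1/2) (1 - L)) := by
  intro α hα
  rw [powerKernel, if_neg fun h => not_le.2 hα.1 h.2, if_pos ⟨hα.1, hα.2⟩, zero_add,
    sub_right_comm]

lemma integral_powerKernel_of_le (hL : L < 1/2) {t : ℝ} (ht : 0 ≤ t) (htL : t ≤ L) :
    ∫ α in (0:ℝ)..t, powerKernel β L α = 0 := by
  rw [intervalIntegral_congr_Ioo ht ((powerKernel_eqOn_Iio hL).mono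
    fun α hα => hα.2.trans_le htL)]
  simp

lemma intervalIntegrable_powerKernel (hβ : 0 ≤ β) (a b : ℝ) :
    IntervalIntegrable (powerKernel β L) volume a b := by
  have hsplit : powerKernel β L =
      (Icc L (1/2)).indicator (fun α => (α - L) ^ β / (2 * (1/2 - L) ^ (β + 1) / (β + 1)))
      + (Ioc (1/2) (1 - L)).indicator
          (fun α => (1 - L - α) ^ β / (2 * (1/2 - L) ^ (β + 1) / (β + 1))) := by
    funext α
    simp only [powerKernel, Pi.add_apply, indicator_apply, mem_Icc, mem_Ioc, sub_right_comm]
  have hloc : LocallyIntegrable (powerKernel β L) := by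
    rw [hsplit]
    refine .add (Continuous.locallyIntegrable ?_ |>.indicator measurableSet_Icc)
      (Continuous.locallyIntegrable ?_ |>.indicator measurableSet_Ioc) <;>
    exact (Continuous.rpow_const (by fun_prop) fun _ => Or.inr hβ).div_const _
  exact (hloc.integrableOn_isCompact isCompact_uIcc).intervalIntegrable

lemma integral_powerKernel_of_le_half (hβ : 0 ≤ β) (hL : L ∈ Ioo 0 (1/2)) {t : ℝ}
    (hLt : L ≤ t) (ht : t ≤ 1/2) :
    ∫ α in (0:ℝ)..t, powerKernel β L α = ((t - L) / (1/2 - L)) ^ (β + 1) / 2 := by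
  obtain ⟨hL0, hL2⟩ := hL
  rw [← intervalIntegral.integral_add_adjacent_intervals (intervalIntegrable_powerKernel hβ 0 L)
      (intervalIntegrable_powerKernel hβ L t), integral_powerKernel_of_le hL2 hL0.le le_rfl,
    zero_add, intervalIntegral_congr_Ioo hLt (powerKernel_eqOn_Icc.mono
      (Ioo_subset_Icc_self.trans (Icc_subset_Icc_right ht))), intervalIntegral.integral_div,
    intervalIntegral.integral_comp_sub_right (fun y => y ^ β), integral_rpow (Or.inl (by linarith)),
    sub_self, Real.zero_rpow (by linarith), sub_zero, Real.div_rpow (by linarith) (by linarith)]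
  have : (1/2 - L) ^ (β + 1) ≠ 0 := (Real.rpow_pos_of_pos (by linarith) _).ne'
  field_simp

lemma integral_powerKernel_of_half_le (hβ : 0 ≤ β) (hL : L ∈ Ioo 0 (1/2)) {t : ℝ}
    (ht : 1/2 ≤ t) (htL : t ≤ 1 - L) :
    ∫ α in (0:ℝ)..t, powerKernel β L α = 1 - ((1 - L - t) / (1/2 - L)) ^ (β + 1) / 2 := by
  have hD : 0 < 1/2 - L := by linarith [hL.2]
  rw [← intervalIntegral.integral_add_adjacent_intervals (intervalIntegrable_powerKernel hβ 0 (1/2))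
      (intervalIntegrable_powerKernel hβ (1/2) t),
    integral_powerKernel_of_le_half hβ hL hL.2.le le_rfl, div_self hD.ne', Real.one_rpow,
    intervalIntegral_congr_Ioo ht (powerKernel_eqOn_Ioc.mono
      (Ioo_subset_Ioc_self.trans (Ioc_subset_Ioc_right htL))), intervalIntegral.integral_div,
    intervalIntegral.integral_comp_sub_left (fun y => y ^ β), integral_rpow (Or.inl (by linarith)),
    show 1 - L - 1/2 = 1/2 - L by ring, Real.div_rpow (by linarith) hD.le]
  have : (1/2 - L) ^ (β + 1) ≠ 0 := (Real.rpow_pos_of_pos hD _).ne'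
  generalize (1/2 - L) ^ (β + 1) = P at this ⊢
  field_simp
  ring

lemma sInf_integral_powerKernel_of_le_half (hβ : 0 ≤ β) (hL : L ∈ Ioo 0 (1/2)) {u : ℝ}
    (hu0 : 0 < u) (hu : u ≤ 1/2) :
    sInf {t ∈ Icc (0:ℝ) 1 | u ≤ ∫ α in (0:ℝ)..t, powerKernel β L α} =
      (1/2 - L) * (2 * u) ^ (1/(β+1)) + L := by
  obtain ⟨hL0, hL2⟩ := hL
  have hD : 0 < 1/2 - L := by linarith
  set c := (2 * u) ^ (1/(β+1)) with hc
  have hc0 : 0 < c := Real.rpow_pos_of_pos (by linarith) _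
  have hc1 : c ≤ 1 := Real.rpow_le_one (by linarith) (by linarith) (by positivity)
  have hcpow : c ^ (β + 1) = 2 * u := by
    rw [hc, one_div, Real.rpow_inv_rpow (by linarith) (by linarith)]
  have hDc : (1/2 - L) * c ≤ 1/2 - L := mul_le_of_le_one_right hD.le hc1
  have hDc0 : 0 < (1/2 - L) * c := mul_pos hD hc0
  refine sInf_Icc_setOf_le_eq ⟨by linarith, by linarith⟩ ?_ fun t ht => ?_
  · rw [integral_powerKernel_of_le_half hβ ⟨hL0, hL2⟩ (by linarith) (by linarith),
      add_sub_cancel_right, mul_div_cancel_left₀ _ hD.ne', hcpow]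
    ring
  rcases le_or_gt t L with htL | htL
  · rw [integral_powerKernel_of_le hL2 ht.1 htL]
    exact hu0
  rw [integral_powerKernel_of_le_half hβ ⟨hL0, hL2⟩ htL.le (by linarith [ht.2])]
  have hlt : (t - L) / (1/2 - L) < c := by
    rw [div_lt_iff₀ hD]
    linarith [ht.2]
  have := Real.rpow_lt_rpow (div_nonneg (by linarith) hD.le) hlt (by linarith : 0 < β + 1)
  linarith

lemma sInf_integral_powerKernel_of_half_lt (hβ : 0 ≤ β) (hL : L ∈ Ioo 0 (1/2)) {u : ℝ}
    (hu : 1/2 < u) (hu1 : u < 1) :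
    sInf {t ∈ Icc (0:ℝ) 1 | u ≤ ∫ α in (0:ℝ)..t, powerKernel β L α} =
      1 - L - (1/2 - L) * (2 * (1 - u)) ^ (1/(β+1)) := by
  obtain ⟨hL0, hL2⟩ := hL
  have hD : 0 < 1/2 - L := by linarith
  set c := (2 * (1 - u)) ^ (1/(β+1)) with hc
  have hc0 : 0 < c := Real.rpow_pos_of_pos (by linarith) _
  have hc1 : c ≤ 1 := Real.rpow_le_one (by linarith) (by linarith) (by positivity)
  have hcpow : c ^ (β + 1) = 2 * (1 - u) := by
    rw [hc, one_div, Real.rpow_inv_rpow (by linarith) (by linarith)]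
  have hDc : (1/2 - L) * c ≤ 1/2 - L := mul_le_of_le_one_right hD.le hc1
  have hDc0 : 0 < (1/2 - L) * c := mul_pos hD hc0
  refine sInf_Icc_setOf_le_eq ⟨by linarith, by linarith⟩ ?_ fun t ht => ?_
  · rw [integral_powerKernel_of_half_le hβ ⟨hL0, hL2⟩ (by linarith) (by linarith),
      sub_sub_cancel, mul_div_cancel_left₀ _ hD.ne', hcpow]
    ring
  rcases le_or_gt t L with htL | htL
  · rw [integral_powerKernel_of_le hL2 ht.1 htL]
    linarith
  rcases le_or_gt t (1/2) with ht2 | ht2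
  · rw [integral_powerKernel_of_le_half hβ ⟨hL0, hL2⟩ htL.le ht2]
    have : ((t - L) / (1/2 - L)) ^ (β + 1) ≤ 1 :=
      Real.rpow_le_one (div_nonneg (by linarith) hD.le) ((div_le_one hD).2 (by linarith))
        (by linarith)
    linarith
  rw [integral_powerKernel_of_half_le hβ ⟨hL0, hL2⟩ ht2.le (by linarith [ht.2])]
  have hlt : c < (1 - L - t) / (1/2 - L) := by
    rw [lt_div_iff₀ hD]
    linarith [ht.2]
  have := Real.rpow_lt_rpow hc0.le hlt (by linarith : 0 < β + 1)
  linarith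

end powerKernel

section monotone

variable {l : ℝ → ℝ} {a b : ℝ}

lemma monotoneOn_mul_self (hc : ContinuousOn l (Icc a b)) (hd : DifferentiableOn ℝ l (Ioo a b))
    (h : ∀ x ∈ Ioo a b, 0 ≤ l x + x * deriv l x) : MonotoneOn (fun x => x * l x) (Icc a b) := by
  have hderiv : ∀ x ∈ Ioo a b, HasDerivAt (fun x => x * l x) (1 * l x + x * deriv l x) x :=
    fun x hx => (hasDerivAt_id' x).mul (hd.differentiableAt (Ioo_mem_nhds hx.1 hx.2)).hasDerivAt
  refine monotoneOn_of_deriv_nonneg (convex_Icc a b) (continuousOn_id.mul hc) ?_ fun x hx => ?_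
  · rw [interior_Icc]
    exact fun x hx => (hderiv x hx).differentiableAt.differentiableWithinAt
  · rw [interior_Icc] at hx
    rw [(hderiv x hx).deriv, one_mul]
    exact h x hx

lemma monotoneOn_sub_mul_self (hc : ContinuousOn l (Icc a b))
    (hd : DifferentiableOn ℝ l (Ioo a b)) (h : ∀ x ∈ Ioo a b, l x + x * deriv l x ≤ 1) :
    MonotoneOn (fun x => x - x * l x) (Icc a b) := by
  have hderiv : ∀ x ∈ Ioo a b,
      HasDerivAt (fun x => x - x * l x) (1 - (1 * l x + x * deriv l x)) x :=
    fun x hx => (hasDerivAt_id' x).sub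
      ((hasDerivAt_id' x).mul (hd.differentiableAt (Ioo_mem_nhds hx.1 hx.2)).hasDerivAt)
  refine monotoneOn_of_deriv_nonneg (convex_Icc a b)
    (continuousOn_id.sub (continuousOn_id.mul hc)) ?_ fun x hx => ?_
  · rw [interior_Icc]
    exact fun x hx => (hderiv x hx).differentiableAt.differentiableWithinAt
  · rw [interior_Icc] at hx
    rw [(hderiv x hx).deriv, one_mul, sub_nonneg]
    exact h x hx

/-- `x (l + (1/2 - l) c) = (c/2) x + (1 - c) x l` and
`x (1 - l - (1/2 - l) c) = (c/2) x + (1 - c) (x - x l)`. -/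
lemma monotoneOn_mul_quantile {s : Set ℝ} {c : ℝ} (hc0 : 0 ≤ c) (hc1 : c ≤ 1)
    (hg : MonotoneOn (fun x => x * l x) s) (hg' : MonotoneOn (fun x => x - x * l x) s) :
    MonotoneOn (fun x => x * ((1/2 - l x) * c + l x)) s ∧
      MonotoneOn (fun x => x * (1 - l x - (1/2 - l x) * c)) s := by
  constructor <;> intro x hx y hy hxy
  · have h : (1 - c) * (x * l x) ≤ (1 - c) * (y * l y) :=
      mul_le_mul_of_nonneg_left (hg hx hy hxy) (sub_nonneg.2 hc1)
    linarith [mul_le_mul_of_nonneg_left hxy hc0]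
  · have h : (1 - c) * (x - x * l x) ≤ (1 - c) * (y - y * l y) :=
      mul_le_mul_of_nonneg_left (hg' hx hy hxy) (sub_nonneg.2 hc1)
    linarith [mul_le_mul_of_nonneg_left hxy hc0]

end monotone

theorem statement3_general (M : ℝ) (l : ℝ → ℝ)
    (hl_diff : ContDiffOn ℝ 1 l (Set.Icc 0 M))
    (hl_range : ∀ x ∈ Set.Icc (0:ℝ) M, l x ∈ Set.Ioo (0:ℝ) (1/2))
    (β : ℝ) (hβ : 0 ≤ β)
    (C : ℝ → ℝ) (hC_def : ∀ x : ℝ, C x = 2 * (1/2 - l x) ^ (β + 1) / (β + 1))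
    (q : ℝ → ℝ → ℝ)
    (hq_def : ∀ x α : ℝ, q x α =
      (if l x ≤ α ∧ α ≤ 1/2 then (α - l x) ^ β / C x else 0)
      + (if 1/2 < α ∧ α ≤ 1 - l x then (1 - α - l x) ^ β / C x else 0)) :
    (∀ x ∈ Set.Icc (0:ℝ) M, ∀ u ∈ Set.Ioo (0:ℝ) 1,
      cdfInv q x u =
        if u ≤ 1/2 then (1/2 - l x) * (2 * u) ^ (1/(β+1)) + l x
        else 1 - l x - (1/2 - l x) * (2 * (1 - u)) ^ (1/(β+1))) ∧
    ((∀ x ∈ Set.Ioo (0:ℝ) M, 0 ≤ l x + x * deriv l x ∧ l x + x * deriv l x ≤ 1) →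
      AssumptionQ M q) := by
  have hinv : ∀ x ∈ Set.Icc (0:ℝ) M, ∀ u ∈ Set.Ioo (0:ℝ) 1,
      cdfInv q x u =
        if u ≤ 1/2 then (1/2 - l x) * (2 * u) ^ (1/(β+1)) + l x
        else 1 - l x - (1/2 - l x) * (2 * (1 - u)) ^ (1/(β+1)) := by
    intro x hx u hu
    have hqx : q x = powerKernel β (l x) := funext fun α => by rw [hq_def, hC_def]; rfl
    simp only [cdfInv, cdf, hqx]
    split_ifs with hu2
    · exact sInf_integral_powerKernel_of_le_half hβ (hl_range x hx) hu.1 hu2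
    · exact sInf_integral_powerKernel_of_half_lt hβ (hl_range x hx) (not_le.1 hu2) hu.2
  refine ⟨hinv, fun hs u hu x y hx0 hxy hyM => ?_⟩
  have hx : x ∈ Icc 0 M := ⟨hx0, hxy.trans hyM⟩
  have hy : y ∈ Icc 0 M := ⟨hx0.trans hxy, hyM⟩
  have hd := (hl_diff.differentiableOn one_ne_zero).mono Ioo_subset_Icc_self
  have hg := monotoneOn_mul_self hl_diff.continuousOn hd fun z hz => (hs z hz).1
  have hg' := monotoneOn_sub_mul_self hl_diff.continuousOn hd fun z hz => (hs z hz).2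
  rw [hinv x hx u hu, hinv y hy u hu]
  split_ifs with hu2
  · obtain ⟨hA, hB⟩ := monotoneOn_mul_quantile (c := (2 * u) ^ (1/(β+1)))
      (Real.rpow_nonneg (by linarith [hu.1]) _)
      (Real.rpow_le_one (by linarith [hu.1]) (by linarith) (by positivity)) hg hg'
    exact ⟨hA hx hy hxy, by linarith [hB hx hy hxy]⟩
  · obtain ⟨hA, hB⟩ := monotoneOn_mul_quantile (c := (2 * (1 - u)) ^ (1/(β+1)))
      (Real.rpow_nonneg (by linarith [hu.2]) _)
      (Real.rpow_le_one (by linarith [hu.2]) (by linarith) (by positivity)) hg hg'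
    exact ⟨hB hx hy hxy, by linarith [hA hx hy hxy]⟩

/-- For the division kernel
`q(x,α) = ((α − l(x))^β / C(x)) 1_{l(x) ≤ α ≤ 1/2} + ((1 − α − l(x))^β / C(x)) 1_{1/2 < α ≤ 1 − l(x)}`
with `C(x) = 2(1/2 − l(x))^{β+1}/(β+1)`, the generalized inverse of the cdf is the
explicit piecewise function below; moreover if `0 ≤ l(x) + x l'(x) ≤ 1` on `(0,M)` then
`q` satisfies Assumption (Q). -/
theorem statement3 (M : ℝ) (hM : 0 < M) (l : ℝ → ℝ)
    (hl_diff : ContDiffOn ℝ 1 l (Set.Icc 0 M))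
    (hl_range : ∀ x ∈ Set.Icc (0:ℝ) M, l x ∈ Set.Ioo (0:ℝ) (1/2))
    (β : ℝ) (hβ : 0 ≤ β)
    (C : ℝ → ℝ) (hC_def : ∀ x : ℝ, C x = 2 * (1/2 - l x) ^ (β + 1) / (β + 1))
    (q : ℝ → ℝ → ℝ)
    (hq_def : ∀ x α : ℝ, q x α =
      (if l x ≤ α ∧ α ≤ 1/2 then (α - l x) ^ β / C x else 0)
      + (if 1/2 < α ∧ α ≤ 1 - l x then (1 - α - l x) ^ β / C x else 0)) :
    (∀ x ∈ Set.Icc (0:ℝ) M, ∀ u ∈ Set.Ioo (0:ℝ) 1,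
      cdfInv q x u =
        if u ≤ 1/2 then (1/2 - l x) * (2 * u) ^ (1/(β+1)) + l x
        else 1 - l x - (1/2 - l x) * (2 * (1 - u)) ^ (1/(β+1))) ∧
    ((∀ x ∈ Set.Ioo (0:ℝ) M, 0 ≤ l x + x * deriv l x ∧ l x + x * deriv l x ≤ 1) →
      AssumptionQ M q) :=
  statement3_general M l hl_diff hl_range β hβ C hC_def q hq_def
end

section
/- Suppose p : (0,M) → ℝ is continuous, bounded, and satisfies for every x ∈ (0,M): p(x) = ∫_x^M (D/g(S,y)) e^{−∫_x^y (b(S,z)+D)/g(S,z) dz} dy + ∫_x^M (b(S,y)/g(S,y)) e^{−∫_x^y (b(S,z)+D)/g(S,z) dz} (∫_0^1 q(y,α) p(αy) p((1−α)y) dα) dy. Assume Assumption (H1) holds. Then p is differentiable on (0,M) and satisfies the equation g(S,x) p'(x) + D(1 − p(x)) + b(S,x)(∫_0^1 q(x,α) p(αx) p((1−α)x) dα − p(x)) = 0 for all x ∈ (0,M). -/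
open MeasureTheory Set Filter

/-- Assumption (H1): for each `α ∈ [0,1]`, `x ↦ q(x,α)` is continuous on `[0,M]`; `q` is
dominated by an integrable `q̄`; and there exist `m_div ∈ [0,M)` and `b̄ > 0` such that
`b = 0` on `[0, m_div]` and `0 < b ≤ b̄` on `(m_div, M)`. -/
def AssumptionH1 (M : ℝ) (q : ℝ → ℝ → ℝ) (b : ℝ → ℝ) : Prop :=
  (∀ α ∈ Set.Icc (0:ℝ) 1, ContinuousOn (fun x => q x α) (Set.Icc 0 M)) ∧
  (∃ qbar : ℝ → ℝ, MeasureTheory.IntegrableOn qbar (Set.Icc 0 1) ∧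
    ∀ x ∈ Set.Icc (0:ℝ) M, ∀ α ∈ Set.Icc (0:ℝ) 1, q x α ≤ qbar α) ∧
  (∃ mdiv ∈ Set.Ico (0:ℝ) M, ∃ bbar : ℝ, 0 < bbar ∧
    (∀ x ∈ Set.Icc (0:ℝ) M, x ≤ mdiv → b x = 0) ∧
    (∀ x ∈ Set.Ioo mdiv M, 0 < b x ∧ b x ≤ bbar))

/-!
Fix `x ∈ (0,M)`, put `h = (b + D)/g` and `H(y) = ∫_x^y h`. Since `e^{-∫_u^y h} = e^{H u} e^{-H y}`,
each term of the integral equation has the form `e^{H u} ∫_u^M K e^{-H}` with `K` continuous on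
`(0,M)` and `|K| ≤ B h`: `K = D/g`, and `K = b Q/g` where `Q` is the division integral, which is
continuous and bounded by dominated convergence under (H1). As `h ≥ 0`, `h e^{-H}` is the
derivative of `1 - e^{-H} ≤ 1`, hence integrable up to `M`, and so is `K e^{-H}`. The product rule
and the fundamental theorem of calculus then give `p' = h p - (D + b Q)/g`.
-/

namespace ExtinctionEquation

open Real intervalIntegral Interval

lemma mul_mem_Ioo_of_mem_Ioo {M α y : ℝ} (hα : α ∈ Ioo (0 : ℝ) 1) (hy : y ∈ Ioo 0 M) :
    α * y ∈ Ioo 0 M :=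
  ⟨mul_pos hα.1 hy.1, (mul_lt_of_lt_one_left hy.1 hα.2).trans hy.2⟩

lemma ae_mem_Ioo_of_mem_uIoc {a b : ℝ} (hab : a ≤ b) :
    ∀ᵐ t ∂volume, t ∈ Ι a b → t ∈ Ioo a b := by
  filter_upwards [volume.ae_ne b] with t htb ht
  rw [uIoc_of_le hab] at ht
  exact ⟨ht.1, ht.2.lt_of_ne htb⟩

/-- The probability that both daughters of a cell dividing at size `y` go extinct. -/
noncomputable def divisionIntegral (q : ℝ → ℝ → ℝ) (p : ℝ → ℝ) (y : ℝ) : ℝ :=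
  ∫ α in (0 : ℝ)..1, q y α * p (α * y) * p ((1 - α) * y)

section DivisionIntegral

variable {M C : ℝ} {q : ℝ → ℝ → ℝ} {qbar p : ℝ → ℝ}

lemma norm_divisionIntegrand_le (hq : ∀ y ∈ Ioo 0 M, ∀ α ∈ Ioo (0 : ℝ) 1, |q y α| ≤ qbar α)
    (hp : ∀ y ∈ Ioo 0 M, |p y| ≤ C) {y α : ℝ} (hy : y ∈ Ioo 0 M) (hα : α ∈ Ioo (0 : ℝ) 1) :
    ‖q y α * p (α * y) * p ((1 - α) * y)‖ ≤ qbar α * (C * C) := by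
  have hqα := hq y hy α hα
  have hp₁ := hp _ (mul_mem_Ioo_of_mem_Ioo hα hy)
  have hp₂ := hp _ (mul_mem_Ioo_of_mem_Ioo (Ioo.one_sub_mem hα) hy)
  rw [Real.norm_eq_abs, abs_mul, abs_mul, ← mul_assoc]
  have hqbar : 0 ≤ qbar α := (abs_nonneg _).trans hqα
  exact mul_le_mul (mul_le_mul hqα hp₁ (abs_nonneg _) hqbar) hp₂ (abs_nonneg _)
    (mul_nonneg hqbar ((abs_nonneg _).trans hp₁))

lemma aestronglyMeasurable_divisionIntegrand (hq : Measurable (Function.uncurry q))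
    (hp : ContinuousOn p (Ioo 0 M)) {y : ℝ} (hy : y ∈ Ioo 0 M) :
    AEStronglyMeasurable (fun α => q y α * p (α * y) * p ((1 - α) * y))
      (volume.restrict (Ι 0 1)) := by
  rw [uIoc_of_le zero_le_one, ← Measure.restrict_congr_set Ioo_ae_eq_Ioc]
  have hpp : ContinuousOn (fun α => p (α * y) * p ((1 - α) * y)) (Ioo 0 1) :=
    (hp.comp (by fun_prop) fun α hα => mul_mem_Ioo_of_mem_Ioo hα hy).mul
      (hp.comp (by fun_prop) fun α hα => mul_mem_Ioo_of_mem_Ioo (Ioo.one_sub_mem hα) hy)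
  simp only [mul_assoc]
  exact hq.of_uncurry_left.aestronglyMeasurable.mul (hpp.aestronglyMeasurable measurableSet_Ioo)

variable (hq_meas : Measurable (Function.uncurry q))
  (hq : ∀ y ∈ Ioo 0 M, ∀ α ∈ Ioo (0 : ℝ) 1, |q y α| ≤ qbar α)
  (hqbar : IntegrableOn qbar (Icc 0 1))
  (hp_cont : ContinuousOn p (Ioo 0 M)) (hp : ∀ y ∈ Ioo 0 M, |p y| ≤ C)

include hq hqbar hp

lemma abs_divisionIntegral_le {y : ℝ} (hy : y ∈ Ioo 0 M) :
    |divisionIntegral q p y| ≤ ∫ α in (0 : ℝ)..1, qbar α * (C * C) :=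
  norm_integral_le_of_norm_le zero_le_one
    ((ae_mem_Ioo_of_mem_uIoc zero_le_one).mono fun _ hα hα' =>
      norm_divisionIntegrand_le hq hp hy (hα (by rwa [uIoc_of_le zero_le_one])))
    ((intervalIntegrable_iff_integrableOn_Icc_of_le zero_le_one).2 (hqbar.mul_const _))

include hq_meas hp_cont

lemma continuousOn_divisionIntegral
    (hq_cont : ∀ α ∈ Ioo (0 : ℝ) 1, ContinuousOn (fun y => q y α) (Ioo 0 M)) :
    ContinuousOn (divisionIntegral q p) (Ioo 0 M) := by
  intro y₀ hy₀
  have hnhds : Ioo 0 M ∈ nhds y₀ := isOpen_Ioo.mem_nhds hy₀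
  refine (continuousAt_of_dominated_interval (bound := fun α => qbar α * (C * C)) ?_ ?_
    ((intervalIntegrable_iff_integrableOn_Icc_of_le zero_le_one).2 (hqbar.mul_const _))
    ?_).continuousWithinAt
  · filter_upwards [hnhds] with y hy
      using aestronglyMeasurable_divisionIntegrand hq_meas hp_cont hy
  · filter_upwards [hnhds] with y hy
    filter_upwards [ae_mem_Ioo_of_mem_uIoc zero_le_one] with α hα hα'
    exact norm_divisionIntegrand_le hq hp hy (hα hα')
  · filter_upwards [ae_mem_Ioo_of_mem_uIoc zero_le_one] with α hα hα'
    have hα := hα hα'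
    have hp_comp (β : ℝ) (hβ : β ∈ Ioo (0 : ℝ) 1) : ContinuousAt (fun y => p (β * y)) y₀ :=
      (hp_cont.continuousAt (isOpen_Ioo.mem_nhds (mul_mem_Ioo_of_mem_Ioo hβ hy₀))).comp
        (continuous_const_mul β).continuousAt
    exact (((hq_cont α hα).continuousAt hnhds).mul (hp_comp α hα)).mul
      (hp_comp (1 - α) (Ioo.one_sub_mem hα))

end DivisionIntegral

lemma divisionIntegral_continuousOn_and_bounded {M : ℝ} {q : ℝ → ℝ → ℝ} {b p : ℝ → ℝ}
    (hq : IsDivisionKernel M q) (hH1 : AssumptionH1 M q b) (hp_cont : ContinuousOn p (Ioo 0 M))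
    (hp_bdd : ∃ C : ℝ, ∀ x ∈ Ioo (0 : ℝ) M, |p x| ≤ C) :
    ContinuousOn (divisionIntegral q p) (Ioo 0 M) ∧
      ∃ B, ∀ y ∈ Ioo 0 M, |divisionIntegral q p y| ≤ B := by
  obtain ⟨hq_meas, hq_nonneg, -, -⟩ := hq
  obtain ⟨hq_cont, ⟨qbar, hqbar, hq_le⟩, -⟩ := hH1
  obtain ⟨C, hC⟩ := hp_bdd
  have hq_abs : ∀ y ∈ Ioo 0 M, ∀ α ∈ Ioo (0 : ℝ) 1, |q y α| ≤ qbar α := fun y hy α hα => by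
    rw [abs_of_nonneg (hq_nonneg y (Ioo_subset_Icc_self hy) α (Ioo_subset_Icc_self hα))]
    exact hq_le y (Ioo_subset_Icc_self hy) α (Ioo_subset_Icc_self hα)
  exact ⟨continuousOn_divisionIntegral hq_meas hq_abs hqbar hp_cont hC fun α hα =>
      (hq_cont α (Ioo_subset_Icc_self hα)).mono Ioo_subset_Icc_self,
    _, fun y hy => abs_divisionIntegral_le hq_abs hqbar hC hy⟩

lemma integrableOn_Ioo_of_nonneg_of_integral_le {f : ℝ → ℝ} {a c I : ℝ} (hac : a < c)
    (hf : ContinuousOn f (Ico a c)) (hf0 : ∀ y ∈ Ioo a c, 0 ≤ f y)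
    (hI : ∀ t ∈ Ioo a c, ∫ y in a..t, f y ≤ I) : IntegrableOn f (Ioo a c) := by
  obtain ⟨u, -, hu, hu_lim⟩ := exists_seq_strictMono_tendsto' hac
  refine (integrableOn_Ioc_of_intervalIntegral_norm_bounded_right (I := I)
    (fun n => ((hf.mono (Icc_subset_Ico_right (hu n).2)).integrableOn_Icc).mono_set
      Ioc_subset_Icc_self) hu_lim (Eventually.of_forall fun n => ?_)).mono_set Ioo_subset_Ioc_self
  rw [setIntegral_congr_fun measurableSet_Ioc fun _ hy =>
    Real.norm_of_nonneg (hf0 _ ⟨hy.1, hy.2.trans_lt (hu n).2⟩), ← integral_of_le (hu n).1.le]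
  exact hI _ (hu n)

section SurvivalIntegral

variable {a c x : ℝ} {h : ℝ → ℝ}

lemma hasDerivAt_integral_of_continuousOn {f : ℝ → ℝ} (hf : ContinuousOn f (Ioo a c))
    (hx : x ∈ Ioo a c) {y : ℝ} (hy : y ∈ Ioo a c) :
    HasDerivAt (fun t => ∫ z in x..t, f z) (f y) y :=
  integral_hasDerivAt_right (hf.mono (ordConnected_Ioo.uIcc_subset hx hy)).intervalIntegrable
    (hf.stronglyMeasurableAtFilter isOpen_Ioo y hy) (hf.continuousAt (isOpen_Ioo.mem_nhds hy))

variable (hh : ContinuousOn h (Ioo a c)) (hx : x ∈ Ioo a c)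
include hh hx

lemma continuousOn_exp_neg_integral :
    ContinuousOn (fun y => exp (-∫ z in x..y, h z)) (Ioo a c) := fun _ hy =>
  (hasDerivAt_integral_of_continuousOn hh hx hy).continuousAt.continuousWithinAt.neg.rexp

lemma integrableOn_mul_exp_neg_integral (hh0 : ∀ y ∈ Ioo a c, 0 ≤ h y) :
    IntegrableOn (fun y => h y * exp (-∫ z in x..y, h z)) (Ioo x c) := by
  have hsub : Ico x c ⊆ Ioo a c := fun y hy => ⟨hx.1.trans_le hy.1, hy.2⟩
  have hcont : ContinuousOn (fun y => h y * exp (-∫ z in x..y, h z)) (Ioo a c) :=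
    hh.mul (continuousOn_exp_neg_integral hh hx)
  refine integrableOn_Ioo_of_nonneg_of_integral_le (I := 1) hx.2 (hcont.mono hsub)
    (fun y hy => mul_nonneg (hh0 y (hsub (Ioo_subset_Ico_self hy))) (exp_nonneg _))
    fun t ht => ?_
  have hxt : uIcc x t ⊆ Ioo a c :=
    ordConnected_Ioo.uIcc_subset hx (hsub (Ioo_subset_Ico_self ht))
  rw [integral_eq_sub_of_hasDerivAt (f := fun y => -exp (-∫ z in x..y, h z))
    (fun y hy => ((hasDerivAt_integral_of_continuousOn hh hx (hxt hy)).neg.exp.neg).congr_deriv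
      (by simp only [Pi.neg_apply]; ring))
    (hcont.mono hxt).intervalIntegrable]
  simp only [integral_same, neg_zero, exp_zero]
  linarith [exp_pos (-∫ z in x..t, h z)]

theorem hasDerivAt_integral_mul_exp_neg_integral {K : ℝ → ℝ} {B : ℝ}
    (hh0 : ∀ y ∈ Ioo a c, 0 ≤ h y) (hK : ContinuousOn K (Ioo a c))
    (hKh : ∀ y ∈ Ioo a c, |K y| ≤ B * h y) :
    HasDerivAt (fun u => ∫ y in u..c, K y * exp (-∫ z in u..y, h z))
      (h x * (∫ y in x..c, K y * exp (-∫ z in x..y, h z)) - K x) x := by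
  set H : ℝ → ℝ := fun y => ∫ z in x..y, h z
  set G : ℝ → ℝ := fun y => K y * exp (-H y) with hG
  have hG_cont : ContinuousOn G (Ioo a c) := hK.mul (continuousOn_exp_neg_integral hh hx)
  have hG_int : IntervalIntegrable G volume x c := by
    have hxc : Ioo x c ⊆ Ioo a c := fun y hy => ⟨hx.1.trans hy.1, hy.2⟩
    refine (intervalIntegrable_iff_integrableOn_Ioo_of_le hx.2.le).2
      (((integrableOn_mul_exp_neg_integral hh hx hh0).const_mul B).mono'
        ((hG_cont.mono hxc).aestronglyMeasurable measurableSet_Ioo)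
        (ae_restrict_of_forall_mem measurableSet_Ioo fun y hy => ?_))
    rw [Real.norm_eq_abs, abs_mul, abs_exp, ← mul_assoc]
    exact mul_le_mul_of_nonneg_right (hKh y (hxc hy)) (exp_nonneg _)
  have hrepr : ∀ u ∈ Ioo a c,
      (∫ y in u..c, K y * exp (-∫ z in u..y, h z)) = exp (H u) * ∫ y in u..c, G y := by
    intro u hu
    rw [← intervalIntegral.integral_const_mul]
    refine integral_congr_Ioo_of_le hu.2.le fun y hy => ?_
    have hy' : y ∈ Ioo a c := ⟨hu.1.trans hy.1, hy.2⟩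
    rw [← integral_interval_sub_left
      (hh.mono (ordConnected_Ioo.uIcc_subset hx hy')).intervalIntegrable
      (hh.mono (ordConnected_Ioo.uIcc_subset hx hu)).intervalIntegrable, neg_sub, exp_sub]
    change K y * (exp (H u) / exp (H y)) = exp (H u) * (K y * exp (-H y))
    rw [exp_neg]
    ring
  have hderiv := (hasDerivAt_integral_of_continuousOn hh hx hx).exp.mul
    (integral_hasDerivAt_left hG_int (hG_cont.stronglyMeasurableAtFilter isOpen_Ioo x hx)
      (hG_cont.continuousAt (isOpen_Ioo.mem_nhds hx)))
  refine (hderiv.congr_of_eventuallyEq ?_).congr_deriv ?_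
  · filter_upwards [isOpen_Ioo.mem_nhds hx] with u hu using hrepr u hu
  · rw [hrepr x hx]
    simp only [H, hG, integral_same, neg_zero, exp_zero]
    ring

end SurvivalIntegral

lemma hasDerivAt_of_integral_equation {a c D x : ℝ} {b g Q p : ℝ → ℝ} (hD : 0 ≤ D)
    (hb_cont : ContinuousOn b (Ioo a c)) (hb : ∀ y ∈ Ioo a c, 0 ≤ b y)
    (hg_cont : ContinuousOn g (Ioo a c)) (hg_pos : ∀ y ∈ Ioo a c, 0 < g y)
    (hQ_cont : ContinuousOn Q (Ioo a c)) (hQ_bdd : ∃ B, ∀ y ∈ Ioo a c, |Q y| ≤ B)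
    (hp_eq : ∀ u ∈ Ioo a c,
      p u = (∫ y in u..c, D / g y * exp (-(∫ z in u..y, (b z + D) / g z)))
        + ∫ y in u..c, b y / g y * exp (-(∫ z in u..y, (b z + D) / g z)) * Q y)
    (hx : x ∈ Ioo a c) :
    HasDerivAt p ((b x + D) / g x * p x - (D / g x + b x / g x * Q x)) x := by
  obtain ⟨B, hB⟩ := hQ_bdd
  have hg_ne : ∀ y ∈ Ioo a c, g y ≠ 0 := fun y hy => (hg_pos y hy).ne'
  have hh : ContinuousOn (fun y => (b y + D) / g y) (Ioo a c) :=
    (hb_cont.add continuousOn_const).div hg_cont hg_ne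
  have hh0 (y : ℝ) (hy : y ∈ Ioo a c) : 0 ≤ (b y + D) / g y :=
    div_nonneg (add_nonneg (hb y hy) hD) (hg_pos y hy).le
  have hdeath := hasDerivAt_integral_mul_exp_neg_integral hh hx hh0 (K := fun y => D / g y)
    (B := 1) (continuousOn_const.div hg_cont hg_ne) fun y hy => by
      rw [one_mul, abs_of_nonneg (div_nonneg hD (hg_pos y hy).le)]
      exact div_le_div_of_nonneg_right (le_add_of_nonneg_left (hb y hy)) (hg_pos y hy).le
  have hdivision := hasDerivAt_integral_mul_exp_neg_integral hh hx hh0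
    (K := fun y => b y / g y * Q y) ((hb_cont.div hg_cont hg_ne).mul hQ_cont) fun y hy => by
      rw [abs_mul, abs_of_nonneg (div_nonneg (hb y hy) (hg_pos y hy).le), mul_comm B]
      exact mul_le_mul (div_le_div_of_nonneg_right (le_add_of_nonneg_right hD)
        (hg_pos y hy).le) (hB y hy) (abs_nonneg _) (hh0 y hy)
  have hp_sum : ∀ u ∈ Ioo a c,
      p u = (∫ y in u..c, D / g y * exp (-(∫ z in u..y, (b z + D) / g z)))
        + ∫ y in u..c, b y / g y * Q y * exp (-(∫ z in u..y, (b z + D) / g z)) :=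
    fun u hu => (hp_eq u hu).trans
      (congrArg _ (integral_congr fun y _ => mul_right_comm _ _ _))
  refine ((hdeath.add hdivision).congr_of_eventuallyEq
    (eventually_of_mem (isOpen_Ioo.mem_nhds hx) hp_sum)).congr_deriv ?_
  rw [hp_sum x hx]
  ring

end ExtinctionEquation

open ExtinctionEquation in
theorem statement6_general (M D : ℝ) (hD : 0 < D)
    (q : ℝ → ℝ → ℝ) (hq : IsDivisionKernel M q)
    (b g : ℝ → ℝ)
    (hb_cont : ContinuousOn b (Set.Icc 0 M))
    (hb_nonneg : ∀ x ∈ Set.Icc (0:ℝ) M, 0 ≤ b x)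
    (hg_cont : ContinuousOn g (Set.Icc 0 M))
    (hg_pos : ∀ x ∈ Set.Ioo (0:ℝ) M, 0 < g x)
    (hH1 : AssumptionH1 M q b)
    (p : ℝ → ℝ)
    (hp_cont : ContinuousOn p (Set.Ioo 0 M))
    (hp_bdd : ∃ C : ℝ, ∀ x ∈ Set.Ioo (0:ℝ) M, |p x| ≤ C)
    (hp_eq : ∀ x ∈ Set.Ioo (0:ℝ) M,
      p x = (∫ y in x..M, D / g y * Real.exp (-(∫ z in x..y, (b z + D) / g z)))
        + ∫ y in x..M, b y / g y * Real.exp (-(∫ z in x..y, (b z + D) / g z)) *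
            ∫ α in (0:ℝ)..1, q y α * p (α * y) * p ((1 - α) * y)) :
    ∀ x ∈ Set.Ioo (0:ℝ) M,
      DifferentiableAt ℝ p x ∧
      g x * deriv p x + D * (1 - p x)
        + b x * ((∫ α in (0:ℝ)..1, q x α * p (α * x) * p ((1 - α) * x)) - p x) = 0 := by
  intro x hx
  obtain ⟨hQ_cont, hQ_bdd⟩ := divisionIntegral_continuousOn_and_bounded hq hH1 hp_cont hp_bdd
  have hp_deriv := hasDerivAt_of_integral_equation (Q := divisionIntegral q p) hD.le
    (hb_cont.mono Ioo_subset_Icc_self) (fun y hy => hb_nonneg y (Ioo_subset_Icc_self hy))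
    (hg_cont.mono Ioo_subset_Icc_self) hg_pos hQ_cont hQ_bdd hp_eq hx
  refine ⟨hp_deriv.differentiableAt, ?_⟩
  change _ + _ + b x * (divisionIntegral q p x - _) = 0
  rw [hp_deriv.deriv]
  field_simp [(hg_pos x hx).ne']
  ring

/-- A continuous bounded solution of the integral form of the extinction-probability
equation is differentiable on `(0,M)` and satisfies
`g(S,x) p'(x) + D(1 − p(x)) + b(S,x)(∫_0^1 q(x,α)p(αx)p((1−α)x)dα − p(x)) = 0`. -/
theorem statement6 (M D : ℝ) (hM : 0 < M) (hD : 0 < D)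
    (q : ℝ → ℝ → ℝ) (hq : IsDivisionKernel M q)
    (b g : ℝ → ℝ)
    (hb_cont : ContinuousOn b (Set.Icc 0 M))
    (hb_nonneg : ∀ x ∈ Set.Icc (0:ℝ) M, 0 ≤ b x)
    (hg_cont : ContinuousOn g (Set.Icc 0 M))
    (hg_diff : ContDiffOn ℝ 1 g (Set.Ioo 0 M))
    (hg0 : g 0 = 0) (hgM : g M = 0)
    (hg_pos : ∀ x ∈ Set.Ioo (0:ℝ) M, 0 < g x)
    (hH1 : AssumptionH1 M q b)
    (p : ℝ → ℝ)
    (hp_cont : ContinuousOn p (Set.Ioo 0 M))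
    (hp_bdd : ∃ C : ℝ, ∀ x ∈ Set.Ioo (0:ℝ) M, |p x| ≤ C)
    (hp_eq : ∀ x ∈ Set.Ioo (0:ℝ) M,
      p x = (∫ y in x..M, D / g y * Real.exp (-(∫ z in x..y, (b z + D) / g z)))
        + ∫ y in x..M, b y / g y * Real.exp (-(∫ z in x..y, (b z + D) / g z)) *
            ∫ α in (0:ℝ)..1, q y α * p (α * y) * p ((1 - α) * y)) :
    ∀ x ∈ Set.Ioo (0:ℝ) M,
      DifferentiableAt ℝ p x ∧
      g x * deriv p x + D * (1 - p x)
        + b x * ((∫ α in (0:ℝ)..1, q x α * p (α * x) * p ((1 - α) * x)) - p x) = 0 :=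
  statement6_general M D hD q hq b g hb_cont hb_nonneg hg_cont hg_pos hH1 p hp_cont hp_bdd hp_eq
end

section
/- Fix S > 0 and x ∈ (0,M). For death rates 0 < D ≤ D', writing p^{S,D}_n and p^{S,D} for the generation-wise extinction probabilities and their pointwise limit computed with death rate D, one has p^{S,D}_n(x) ≤ p^{S,D'}_n(x) for every n ≥ 0, and consequently p^{S,D}(x) ≤ p^{S,D'}(x); i.e. the extinction probability is non-decreasing in the death rate D. -/
/-!
Along the trajectory `t ↦ A t x`, write `β = b ∘ A` for the division rate and
`S_D t = exp (-∫₀ᵗ β - D t)` for the probability that neither death nor division has happened by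
time `t`. Since `∫₀^∞ (D + β) S_D = 1`, the recurrence reads
`genRec D f x = 1 - ∫₀^∞ β S_D (1 - κ_f)`, where `κ_f ≤ 1` averages `f` over the two daughters.
This is monotone in `f` and, as `S_D` decreases in `D`, in `D`; induction on `n` then gives
`p^D_n ≤ p^{D'}_n ≤ 1`.

The integrals only carry their intended values once every `p_n` is measurable. This holds because
the flow is continuous in time and, since trajectories of a one-dimensional flow cannot cross,
monotone in the initial size, hence jointly measurable.
-/

open MeasureTheory Set Filter

/-- The right-hand side of the recurrence defining the generation-wise extinction
probabilities: for a function `f` (extinction probability at the previous generation),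
`genRec D b A q f x = D ∫_0^∞ e^{−Dt} e^{−∫_0^t b(A_u(x))du} dt
 + ∫_0^∞ b(A_t(x)) e^{−∫_0^t b(A_u(x))du − Dt} (∫_0^1 q(A_t(x),α) f(αA_t(x)) f((1−α)A_t(x)) dα) dt`. -/
noncomputable def genRec (D : ℝ) (b : ℝ → ℝ) (A : ℝ → ℝ → ℝ) (q : ℝ → ℝ → ℝ)
    (f : ℝ → ℝ) (x : ℝ) : ℝ :=
  D * (∫ t in Set.Ioi (0:ℝ),
        Real.exp (-(D * t)) * Real.exp (-(∫ u in (0:ℝ)..t, b (A u x))))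
  + ∫ t in Set.Ioi (0:ℝ),
      b (A t x) * Real.exp (-(∫ u in (0:ℝ)..t, b (A u x)) - D * t) *
        ∫ α in (0:ℝ)..1, q (A t x) α * f (α * A t x) * f ((1 - α) * A t x)

lemma integrableOn_Ioc_of_forall_lt {h : ℝ → ℝ} {C T : ℝ}
    (hC : ∀ u ∈ Ioc 0 T, ‖h u‖ ≤ C) (hint : ∀ s < T, IntegrableOn h (Ioc 0 s)) :
    IntegrableOn h (Ioc 0 T) := by
  have hcover : Ioo 0 T = ⋃ n : ℕ, Ioc 0 (T - 1 / (n + 1)) := by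
    ext u
    simp only [mem_Ioo, mem_iUnion, mem_Ioc]
    constructor
    · rintro ⟨hu0, huT⟩
      obtain ⟨n, hn⟩ := exists_nat_one_div_lt (sub_pos.mpr huT)
      exact ⟨n, hu0, by linarith⟩
    · rintro ⟨n, hu0, hun⟩
      exact ⟨hu0, hun.trans_lt (sub_lt_self T Nat.one_div_pos_of_nat)⟩
  have hmeas : AEStronglyMeasurable h (volume.restrict (Ioo 0 T)) := by
    rw [hcover, aestronglyMeasurable_iUnion_iff]
    exact fun n => (hint _ (sub_lt_self T Nat.one_div_pos_of_nat)).aestronglyMeasurable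
  rw [integrableOn_Ioc_iff_integrableOn_Ioo]
  refine IntegrableOn.of_bound measure_Ioo_lt_top hmeas C ?_
  filter_upwards [ae_restrict_mem measurableSet_Ioo] with u hu
  exact hC u (Ioo_subset_Ioc_self hu)

/-- Past the first time `h` fails to be integrable, its primitive takes the junk value `0`, so `h`
is constant there. -/
lemma integrableOn_Ioc_of_eq_comp_primitive {h Φ : ℝ → ℝ} {C : ℝ}
    (hC : ∀ u, 0 ≤ u → ‖h u‖ ≤ C) (hΦ : ∀ u, 0 ≤ u → h u = Φ (∫ v in (0:ℝ)..u, h v))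
    (t : ℝ) : IntegrableOn h (Ioc 0 t) := by
  by_contra ht
  set bad := {s : ℝ | ¬ IntegrableOn h (Ioc 0 s)}
  have hbad_pos : ∀ s ∈ bad, 0 < s := fun s hs => by
    by_contra! hs0
    exact hs (by simp [Ioc_eq_empty_of_le hs0])
  have hbdd : BddBelow bad := ⟨0, fun s hs => (hbad_pos s hs).le⟩
  set T := sInf bad
  have hT0 : 0 ≤ T := le_csInf ⟨t, ht⟩ fun s hs => (hbad_pos s hs).le
  have hgood : ∀ s < T, IntegrableOn h (Ioc 0 s) := fun s hs => by
    by_contra hs'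
    exact notMem_of_lt_csInf hs hbdd hs'
  have hafter : ∀ s, T < s → s ∈ bad := fun s hs => by
    obtain ⟨s', hs', hs's⟩ := exists_lt_of_csInf_lt ⟨t, ht⟩ hs
    exact fun hint => hs' (hint.mono_set (Ioc_subset_Ioc_right hs's.le))
  have hconst : ∀ u ∈ Ioc T (T + 1), h u = Φ 0 := fun u hu => by
    have hu0 : 0 ≤ u := hT0.trans hu.1.le
    rw [hΦ u hu0, intervalIntegral.integral_undef]
    rw [intervalIntegrable_iff_integrableOn_Ioc_of_le hu0]
    exact hafter u hu.1
  have h₁ : IntegrableOn h (Ioc 0 T) :=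
    integrableOn_Ioc_of_forall_lt (fun u hu => hC u hu.1.le) hgood
  have h₂ : IntegrableOn h (Ioc T (T + 1)) :=
    (integrableOn_const measure_Ioc_lt_top.ne).congr_fun (fun u hu => (hconst u hu).symm)
      measurableSet_Ioc
  refine hafter (T + 1) (lt_add_one T) ?_
  rw [← Ioc_union_Ioc_eq_Ioc hT0 (by linarith)]
  exact h₁.union h₂

structure IsTrajectory (M : ℝ) (g : ℝ → ℝ) (y : ℝ) (a : ℝ → ℝ) : Prop where
  mem : ∀ t, 0 ≤ t → a t ∈ Ioc 0 M
  eq_integral : ∀ t, 0 ≤ t → a t = y + ∫ u in (0:ℝ)..t, g (a u)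

namespace IsTrajectory

variable {M y : ℝ} {g a : ℝ → ℝ}

lemma zero (ha : IsTrajectory M g y a) : a 0 = y := by
  simpa using ha.eq_integral 0 le_rfl

lemma intervalIntegrable (hg : ContinuousOn g (Icc 0 M)) (ha : IsTrajectory M g y a) {t : ℝ}
    (ht : 0 ≤ t) : IntervalIntegrable (fun u => g (a u)) volume 0 t := by
  obtain ⟨C, hC⟩ := isCompact_Icc.exists_bound_of_continuousOn hg
  exact (intervalIntegrable_iff_integrableOn_Ioc_of_le ht).mpr <|
    integrableOn_Ioc_of_eq_comp_primitive (Φ := fun z => g (y + z))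
      (fun u hu => hC _ (Ioc_subset_Icc_self (ha.mem u hu)))
      (fun u hu => by rw [← ha.eq_integral u hu]) t

lemma sub_eq_integral (hg : ContinuousOn g (Icc 0 M)) (ha : IsTrajectory M g y a)
    {s t : ℝ} (hs : 0 ≤ s) (ht : 0 ≤ t) :
    a t - a s = ∫ u in s..t, g (a u) := by
  rw [ha.eq_integral t ht, ha.eq_integral s hs, add_sub_add_left_eq_sub,
    intervalIntegral.integral_interval_sub_left (ha.intervalIntegrable hg ht)
      (ha.intervalIntegrable hg hs)]

lemma continuousOn (hg : ContinuousOn g (Icc 0 M)) (ha : IsTrajectory M g y a) :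
    ContinuousOn a (Ici 0) := by
  obtain ⟨C, hC⟩ := isCompact_Icc.exists_bound_of_continuousOn hg
  refine (LipschitzOnWith.of_dist_le_mul (K := C.toNNReal) fun t ht s hs => ?_).continuousOn
  rw [Real.dist_eq, Real.dist_eq, ← Real.norm_eq_abs, ha.sub_eq_integral hg hs ht]
  calc ‖∫ u in s..t, g (a u)‖ ≤ C * |t - s| :=
        intervalIntegral.norm_integral_le_of_norm_le_const fun u hu =>
          hC _ (Ioc_subset_Icc_self (ha.mem u ((le_min hs ht).trans (uIoc_subset_uIcc hu).1)))
    _ ≤ C.toNNReal * |t - s| := by gcongr; exact Real.le_coe_toNNReal C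

lemma monotoneOn (hg : ContinuousOn g (Icc 0 M)) (hg_nonneg : ∀ z ∈ Ioc 0 M, 0 ≤ g z)
    (ha : IsTrajectory M g y a) : MonotoneOn a (Ici 0) := fun s hs t ht hst => by
  rw [← sub_nonneg, ha.sub_eq_integral hg hs ht]
  exact intervalIntegral.integral_nonneg hst fun u hu => hg_nonneg _ (ha.mem u (hs.trans hu.1))

lemma hasDerivAt (hg : ContinuousOn g (Icc 0 M)) (ha : IsTrajectory M g y a) {t : ℝ}
    (ht : 0 < t) : HasDerivAt a (g (a t)) t := by
  have hcont : ContinuousOn (fun u => g (a u)) (Ioi 0) :=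
    hg.comp ((ha.continuousOn hg).mono Ioi_subset_Ici_self)
      fun u hu => Ioc_subset_Icc_self (ha.mem u (le_of_lt hu))
  have hprim := (intervalIntegral.integral_hasDerivAt_right (ha.intervalIntegrable hg ht.le)
    (hcont.stronglyMeasurableAtFilter isOpen_Ioi t ht)
    (hcont.continuousAt (Ioi_mem_nhds ht))).const_add y
  refine hprim.congr_of_eventuallyEq ?_
  filter_upwards [Ioi_mem_nhds ht] with u hu
  exact ha.eq_integral u (le_of_lt hu)

/-- Separation of variables: a primitive `τ` of `1 / g` turns the flow into a translation. -/
lemma eq_add_of_hasDerivAt_inv (hg : ContinuousOn g (Icc 0 M))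
    (hg_pos : ∀ z ∈ Ioo 0 M, 0 < g z) (hg_nonneg : ∀ z ∈ Ioc 0 M, 0 ≤ g z)
    (ha : IsTrajectory M g y a) {τ : ℝ → ℝ} (hτ : ∀ z ∈ Ioo 0 M, HasDerivAt τ (g z)⁻¹ z) {t : ℝ}
    (ht : 0 ≤ t) (hat : a t < M) : τ (a t) = τ y + t := by
  have hmem : ∀ s ∈ Icc 0 t, a s ∈ Ioo 0 M := fun s hs =>
    ⟨(ha.mem s hs.1).1, ((ha.monotoneOn hg hg_nonneg) hs.1 ht hs.2).trans_lt hat⟩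
  have hτ_cont : ContinuousOn τ (Ioo 0 M) := fun z hz =>
    (hτ z hz).continuousAt.continuousWithinAt
  have hcont : ContinuousOn (τ ∘ a) (Icc 0 t) :=
    hτ_cont.comp ((ha.continuousOn hg).mono Icc_subset_Ici_self) hmem
  have hderiv : ∀ s ∈ Ioo 0 t, HasDerivAt (τ ∘ a) 1 s := fun s hs => by
    have hs' := hmem s (Ioo_subset_Icc_self hs)
    simpa [inv_mul_cancel₀ (hg_pos _ hs').ne'] using
      (hτ _ hs').comp s (ha.hasDerivAt hg hs.1)
  have := intervalIntegral.integral_eq_sub_of_hasDerivAt_of_le ht hcont hderiv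
    intervalIntegrable_const
  simp only [intervalIntegral.integral_const, sub_zero, smul_eq_mul, mul_one,
    Function.comp_apply, ha.zero] at this
  linarith

end IsTrajectory

lemma exists_strictMonoOn_hasDerivAt_inv {g : ℝ → ℝ} {l r : ℝ} (hlr : l < r)
    (hg : ContinuousOn g (Ioo l r)) (hg_pos : ∀ z ∈ Ioo l r, 0 < g z) :
    ∃ τ : ℝ → ℝ, StrictMonoOn τ (Ioo l r) ∧ ∀ z ∈ Ioo l r, HasDerivAt τ (g z)⁻¹ z := by
  obtain ⟨c, hc⟩ := exists_between hlr
  have hinv : ContinuousOn (fun z => (g z)⁻¹) (Ioo l r) :=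
    hg.inv₀ fun z hz => (hg_pos z hz).ne'
  have hderiv : ∀ z ∈ Ioo l r, HasDerivAt (fun z => ∫ u in c..z, (g u)⁻¹) (g z)⁻¹ z :=
    fun z hz => intervalIntegral.integral_hasDerivAt_right
      ((hinv.mono (ordConnected_Ioo.uIcc_subset hc hz)).intervalIntegrable)
      (hinv.stronglyMeasurableAtFilter isOpen_Ioo z hz) (hinv.continuousAt (isOpen_Ioo.mem_nhds hz))
  refine ⟨_, strictMonoOn_of_hasDerivWithinAt_pos (f' := fun z => (g z)⁻¹) (convex_Ioo l r)
    (fun z hz => (hderiv z hz).continuousAt.continuousWithinAt) (fun z hz => ?_) (fun z hz => ?_),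
    hderiv⟩
  · rw [interior_Ioo] at hz ⊢
    exact (hderiv z hz).hasDerivWithinAt
  · rw [interior_Ioo] at hz
    exact inv_pos.mpr (hg_pos z hz)

section Flow

variable {M : ℝ} {g : ℝ → ℝ} {A : ℝ → ℝ → ℝ}

/-- Trajectories cannot cross: if `A t y < A t x` with `x < y`, the trajectory from `x` passes
through `A t y` at some time `s ≤ t`, while the translation property forces `s > t`. -/
lemma flow_monotoneOn (hg : ContinuousOn g (Icc 0 M)) (hg_pos : ∀ z ∈ Ioo 0 M, 0 < g z)
    (hg_nonneg : ∀ z ∈ Ioc 0 M, 0 ≤ g z) (hA : ∀ y ∈ Ioo 0 M, IsTrajectory M g y (fun t => A t y)) {t : ℝ}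
    (ht : 0 ≤ t) : MonotoneOn (A t) (Ioo 0 M) := by
  intro x hx y hy hxy
  rcases hxy.eq_or_lt with rfl | hxy
  · exact le_rfl
  by_contra! hlt
  obtain ⟨τ, hτ_mono, hτ⟩ := exists_strictMonoOn_hasDerivAt_inv (hx.1.trans hx.2)
    (hg.mono Ioo_subset_Icc_self) hg_pos
  have hx0 : A 0 x = x := (hA x hx).zero
  have hy_le : y ≤ A t y := by
    simpa [(hA y hy).zero] using (hA y hy).monotoneOn hg hg_nonneg self_mem_Ici ht ht
  obtain ⟨s, hs, hsx⟩ : ∃ s ∈ Icc 0 t, A s x = A t y :=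
    intermediate_value_Icc ht (((hA x hx).continuousOn hg).mono Icc_subset_Ici_self)
      ⟨by simpa only [hx0] using hxy.le.trans hy_le, hlt.le⟩
  have hM_lt : A t y < M := hlt.trans_le ((hA x hx).mem t ht).2
  have hτx := (hA x hx).eq_add_of_hasDerivAt_inv hg hg_pos hg_nonneg hτ hs.1 (by rwa [hsx])
  have hτy := (hA y hy).eq_add_of_hasDerivAt_inv hg hg_pos hg_nonneg hτ ht hM_lt
  simp only [hsx] at hτx hτy
  linarith [hτ_mono hx hy hxy, hs.2]

lemma exists_measurable_flow_extension (hM : 0 < M) (hg : ContinuousOn g (Icc 0 M))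
    (hg_pos : ∀ z ∈ Ioo 0 M, 0 < g z) (hg_nonneg : ∀ z ∈ Ioc 0 M, 0 ≤ g z)
    (hA : ∀ y ∈ Ioo 0 M, IsTrajectory M g y (fun t => A t y)) :
    ∃ A' : ℝ → ℝ → ℝ, Measurable (Function.uncurry A') ∧ (∀ y, Continuous (A' · y)) ∧
      (∀ t y, A' t y ∈ Ioc 0 M) ∧ ∀ y ∈ Ioo 0 M, ∀ t, 0 ≤ t → A' t y = A t y := by
  set A' : ℝ → ℝ → ℝ := fun t y => if y ∈ Ioo 0 M then A (max t 0) y else M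
  have hcont : ∀ y, Continuous (A' · y) := fun y => by
    by_cases hy : y ∈ Ioo 0 M
    · simp only [A', hy, if_true]
      exact ((hA y hy).continuousOn hg).comp_continuous (continuous_id.max continuous_const)
        fun t => le_max_right t 0
    · simp only [A', hy, if_false]
      exact continuous_const
  have hmeas : ∀ t, Measurable (A' t) := fun t => by
    have hbdd : ∀ y ∈ Ioo 0 M, A (max t 0) y ∈ Ioc 0 M := fun y hy =>
      (hA y hy).mem _ (le_max_right t 0)
    obtain ⟨G, hG_mono, hG⟩ :=
      (flow_monotoneOn hg hg_pos hg_nonneg hA (le_max_right t 0)).exists_monotone_extension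
        ⟨0, by rintro _ ⟨y, hy, rfl⟩; exact (hbdd y hy).1.le⟩
        ⟨M, by rintro _ ⟨y, hy, rfl⟩; exact (hbdd y hy).2⟩
    have hpiece : A' t = (Ioo 0 M).piecewise G (fun _ => M) := funext fun y => by
      by_cases hy : y ∈ Ioo 0 M
      · rw [piecewise_eq_of_mem _ _ _ hy, ← hG hy]
        simp only [A', if_pos hy]
      · rw [piecewise_eq_of_notMem _ _ _ hy]
        simp only [A', if_neg hy]
    rw [hpiece]
    exact hG_mono.measurable.piecewise measurableSet_Ioo measurable_const
  refine ⟨A', measurable_uncurry_of_continuous_of_measurable hcont hmeas, hcont,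
    fun t y => ?_, fun y hy t ht => by simp only [A', if_pos hy, max_eq_left ht]⟩
  by_cases hy : y ∈ Ioo 0 M
  · simpa only [A', if_pos hy] using (hA y hy).mem _ (le_max_right t 0)
  · simpa only [A', if_neg hy] using ⟨hM, le_rfl⟩

end Flow

/-- Along a trajectory with division rate `β` and death rate `D`, the probability of dying before
dividing plus the expectation of `κ` at the division time if division comes first. -/
noncomputable def firstEventValue (D : ℝ) (β κ : ℝ → ℝ) : ℝ :=
  D * (∫ t in Ioi (0:ℝ), Real.exp (-(D * t)) * Real.exp (-(∫ u in (0:ℝ)..t, β u)))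
  + ∫ t in Ioi (0:ℝ), β t * Real.exp (-(∫ u in (0:ℝ)..t, β u) - D * t) * κ t

section FirstEventValue

variable {D D' C : ℝ} {β κ κ' : ℝ → ℝ}

lemma firstEventValue_congr {β' : ℝ → ℝ} (hβ : EqOn β β' (Ici 0)) (hκ : EqOn κ κ' (Ioi 0)) :
    firstEventValue D β κ = firstEventValue D β' κ' := by
  have hprim : ∀ t ∈ Ioi (0:ℝ), ∫ u in (0:ℝ)..t, β u = ∫ u in (0:ℝ)..t, β' u := fun t ht =>
    intervalIntegral.integral_congr fun u hu =>
      hβ (by rw [uIcc_of_le (le_of_lt ht)] at hu; exact hu.1)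
  unfold firstEventValue
  congr 1
  · congr 1
    exact setIntegral_congr_fun measurableSet_Ioi fun t ht => by simp only [hprim t ht]
  · exact setIntegral_congr_fun measurableSet_Ioi fun t ht => by
      simp only [hprim t ht, hβ (Ioi_subset_Ici_self ht), hκ ht]

lemma firstEventValue_nonneg (hD : 0 ≤ D) (hβ0 : ∀ t, 0 ≤ β t) (hκ0 : ∀ t, 0 ≤ κ t) :
    0 ≤ firstEventValue D β κ :=
  add_nonneg (mul_nonneg hD (integral_nonneg fun t => by positivity))
    (integral_nonneg fun t => mul_nonneg (mul_nonneg (hβ0 t) (Real.exp_pos _).le) (hκ0 t))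

lemma integrableOn_mul_exp_neg_primitive (hD : 0 < D) (hβ : Continuous β) (hβ0 : ∀ t, 0 ≤ β t)
    {w : ℝ → ℝ} (hw : Measurable w) (hwC : ∀ t, |w t| ≤ C) :
    IntegrableOn (fun t => w t * Real.exp (-(∫ u in (0:ℝ)..t, β u) - D * t)) (Ioi 0) := by
  have hprim : Continuous fun t => ∫ u in (0:ℝ)..t, β u :=
    intervalIntegral.continuous_primitive (fun _ _ => hβ.intervalIntegrable _ _) 0
  refine Integrable.mono' ((exp_neg_integrableOn_Ioi 0 hD).const_mul C)
    (hw.aestronglyMeasurable.mul (by fun_prop : Continuous fun t =>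
      Real.exp (-(∫ u in (0:ℝ)..t, β u) - D * t)).aestronglyMeasurable) ?_
  filter_upwards [ae_restrict_mem measurableSet_Ioi] with t ht
  rw [norm_mul, Real.norm_eq_abs, Real.norm_of_nonneg (Real.exp_pos _).le]
  refine mul_le_mul (hwC t) (Real.exp_le_exp.mpr ?_) (Real.exp_pos _).le
    ((abs_nonneg _).trans (hwC t))
  linarith [intervalIntegral.integral_nonneg (μ := volume) (le_of_lt ht) fun u _ => hβ0 u]

/-- The first event, death or division, happens almost surely. -/
lemma integral_add_mul_exp_neg_primitive (hD : 0 < D) (hβ : Continuous β) (hβ0 : ∀ t, 0 ≤ β t)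
    (hβC : ∀ t, β t ≤ C) :
    ∫ t in Ioi (0:ℝ), (D + β t) * Real.exp (-(∫ u in (0:ℝ)..t, β u) - D * t) = 1 := by
  set S : ℝ → ℝ := fun t => Real.exp (-(∫ u in (0:ℝ)..t, β u) - D * t)
  have hS_deriv : ∀ t, HasDerivAt (fun t => -S t) ((D + β t) * S t) t := fun t => by
    have hexp : HasDerivAt (fun t => -(∫ u in (0:ℝ)..t, β u) - D * t) (-β t - D) t :=
      (intervalIntegral.integral_hasDerivAt_right (hβ.intervalIntegrable 0 t)
        hβ.stronglyMeasurable.stronglyMeasurableAtFilter hβ.continuousAt).neg.sub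
        (by simpa using (hasDerivAt_id t).const_mul D)
    have hS : HasDerivAt (fun t => -S t) (-(S t * (-β t - D))) t := hexp.exp.neg
    exact hS.congr_deriv (by ring)
  have hS_le : ∀ t, 0 ≤ t → S t ≤ Real.exp (-D * t) := fun t ht => by
    refine Real.exp_le_exp.mpr ?_
    linarith [intervalIntegral.integral_nonneg (μ := volume) ht fun u _ => hβ0 u]
  have hlim : Tendsto (fun t => -S t) atTop (nhds 0) := by
    rw [← neg_zero]
    refine (squeeze_zero' (Eventually.of_forall fun t => (Real.exp_pos _).le)
      ((eventually_ge_atTop 0).mono hS_le) ?_).neg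
    simpa [Function.comp_def] using Real.tendsto_exp_neg_atTop_nhds_zero.comp
      (tendsto_id.const_mul_atTop hD)
  have hint : IntegrableOn (fun t => (D + β t) * S t) (Ioi 0) :=
    integrableOn_mul_exp_neg_primitive (C := D + C) hD hβ hβ0 (measurable_const.add hβ.measurable)
      fun t => by rw [abs_of_nonneg (by linarith [hβ0 t])]; linarith [hβC t]
  rw [integral_Ioi_of_hasDerivAt_of_tendsto (hS_deriv 0).continuousAt.continuousWithinAt
    (fun t _ => hS_deriv t) hint hlim]
  simp [S]

lemma firstEventValue_eq_one_sub (hD : 0 < D) (hβ : Continuous β) (hβ0 : ∀ t, 0 ≤ β t)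
    (hβC : ∀ t, β t ≤ C) (hκ : Measurable κ) (hκ0 : ∀ t, 0 ≤ κ t) (hκ1 : ∀ t, κ t ≤ 1) :
    firstEventValue D β κ =
      1 - ∫ t in Ioi (0:ℝ), β t * (1 - κ t) * Real.exp (-(∫ u in (0:ℝ)..t, β u) - D * t) := by
  set S : ℝ → ℝ := fun t => Real.exp (-(∫ u in (0:ℝ)..t, β u) - D * t)
  have hC0 : 0 ≤ C := (hβ0 0).trans (hβC 0)
  have hint : ∀ w : ℝ → ℝ, Measurable w → (∀ t, |w t| ≤ D + C) →
      IntegrableOn (fun t => w t * S t) (Ioi 0) := fun w hw hwC =>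
    integrableOn_mul_exp_neg_primitive hD hβ hβ0 hw hwC
  have hS : IntegrableOn (fun t => D * S t) (Ioi 0) :=
    hint _ measurable_const fun t => by rw [abs_of_pos hD]; linarith
  have hκS : IntegrableOn (fun t => β t * κ t * S t) (Ioi 0) :=
    hint _ (hβ.measurable.mul hκ) fun t => by
      rw [abs_of_nonneg (mul_nonneg (hβ0 t) (hκ0 t))]
      nlinarith [hβ0 t, hβC t, hκ0 t, hκ1 t]
  have hκS' : IntegrableOn (fun t => β t * (1 - κ t) * S t) (Ioi 0) :=
    hint _ (hβ.measurable.mul (measurable_const.sub hκ)) fun t => by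
      rw [abs_of_nonneg (mul_nonneg (hβ0 t) (by linarith [hκ1 t]))]
      nlinarith [hβ0 t, hβC t, hκ0 t, hκ1 t]
  have htotal := integral_add_mul_exp_neg_primitive hD hβ hβ0 hβC
  rw [← integral_congr_ae (ae_of_all _ fun t =>
      show (D * S t + β t * κ t * S t) + β t * (1 - κ t) * S t = (D + β t) * S t by ring),
    integral_add (f := fun t => D * S t + β t * κ t * S t) (hS.add hκS) hκS',
    integral_add hS hκS, integral_const_mul] at htotal
  have hfirst : ∫ t in Ioi (0:ℝ), Real.exp (-(D * t)) * Real.exp (-(∫ u in (0:ℝ)..t, β u)) =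
      ∫ t in Ioi (0:ℝ), S t :=
    integral_congr_ae (ae_of_all _ fun t => by simp only [S, ← Real.exp_add]; ring_nf)
  have hsecond : ∫ t in Ioi (0:ℝ), β t * S t * κ t = ∫ t in Ioi (0:ℝ), β t * κ t * S t :=
    integral_congr_ae (ae_of_all _ fun t => by ring)
  rw [firstEventValue, hfirst, hsecond]
  linarith

lemma firstEventValue_one (hD : 0 < D) (hβ : Continuous β) (hβ0 : ∀ t, 0 ≤ β t)
    (hβC : ∀ t, β t ≤ C) : firstEventValue D β (fun _ => 1) = 1 := by
  simp [firstEventValue_eq_one_sub hD hβ hβ0 hβC measurable_const (fun _ => zero_le_one)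
    (fun _ => le_rfl)]

lemma firstEventValue_le_firstEventValue (hD : 0 < D) (hDD' : D ≤ D') (hβ : Continuous β)
    (hβ0 : ∀ t, 0 ≤ β t) (hβC : ∀ t, β t ≤ C) (hκ : Measurable κ) (hκ' : Measurable κ')
    (hκ0 : ∀ t, 0 ≤ κ t) (hκκ' : ∀ t, κ t ≤ κ' t) (hκ'1 : ∀ t, κ' t ≤ 1) :
    firstEventValue D β κ ≤ firstEventValue D' β κ' := by
  have hD' : 0 < D' := hD.trans_le hDD'
  have hκ1 : ∀ t, κ t ≤ 1 := fun t => (hκκ' t).trans (hκ'1 t)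
  have hκ'0 : ∀ t, 0 ≤ κ' t := fun t => (hκ0 t).trans (hκκ' t)
  rw [firstEventValue_eq_one_sub hD hβ hβ0 hβC hκ hκ0 hκ1,
    firstEventValue_eq_one_sub hD' hβ hβ0 hβC hκ' hκ'0 hκ'1]
  refine sub_le_sub_left (integral_mono_of_nonneg (ae_of_all _ fun t => ?_) ?_ ?_) 1
  · exact mul_nonneg (mul_nonneg (hβ0 t) (by linarith [hκ'1 t])) (Real.exp_pos _).le
  · refine integrableOn_mul_exp_neg_primitive (C := C) hD hβ hβ0
      (hβ.measurable.mul (measurable_const.sub hκ)) fun t => ?_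
    rw [abs_of_nonneg (mul_nonneg (hβ0 t) (by linarith [hκ1 t]))]
    nlinarith [hβ0 t, hβC t, hκ0 t, hκ1 t]
  · filter_upwards [ae_restrict_mem measurableSet_Ioi] with t ht
    refine mul_le_mul (mul_le_mul_of_nonneg_left (by linarith [hκκ' t]) (hβ0 t))
      (Real.exp_le_exp.mpr ?_) (Real.exp_pos _).le (mul_nonneg (hβ0 t) (by linarith [hκ1 t]))
    nlinarith [mem_Ioi.mp ht]

end FirstEventValue

noncomputable def divisionMean (q : ℝ → ℝ → ℝ) (f : ℝ → ℝ) (z : ℝ) : ℝ :=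
  ∫ α in (0:ℝ)..1, q z α * f (α * z) * f ((1 - α) * z)

section DivisionMean

variable {M z : ℝ} {q : ℝ → ℝ → ℝ} {f f' : ℝ → ℝ}

lemma ae_daughters_mem (hz : z ∈ Ioc 0 M) :
    ∀ᵐ α ∂volume.restrict (Icc (0:ℝ) 1),
      α ∈ Icc 0 1 ∧ α * z ∈ Ioo 0 M ∧ (1 - α) * z ∈ Ioo 0 M := by
  have hmem : ∀ α ∈ Ioo (0:ℝ) 1, α * z ∈ Ioo 0 M := fun α hα =>
    ⟨mul_pos hα.1 hz.1, (mul_lt_of_lt_one_left hz.1 hα.2).trans_le hz.2⟩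
  filter_upwards [(ae_restrict_congr_set Ioo_ae_eq_Icc).mp (ae_restrict_mem measurableSet_Ioo)]
    with α hα
  exact ⟨Ioo_subset_Icc_self hα, hmem α hα, hmem (1 - α) ⟨by linarith [hα.2], by linarith [hα.1]⟩⟩

lemma divisionMean_congr (hf : EqOn f f' (Ioo 0 M)) (hz : z ∈ Ioc 0 M) :
    divisionMean q f z = divisionMean q f' z :=
  intervalIntegral.integral_congr_ae_restrict <|
    ae_restrict_of_ae_restrict_of_subset (by rw [uIoc_of_le zero_le_one]; exact Ioc_subset_Icc_self)
      ((ae_daughters_mem hz).mono fun α hα => by simp only [hf hα.2.1, hf hα.2.2])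

lemma measurable_divisionMean (hq : Measurable (Function.uncurry q)) (hf : Measurable f) :
    Measurable (divisionMean q f) := by
  have hint : StronglyMeasurable fun p : ℝ × ℝ => q p.1 p.2 * f (p.2 * p.1) * f ((1 - p.2) * p.1) :=
    ((hq.mul (hf.comp (by fun_prop))).mul (hf.comp (by fun_prop))).stronglyMeasurable
  have : divisionMean q f = fun z => ∫ α in Ioc (0:ℝ) 1, q z α * f (α * z) * f ((1 - α) * z) :=
    funext fun z => intervalIntegral.integral_of_le zero_le_one
  rw [this]
  exact hint.integral_prod_right'.measurable

lemma intervalIntegrable_divisionMean_integrand (hq : IsDivisionKernel M q) (hf : Measurable f)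
    (hf0 : ∀ w ∈ Ioo 0 M, 0 ≤ f w) (hf1 : ∀ w ∈ Ioo 0 M, f w ≤ 1) (hz : z ∈ Ioc 0 M) :
    IntervalIntegrable (fun α => q z α * f (α * z) * f ((1 - α) * z)) volume 0 1 := by
  have hqz : IntervalIntegrable (q z) volume 0 1 :=
    intervalIntegral.intervalIntegrable_of_integral_ne_zero
      (by rw [hq.2.2.1 z (Ioc_subset_Icc_self hz)]; exact one_ne_zero)
  refine hqz.mono_fun' ((hq.1.comp measurable_prodMk_left).mul (hf.comp (by fun_prop))
    |>.mul (hf.comp (by fun_prop))).aestronglyMeasurable ?_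
  refine ae_restrict_of_ae_restrict_of_subset
    (by rw [uIoc_of_le zero_le_one]; exact Ioc_subset_Icc_self) ((ae_daughters_mem hz).mono ?_)
  rintro α ⟨hα, ha, hb⟩
  have hq0 := hq.2.1 z (Ioc_subset_Icc_self hz) α hα
  dsimp only
  rw [Real.norm_of_nonneg (mul_nonneg (mul_nonneg hq0 (hf0 _ ha)) (hf0 _ hb))]
  calc q z α * f (α * z) * f ((1 - α) * z) ≤ q z α * 1 * 1 :=
        mul_le_mul (mul_le_mul_of_nonneg_left (hf1 _ ha) hq0) (hf1 _ hb) (hf0 _ hb)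
          (by rwa [mul_one])
    _ = q z α := by ring

lemma divisionMean_nonneg (hq : IsDivisionKernel M q) (hf0 : ∀ w ∈ Ioo 0 M, 0 ≤ f w)
    (hz : z ∈ Ioc 0 M) : 0 ≤ divisionMean q f z :=
  intervalIntegral.integral_nonneg_of_ae_restrict zero_le_one <|
    (ae_daughters_mem hz).mono fun α ⟨hα, ha, hb⟩ =>
      mul_nonneg (mul_nonneg (hq.2.1 z (Ioc_subset_Icc_self hz) α hα) (hf0 _ ha)) (hf0 _ hb)

lemma divisionMean_mono (hq : IsDivisionKernel M q) (hf : Measurable f) (hf' : Measurable f')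
    (hf0 : ∀ w ∈ Ioo 0 M, 0 ≤ f w) (hff' : ∀ w ∈ Ioo 0 M, f w ≤ f' w)
    (hf'1 : ∀ w ∈ Ioo 0 M, f' w ≤ 1) (hz : z ∈ Ioc 0 M) :
    divisionMean q f z ≤ divisionMean q f' z := by
  have hf'0 : ∀ w ∈ Ioo 0 M, 0 ≤ f' w := fun w hw => (hf0 w hw).trans (hff' w hw)
  have hf1 : ∀ w ∈ Ioo 0 M, f w ≤ 1 := fun w hw => (hff' w hw).trans (hf'1 w hw)
  refine intervalIntegral.integral_mono_ae_restrict zero_le_one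
    (intervalIntegrable_divisionMean_integrand hq hf hf0 hf1 hz)
    (intervalIntegrable_divisionMean_integrand hq hf' hf'0 hf'1 hz) ((ae_daughters_mem hz).mono ?_)
  rintro α ⟨hα, ha, hb⟩
  have hq0 := hq.2.1 z (Ioc_subset_Icc_self hz) α hα
  exact mul_le_mul (mul_le_mul_of_nonneg_left (hff' _ ha) hq0) (hff' _ hb) (hf0 _ hb)
    (mul_nonneg hq0 (hf'0 _ ha))

lemma divisionMean_one (hq : IsDivisionKernel M q) (hz : z ∈ Icc 0 M) :
    divisionMean q (fun _ => 1) z = 1 := by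
  simpa [divisionMean] using hq.2.2.1 z hz

end DivisionMean

lemma exists_continuous_nonneg_eqOn_Icc {b : ℝ → ℝ} {M : ℝ} (hM : 0 ≤ M)
    (hb : ContinuousOn b (Icc 0 M)) (hb0 : ∀ x ∈ Icc 0 M, 0 ≤ b x) :
    ∃ b' : ℝ → ℝ, Continuous b' ∧ (∀ z, 0 ≤ b' z) ∧ EqOn b b' (Icc 0 M) :=
  ⟨IccExtend hM ((Icc 0 M).domRestrict b),
    (continuousOn_iff_continuous_domRestrict.mp hb).Icc_extend',
    fun z => hb0 _ (projIcc 0 M hM z).2, fun _ hz => (IccExtend_of_mem hM (fun z => b z) hz).symm⟩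

lemma measurable_primitive_of_continuous_of_measurable {F : ℝ → ℝ → ℝ}
    (hc : ∀ y, Continuous (F · y)) (hm : Measurable (Function.uncurry F)) :
    Measurable fun p : ℝ × ℝ => ∫ u in (0:ℝ)..p.1, F u p.2 := by
  refine measurable_uncurry_of_continuous_of_measurable (u := fun t y => ∫ u in (0:ℝ)..t, F u y)
    (fun y => intervalIntegral.continuous_primitive (fun _ _ => (hc y).intervalIntegrable _ _) 0)
    fun t => ?_
  have hm' : StronglyMeasurable fun p : ℝ × ℝ => F p.2 p.1 :=
    (hm.comp measurable_swap).stronglyMeasurable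
  exact (hm'.integral_prod_right' (ν := volume.restrict (Ioc 0 t))).measurable.sub
    (hm'.integral_prod_right' (ν := volume.restrict (Ioc t 0))).measurable

section GenRec

variable {M D D' y : ℝ} {q : ℝ → ℝ → ℝ} {b : ℝ → ℝ} {A : ℝ → ℝ → ℝ} {f f' : ℝ → ℝ}

lemma genRec_eq_firstEventValue :
    genRec D b A q f y =
      firstEventValue D (fun t => b (A t y)) (fun t => divisionMean q f (A t y)) :=
  rfl

lemma genRec_congr {b' : ℝ → ℝ} {A' : ℝ → ℝ → ℝ} (hb : EqOn b b' (Icc 0 M))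
    (hA : ∀ t, 0 ≤ t → A t y = A' t y) (hA_mem : ∀ t, 0 ≤ t → A t y ∈ Ioc 0 M)
    (hf : EqOn f f' (Ioo 0 M)) : genRec D b A q f y = genRec D b' A' q f' y := by
  rw [genRec_eq_firstEventValue, genRec_eq_firstEventValue]
  refine firstEventValue_congr (fun t ht => ?_) (fun t ht => ?_)
  · rw [hb (Ioc_subset_Icc_self (hA_mem t ht)), hA t ht]
  · rw [divisionMean_congr hf (hA_mem t (le_of_lt ht)), hA t (le_of_lt ht)]

lemma measurable_genRec (hb : Continuous b) (hA : Measurable (Function.uncurry A))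
    (hAc : ∀ y, Continuous (A · y)) (hq : Measurable (Function.uncurry q)) (hf : Measurable f) :
    Measurable (genRec D b A q f) := by
  have hP : Measurable fun p : ℝ × ℝ => ∫ u in (0:ℝ)..p.2, b (A u p.1) :=
    (measurable_primitive_of_continuous_of_measurable (F := fun u y => b (A u y))
      (fun y => hb.comp (hAc y)) (hb.measurable.comp hA)).comp measurable_swap
  have hA' : Measurable fun p : ℝ × ℝ => A p.2 p.1 := hA.comp measurable_swap
  have h₁ : Measurable fun p : ℝ × ℝ =>
      Real.exp (-(D * p.2)) * Real.exp (-(∫ u in (0:ℝ)..p.2, b (A u p.1))) := by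
    fun_prop
  have h₂ : Measurable fun p : ℝ × ℝ => b (A p.2 p.1) *
      Real.exp (-(∫ u in (0:ℝ)..p.2, b (A u p.1)) - D * p.2) * divisionMean q f (A p.2 p.1) :=
    ((hb.measurable.comp hA').mul (by fun_prop)).mul ((measurable_divisionMean hq hf).comp hA')
  exact (h₁.stronglyMeasurable.integral_prod_right'.measurable.const_mul D).add
    h₂.stronglyMeasurable.integral_prod_right'.measurable

lemma genRec_nonneg (hq : IsDivisionKernel M q) (hb0 : ∀ z, 0 ≤ b z) (hD : 0 ≤ D)
    (hA_mem : ∀ t, A t y ∈ Ioc 0 M) (hf0 : ∀ w ∈ Ioo 0 M, 0 ≤ f w) : 0 ≤ genRec D b A q f y :=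
  firstEventValue_nonneg hD (fun _ => hb0 _) fun t => divisionMean_nonneg hq hf0 (hA_mem t)

lemma genRec_le_genRec (hq : IsDivisionKernel M q) (hb : Continuous b) (hb0 : ∀ z, 0 ≤ b z)
    (hAc : Continuous (A · y)) (hA_mem : ∀ t, A t y ∈ Ioc 0 M) (hD : 0 < D) (hDD' : D ≤ D')
    (hf : Measurable f) (hf' : Measurable f') (hf0 : ∀ w ∈ Ioo 0 M, 0 ≤ f w)
    (hff' : ∀ w ∈ Ioo 0 M, f w ≤ f' w) (hf'1 : ∀ w ∈ Ioo 0 M, f' w ≤ 1) :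
    genRec D b A q f y ≤ genRec D' b A q f' y := by
  obtain ⟨C, hC⟩ := isCompact_Icc.exists_bound_of_continuousOn hb.continuousOn
  exact firstEventValue_le_firstEventValue hD hDD' (hb.comp hAc) (fun _ => hb0 _)
    (fun t => (le_abs_self _).trans (hC _ (Ioc_subset_Icc_self (hA_mem t))))
    ((measurable_divisionMean hq.1 hf).comp hAc.measurable)
    ((measurable_divisionMean hq.1 hf').comp hAc.measurable)
    (fun t => divisionMean_nonneg hq hf0 (hA_mem t))
    (fun t => divisionMean_mono hq hf hf' hf0 hff' hf'1 (hA_mem t))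
    fun t => (divisionMean_mono hq hf' measurable_const
      (fun w hw => (hf0 w hw).trans (hff' w hw)) hf'1 (fun _ _ => le_rfl) (hA_mem t)).trans
      (divisionMean_one hq (Ioc_subset_Icc_self (hA_mem t))).le

lemma genRec_one (hq : IsDivisionKernel M q) (hb : Continuous b) (hb0 : ∀ z, 0 ≤ b z)
    (hAc : Continuous (A · y)) (hA_mem : ∀ t, A t y ∈ Ioc 0 M) (hD : 0 < D) :
    genRec D b A q (fun _ => 1) y = 1 := by
  obtain ⟨C, hC⟩ := isCompact_Icc.exists_bound_of_continuousOn hb.continuousOn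
  rw [genRec_eq_firstEventValue]
  simp only [divisionMean_one hq (Ioc_subset_Icc_self (hA_mem _))]
  exact firstEventValue_one hD (hb.comp hAc) (fun _ => hb0 _)
    fun t => (le_abs_self _).trans (hC _ (Ioc_subset_Icc_self (hA_mem t)))

end GenRec

section Iterates

variable {M D D' : ℝ} {q : ℝ → ℝ → ℝ} {b : ℝ → ℝ} {A : ℝ → ℝ → ℝ}

lemma measurable_iterate_genRec (hb : Continuous b) (hA : Measurable (Function.uncurry A))
    (hAc : ∀ y, Continuous (A · y)) (hq : Measurable (Function.uncurry q)) (n : ℕ) :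
    Measurable ((genRec D b A q)^[n] 0) := by
  induction n with
  | zero => exact measurable_const
  | succ n ih =>
    rw [Function.iterate_succ']
    exact measurable_genRec hb hA hAc hq ih

lemma iterate_genRec_mono (hq : IsDivisionKernel M q) (hb : Continuous b) (hb0 : ∀ z, 0 ≤ b z)
    (hA : Measurable (Function.uncurry A)) (hAc : ∀ y, Continuous (A · y))
    (hA_mem : ∀ t y, A t y ∈ Ioc 0 M) (hD : 0 < D) (hDD' : D ≤ D') (n : ℕ) :
    0 ≤ (genRec D b A q)^[n] 0 ∧ (genRec D b A q)^[n] 0 ≤ (genRec D' b A q)^[n] 0 ∧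
      (genRec D' b A q)^[n] 0 ≤ 1 := by
  induction n with
  | zero => exact ⟨le_rfl, le_rfl, zero_le_one⟩
  | succ n ih =>
    obtain ⟨h0, hle, h1⟩ := ih
    have hD' : 0 < D' := hD.trans_le hDD'
    simp only [Function.iterate_succ']
    refine ⟨fun y => genRec_nonneg hq hb0 hD.le (hA_mem · y) fun w _ => h0 w,
      fun y => genRec_le_genRec hq hb hb0 (hAc y) (hA_mem · y) hD hDD'
        (measurable_iterate_genRec hb hA hAc hq.1 n) (measurable_iterate_genRec hb hA hAc hq.1 n)
        (fun w _ => h0 w) (fun w _ => hle w) fun w _ => h1 w,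
      fun y => ?_⟩
    calc genRec D' b A q ((genRec D' b A q)^[n] 0) y ≤ genRec D' b A q (fun _ => 1) y :=
          genRec_le_genRec hq hb hb0 (hAc y) (hA_mem · y) hD' le_rfl
            (measurable_iterate_genRec hb hA hAc hq.1 n) measurable_const
            (fun w _ => (h0 w).trans (hle w)) (fun w _ => h1 w) fun _ _ => le_rfl
      _ = 1 := genRec_one hq hb hb0 (hAc y) (hA_mem · y) hD'

lemma eqOn_iterate_genRec {b' : ℝ → ℝ} {A' : ℝ → ℝ → ℝ} {p : ℕ → ℝ → ℝ}
    (hb : EqOn b b' (Icc 0 M)) (hA : ∀ y ∈ Ioo 0 M, ∀ t, 0 ≤ t → A t y = A' t y)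
    (hA_mem : ∀ y ∈ Ioo 0 M, ∀ t, 0 ≤ t → A t y ∈ Ioc 0 M) (hp0 : ∀ x, p 0 x = 0)
    (hrec : ∀ n, ∀ x ∈ Ioo 0 M, p (n + 1) x = genRec D b A q (p n) x) (n : ℕ) :
    EqOn (p n) ((genRec D b' A' q)^[n] 0) (Ioo 0 M) := by
  induction n with
  | zero => exact fun x _ => hp0 x
  | succ n ih =>
    intro x hx
    rw [hrec n x hx, Function.iterate_succ_apply']
    exact genRec_congr hb (hA x hx) (hA_mem x hx) ih

end Iterates

theorem statement9_general (M : ℝ) (hM : 0 < M)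
    (q : ℝ → ℝ → ℝ) (hq : IsDivisionKernel M q)
    (b g : ℝ → ℝ)
    (hb_cont : ContinuousOn b (Set.Icc 0 M))
    (hb_nonneg : ∀ x ∈ Set.Icc (0:ℝ) M, 0 ≤ b x)
    (hg_cont : ContinuousOn g (Set.Icc 0 M))
    (hgM : g M = 0)
    (hg_pos : ∀ x ∈ Set.Ioo (0:ℝ) M, 0 < g x)
    (A : ℝ → ℝ → ℝ)
    (hA_mem : ∀ x ∈ Set.Ioo (0:ℝ) M, ∀ t : ℝ, 0 ≤ t → A t x ∈ Set.Ioc 0 M)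
    (hA_eq : ∀ x ∈ Set.Ioo (0:ℝ) M, ∀ t : ℝ, 0 ≤ t →
      A t x = x + ∫ u in (0:ℝ)..t, g (A u x))
    (D D' : ℝ) (hD : 0 < D) (hDD' : D ≤ D')
    (pD pD' : ℕ → ℝ → ℝ)
    (hpD0 : ∀ x : ℝ, pD 0 x = 0) (hpD'0 : ∀ x : ℝ, pD' 0 x = 0)
    (hrecD : ∀ n : ℕ, ∀ x ∈ Set.Ioo (0:ℝ) M, pD (n+1) x = genRec D b A q (pD n) x)
    (hrecD' : ∀ n : ℕ, ∀ x ∈ Set.Ioo (0:ℝ) M, pD' (n+1) x = genRec D' b A q (pD' n) x)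
    (x : ℝ) (hx : x ∈ Set.Ioo (0:ℝ) M)
    (LD LD' : ℝ)
    (hLD : Filter.Tendsto (fun n => pD n x) Filter.atTop (nhds LD))
    (hLD' : Filter.Tendsto (fun n => pD' n x) Filter.atTop (nhds LD')) :
    (∀ n : ℕ, pD n x ≤ pD' n x) ∧ LD ≤ LD' := by
  obtain ⟨b', hb'_cont, hb'_nonneg, hbb'⟩ :=
    exists_continuous_nonneg_eqOn_Icc hM.le hb_cont hb_nonneg
  have hg_nonneg : ∀ z ∈ Ioc 0 M, 0 ≤ g z := fun z hz =>
    hz.2.eq_or_lt.elim (fun h => h ▸ hgM.ge) fun h => (hg_pos z ⟨hz.1, h⟩).le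
  obtain ⟨A', hA'_meas, hA'_cont, hA'_mem, hA'A⟩ := exists_measurable_flow_extension hM hg_cont
    hg_pos hg_nonneg fun y hy => ⟨hA_mem y hy, hA_eq y hy⟩
  have hAA' : ∀ y ∈ Ioo 0 M, ∀ t, 0 ≤ t → A t y = A' t y := fun y hy t ht =>
    (hA'A y hy t ht).symm
  have hpD := eqOn_iterate_genRec hbb' hAA' hA_mem hpD0 hrecD
  have hpD' := eqOn_iterate_genRec hbb' hAA' hA_mem hpD'0 hrecD'
  have hmono : ∀ n, pD n x ≤ pD' n x := fun n => by
    rw [hpD n hx, hpD' n hx]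
    exact (iterate_genRec_mono hq hb'_cont hb'_nonneg hA'_meas hA'_cont hA'_mem hD hDD' n).2.1 x
  exact ⟨hmono, le_of_tendsto_of_tendsto' hLD hLD' hmono⟩

/-- Monotonicity of the extinction probability in the death rate: for `0 < D ≤ D'`,
`p^{S,D}_n(x) ≤ p^{S,D'}_n(x)` for every `n`, hence `p^{S,D}(x) ≤ p^{S,D'}(x)`. -/
theorem statement9 (M : ℝ) (hM : 0 < M)
    (q : ℝ → ℝ → ℝ) (hq : IsDivisionKernel M q)
    (b g : ℝ → ℝ)
    (hb_cont : ContinuousOn b (Set.Icc 0 M))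
    (hb_nonneg : ∀ x ∈ Set.Icc (0:ℝ) M, 0 ≤ b x)
    (hg_cont : ContinuousOn g (Set.Icc 0 M))
    (hg_diff : ContDiffOn ℝ 1 g (Set.Ioo 0 M))
    (hg0 : g 0 = 0) (hgM : g M = 0)
    (hg_pos : ∀ x ∈ Set.Ioo (0:ℝ) M, 0 < g x)
    (A : ℝ → ℝ → ℝ)
    (hA_mem : ∀ x ∈ Set.Ioo (0:ℝ) M, ∀ t : ℝ, 0 ≤ t → A t x ∈ Set.Ioc 0 M)
    (hA_eq : ∀ x ∈ Set.Ioo (0:ℝ) M, ∀ t : ℝ, 0 ≤ t →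
      A t x = x + ∫ u in (0:ℝ)..t, g (A u x))
    (D D' : ℝ) (hD : 0 < D) (hDD' : D ≤ D')
    (pD pD' : ℕ → ℝ → ℝ)
    (hpD0 : ∀ x : ℝ, pD 0 x = 0) (hpD'0 : ∀ x : ℝ, pD' 0 x = 0)
    (hrecD : ∀ n : ℕ, ∀ x ∈ Set.Ioo (0:ℝ) M, pD (n+1) x = genRec D b A q (pD n) x)
    (hrecD' : ∀ n : ℕ, ∀ x ∈ Set.Ioo (0:ℝ) M, pD' (n+1) x = genRec D' b A q (pD' n) x)
    (x : ℝ) (hx : x ∈ Set.Ioo (0:ℝ) M)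
    (LD LD' : ℝ)
    (hLD : Filter.Tendsto (fun n => pD n x) Filter.atTop (nhds LD))
    (hLD' : Filter.Tendsto (fun n => pD' n x) Filter.atTop (nhds LD')) :
    (∀ n : ℕ, pD n x ≤ pD' n x) ∧ LD ≤ LD' :=
  statement9_general M hM q hq b g hb_cont hb_nonneg hg_cont hgM hg_pos A hA_mem hA_eq D D' hD hDD'
    pD pD' hpD0 hpD'0 hrecD hrecD' x hx LD LD' hLD hLD'
end

section
/- Let S¹, S² be two parameter values such that g(S¹,y) ≤ g(S²,y) for all y ∈ [0,M] and (b(S²,y)+D)/g(S²,y) ≤ (b(S¹,y)+D)/g(S¹,y) for all y ∈ (0,M). Fix x ∈ (0,M) and X ≥ 0, and for i = 1,2 let T^{Sⁱ}_x(X) be the unique time T ≥ 0 with ∫_0^T (b(Sⁱ, A^{Sⁱ}_u(x)) + D) du = X. Then A^{S¹}_{T^{S¹}_x(X)}(x) ≤ A^{S²}_{T^{S²}_x(X)}(x). -/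
/-!
Write `ρᵢ = (bᵢ + D) / gᵢ`. Along a flow `φ` from `x`, the change of variables `y = φ u`
turns the cumulated rate `∫₀ᵀ (b (φ u) + D) du` into `∫ₓ^{φ T} ρ` as long as `φ T < M`.
If `z = A²_{T²}(x) = M` there is nothing to prove; otherwise `X = ∫ₓᶻ ρ₂`. Were
`A¹_{T¹}(x) > z`, flow 1 would pass through some `w ∈ (z, M)` before time `T¹`, whence
`X ≥ ∫ₓʷ ρ₁ ≥ ∫ₓʷ ρ₂ > ∫ₓᶻ ρ₂ = X`.
-/

open MeasureTheory Set Filter Topology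

theorem integrableOn_Ioc_of_forall_lt_of_bounded {E : Type*} [NormedAddCommGroup E]
    {f : ℝ → E} {a b C : ℝ} (hab : a ≤ b) (hf : ∀ t < b, IntegrableOn f (Ioc a t))
    (hbdd : ∀ t ∈ Ioc a b, ‖f t‖ ≤ C) : IntegrableOn f (Ioc a b) := by
  refine integrableOn_Ioc_of_intervalIntegral_norm_bounded_right (I := max C 0 * (b - a))
    (b := fun n : ℕ => b - 1 / (n + 1)) (l := atTop)
    (fun n => hf _ (sub_lt_self b Nat.one_div_pos_of_nat)) ?_ (Eventually.of_forall fun n => ?_)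
  · simpa using (tendsto_const_nhds (x := b)).sub tendsto_one_div_add_atTop_nhds_zero_nat
  · have hn : (0:ℝ) < 1 / (n + 1) := Nat.one_div_pos_of_nat
    calc (∫ u in Ioc a (b - 1 / (n + 1)), ‖f u‖)
        ≤ ‖∫ u in Ioc a (b - 1 / (n + 1)), ‖f u‖‖ := Real.le_norm_self _
      _ ≤ max C 0 * volume.real (Ioc a (b - 1 / (n + 1))) :=
        norm_setIntegral_le_of_norm_le_const measure_Ioc_lt_top fun u hu => by
          simpa using (hbdd u ⟨hu.1, by linarith [hu.2]⟩).trans (le_max_left C 0)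
      _ ≤ max C 0 * (b - a) := by
        gcongr
        rw [Real.volume_real_Ioc]
        exact max_le (by linarith) (sub_nonneg.2 hab)

theorem integral_lt_integral_of_pos_of_le {ρ₁ ρ₂ : ℝ → ℝ} {a b c : ℝ}
    (hρ₁ : ContinuousOn ρ₁ (Icc a c)) (hρ₂ : ContinuousOn ρ₂ (Icc a c))
    (hle : ∀ y ∈ Icc a c, ρ₂ y ≤ ρ₁ y) (hpos : ∀ y ∈ Ioo b c, 0 < ρ₂ y) (hab : a ≤ b)
    (hbc : b < c) : ∫ y in a..b, ρ₂ y < ∫ y in a..c, ρ₁ y := by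
  have hint : ∀ u v, Icc u v ⊆ Icc a c → u ≤ v → IntervalIntegrable ρ₂ volume u v :=
    fun u v huv h => (hρ₂.mono huv).intervalIntegrable_of_Icc h
  calc ∫ y in a..b, ρ₂ y
      < (∫ y in a..b, ρ₂ y) + ∫ y in b..c, ρ₂ y := lt_add_of_pos_right _
        (intervalIntegral.intervalIntegral_pos_of_pos_on
          (hint b c (Icc_subset_Icc_left hab) hbc.le) hpos hbc)
    _ = ∫ y in a..c, ρ₂ y := intervalIntegral.integral_add_adjacent_intervals
        (hint a b (Icc_subset_Icc_right hbc.le) hab) (hint b c (Icc_subset_Icc_left hab) hbc.le)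
    _ ≤ ∫ y in a..c, ρ₁ y := intervalIntegral.integral_mono_on (hab.trans hbc.le)
        (hint a c subset_rfl (hab.trans hbc.le)) (hρ₁.intervalIntegrable_of_Icc (hab.trans hbc.le))
        hle

theorem nonneg_of_mem_Ioc {g : ℝ → ℝ} {M y : ℝ} (hg_M : g M = 0)
    (hg_pos : ∀ y ∈ Ioo 0 M, 0 < g y) (hy : y ∈ Ioc 0 M) : 0 ≤ g y := by
  rcases hy.2.eq_or_lt with rfl | hyM
  · exact hg_M.ge
  · exact (hg_pos y ⟨hy.1, hyM⟩).le

theorem continuousOn_add_div {b g : ℝ → ℝ} {M D : ℝ} (hb : ContinuousOn b (Icc 0 M))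
    (hg : ContinuousOn g (Icc 0 M)) (hg_pos : ∀ y ∈ Ioo 0 M, 0 < g y) :
    ContinuousOn (fun y => (b y + D) / g y) (Ioo 0 M) :=
  ((hb.mono Ioo_subset_Icc_self).add continuousOn_const).div (hg.mono Ioo_subset_Icc_self)
    fun y hy => (hg_pos y hy).ne'

def IsIntegralSolution (g : ℝ → ℝ) (x : ℝ) (φ : ℝ → ℝ) : Prop :=
  ∀ t, 0 ≤ t → φ t = x + ∫ u in (0:ℝ)..t, g (φ u)

namespace IsIntegralSolution

variable {b g φ : ℝ → ℝ} {x M D : ℝ}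

theorem apply_zero (hφ : IsIntegralSolution g x φ) : φ 0 = x := by
  simpa using hφ 0 le_rfl

/-- Past the first time `τ` at which `g ∘ φ` stops being integrable, the integral in the
equation takes the junk value `0`, so `φ = x` there; with boundedness on `[0, τ)` this makes
`g ∘ φ` integrable on `[0, τ + 1]`, a contradiction. -/
theorem intervalIntegrable_of_bounded (hφ : IsIntegralSolution g x φ) {C : ℝ}
    (hbdd : ∀ t, 0 ≤ t → ‖g (φ t)‖ ≤ C) {T : ℝ} (hT : 0 ≤ T) :
    IntervalIntegrable (fun u => g (φ u)) volume 0 T := by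
  by_contra hbad
  set S := {t | 0 ≤ t ∧ ¬ IntervalIntegrable (fun u => g (φ u)) volume 0 t}
  have hS : S.Nonempty := ⟨T, hT, hbad⟩
  have hSbdd : BddBelow S := ⟨0, fun t ht => ht.1⟩
  set τ := sInf S
  have hτ : 0 ≤ τ := le_csInf hS fun t ht => ht.1
  have hbad_of_gt : ∀ t, τ < t → t ∈ S := by
    intro t ht
    obtain ⟨s, ⟨hs, hsbad⟩, hst⟩ := exists_lt_of_csInf_lt hS ht
    exact ⟨hs.trans hst.le, fun hint => hsbad (hint.mono_set (uIcc_subset_uIcc_left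
      (by rw [uIcc_of_le (hs.trans hst.le)]; exact ⟨hs, hst.le⟩)))⟩
  have hgood_of_lt : ∀ t, t < τ → IntegrableOn (fun u => g (φ u)) (Ioc 0 t) := by
    intro t ht
    rcases le_or_gt t 0 with ht0 | ht0
    · simp [Ioc_eq_empty_of_le ht0]
    · by_contra hbad_t
      exact ht.not_ge (csInf_le hSbdd ⟨ht0.le,
        fun hint => hbad_t ((intervalIntegrable_iff_integrableOn_Ioc_of_le ht0.le).1 hint)⟩)
  have hbefore : IntegrableOn (fun u => g (φ u)) (Ioc 0 τ) :=
    integrableOn_Ioc_of_forall_lt_of_bounded hτ hgood_of_lt fun t ht => hbdd t ht.1.le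
  have hafter : IntegrableOn (fun u => g (φ u)) (Ioc τ (τ + 1)) := by
    refine (integrableOn_const (C := g x) measure_Ioc_lt_top.ne).congr_fun
      (fun t ht => ?_) measurableSet_Ioc
    rw [hφ t (hτ.trans ht.1.le), intervalIntegral.integral_undef (hbad_of_gt t ht.1).2, add_zero]
  exact (hbad_of_gt (τ + 1) (lt_add_one τ)).2
    (((intervalIntegrable_iff_integrableOn_Ioc_of_le hτ).2 hbefore).trans
      ((intervalIntegrable_iff_integrableOn_Ioc_of_le (by linarith)).2 hafter))

theorem intervalIntegrable_of_isCompact (hφ : IsIntegralSolution g x φ) {K : Set ℝ}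
    (hK : IsCompact K) (hg : ContinuousOn g K) (hmem : ∀ t, 0 ≤ t → φ t ∈ K) {T : ℝ}
    (hT : 0 ≤ T) : IntervalIntegrable (fun u => g (φ u)) volume 0 T :=
  let ⟨_, hC⟩ := hK.exists_bound_of_continuousOn hg
  hφ.intervalIntegrable_of_bounded (fun t ht => hC _ (hmem t ht)) hT

theorem continuousOn_Icc (hφ : IsIntegralSolution g x φ)
    (hint : ∀ T, 0 ≤ T → IntervalIntegrable (fun u => g (φ u)) volume 0 T) {T : ℝ}
    (hT : 0 ≤ T) : ContinuousOn φ (Icc 0 T) := by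
  have := intervalIntegral.continuousOn_primitive_interval' (hint T hT) left_mem_uIcc
  rw [uIcc_of_le hT] at this
  exact (continuousOn_const.add this).congr fun t ht => hφ t ht.1

theorem le_apply (hφ : IsIntegralSolution g x φ) (hmono : MonotoneOn φ (Ici 0)) {t : ℝ}
    (ht : 0 ≤ t) : x ≤ φ t :=
  hφ.apply_zero ▸ hmono self_mem_Ici ht ht

theorem sub_eq_integral (hφ : IsIntegralSolution g x φ)
    (hint : ∀ T, 0 ≤ T → IntervalIntegrable (fun u => g (φ u)) volume 0 T) {s t : ℝ}
    (hs : 0 ≤ s) (ht : 0 ≤ t) : φ t - φ s = ∫ u in s..t, g (φ u) := by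
  rw [hφ t ht, hφ s hs, ← intervalIntegral.integral_interval_sub_left (hint t ht) (hint s hs)]
  ring

theorem monotoneOn (hφ : IsIntegralSolution g x φ)
    (hint : ∀ T, 0 ≤ T → IntervalIntegrable (fun u => g (φ u)) volume 0 T)
    (hg : ∀ t, 0 ≤ t → 0 ≤ g (φ t)) : MonotoneOn φ (Ici 0) := by
  intro s hs t ht hst
  have := hφ.sub_eq_integral hint hs ht
  have : 0 ≤ ∫ u in s..t, g (φ u) :=
    intervalIntegral.integral_nonneg hst fun u hu => hg u (le_trans hs hu.1)
  linarith

theorem hasDerivAt (hφ : IsIntegralSolution g x φ)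
    (hint : ∀ T, 0 ≤ T → IntervalIntegrable (fun u => g (φ u)) volume 0 T) {t : ℝ} (ht : 0 < t)
    (hgφ : ContinuousAt (fun u => g (φ u)) t) : HasDerivAt φ (g (φ t)) t := by
  have hmeas : StronglyMeasurableAtFilter (fun u => g (φ u)) (𝓝 t) :=
    ⟨Ioc 0 (t + 1), Ioc_mem_nhds ht (lt_add_one t),
      ((intervalIntegrable_iff_integrableOn_Ioc_of_le (by linarith)).1
        (hint (t + 1) (by linarith))).aestronglyMeasurable⟩
  refine ((intervalIntegral.integral_hasDerivAt_right (hint t ht.le) hmeas hgφ).const_add x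
    ).congr_of_eventuallyEq ?_
  filter_upwards [Ioi_mem_nhds ht] with s hs using hφ s (le_of_lt hs)

theorem integral_comp_eq_integral_div (hφ : IsIntegralSolution g x φ)
    (hint : ∀ T, 0 ≤ T → IntervalIntegrable (fun u => g (φ u)) volume 0 T)
    (hmono : MonotoneOn φ (Ici 0)) {h : ℝ → ℝ} {s : Set ℝ} {T : ℝ} (hT : 0 ≤ T)
    (hs : Icc x (φ T) ⊆ s) (hg : ContinuousOn g s) (hg0 : ∀ y ∈ s, g y ≠ 0)
    (hh : ContinuousOn h s) :
    ∫ u in (0:ℝ)..T, h (φ u) = ∫ y in x..φ T, h y / g y := by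
  have hmaps : MapsTo φ (Icc 0 T) s := fun u hu =>
    hs ⟨hφ.le_apply hmono hu.1, hmono hu.1 hT hu.2⟩
  have hφc := hφ.continuousOn_Icc hint hT
  have hdiv : ContinuousOn (fun y => h y / g y) s := hh.div hg hg0
  have hderiv : ∀ u ∈ Ioo (min 0 T) (max 0 T), HasDerivWithinAt φ (g (φ u)) (Ioi u) u := by
    rw [min_eq_left hT, max_eq_right hT]
    intro u hu
    exact (hφ.hasDerivAt hint hu.1 ((hg.comp hφc hmaps).continuousAt
      (Icc_mem_nhds hu.1 hu.2))).hasDerivWithinAt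
  rw [← hφ.apply_zero, ← intervalIntegral.integral_comp_mul_deriv''' (f := φ)
    (by rwa [uIcc_of_le hT]) hderiv]
  · refine intervalIntegral.integral_congr fun u hu => ?_
    rw [uIcc_of_le hT] at hu
    exact (div_mul_cancel₀ _ (hg0 _ (hmaps hu))).symm
  · rw [min_eq_left hT, max_eq_right hT]
    exact hdiv.mono (hmaps.mono_left Ioo_subset_Icc_self).image_subset
  · rw [uIcc_of_le hT]
    exact (hdiv.mono hmaps.image_subset).integrableOn_compact
      (isCompact_Icc.image_of_continuousOn hφc)
  · rw [uIcc_of_le hT]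
    exact ((hdiv.comp hφc hmaps).mul (hg.comp hφc hmaps)).integrableOn_compact isCompact_Icc

theorem integral_rate_eq (hφ : IsIntegralSolution g x φ)
    (hint : ∀ T, 0 ≤ T → IntervalIntegrable (fun u => g (φ u)) volume 0 T)
    (hmono : MonotoneOn φ (Ici 0)) (hx : 0 < x) (hb : ContinuousOn b (Icc 0 M))
    (hg : ContinuousOn g (Icc 0 M)) (hg_pos : ∀ y ∈ Ioo 0 M, 0 < g y) {T : ℝ} (hT : 0 ≤ T)
    (hTM : φ T < M) :
    ∫ u in (0:ℝ)..T, b (φ u) + D = ∫ y in x..φ T, (b y + D) / g y :=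
  hφ.integral_comp_eq_integral_div (h := fun y => b y + D) hint hmono hT
    (Icc_subset_Ioo hx hTM) (hg.mono Ioo_subset_Icc_self) (fun y hy => (hg_pos y hy).ne')
    ((hb.add continuousOn_const).mono Ioo_subset_Icc_self)

theorem integral_div_le_integral_rate (hφ : IsIntegralSolution g x φ)
    (hint : ∀ T, 0 ≤ T → IntervalIntegrable (fun u => g (φ u)) volume 0 T)
    (hmono : MonotoneOn φ (Ici 0)) (hmem : ∀ t, 0 ≤ t → φ t ∈ Icc 0 M) (hx : 0 < x)
    (hb : ContinuousOn b (Icc 0 M)) (hb_nonneg : ∀ y ∈ Icc 0 M, 0 ≤ b y) (hD : 0 ≤ D)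
    (hg : ContinuousOn g (Icc 0 M)) (hg_pos : ∀ y ∈ Ioo 0 M, 0 < g y) {T : ℝ} (hT : 0 ≤ T)
    {w : ℝ} (hxw : x ≤ w) (hwT : w ≤ φ T) (hwM : w < M) :
    ∫ y in x..w, (b y + D) / g y ≤ ∫ u in (0:ℝ)..T, b (φ u) + D := by
  have hφc := hφ.continuousOn_Icc hint hT
  obtain ⟨t, ht, rfl⟩ : w ∈ φ '' Icc 0 T :=
    intermediate_value_Icc hT hφc ⟨hφ.apply_zero ▸ hxw, hwT⟩
  rw [← hφ.integral_rate_eq hint hmono hx hb hg hg_pos ht.1 hwM]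
  refine intervalIntegral.integral_mono_interval le_rfl ht.1 ht.2
    (ae_restrict_of_forall_mem measurableSet_Ioc fun u hu =>
      add_nonneg (hb_nonneg _ (hmem u hu.1.le)) hD) ?_
  exact ((hb.comp hφc fun u hu => hmem u hu.1).add continuousOn_const).intervalIntegrable_of_Icc hT

end IsIntegralSolution

theorem statement10_general (M D : ℝ) (hD : 0 < D)
    (b1 g1 b2 g2 : ℝ → ℝ)
    (hb1_cont : ContinuousOn b1 (Set.Icc 0 M))
    (hb1_nonneg : ∀ x ∈ Set.Icc (0:ℝ) M, 0 ≤ b1 x)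
    (hb2_cont : ContinuousOn b2 (Set.Icc 0 M))
    (hb2_nonneg : ∀ x ∈ Set.Icc (0:ℝ) M, 0 ≤ b2 x)
    (hg1_cont : ContinuousOn g1 (Set.Icc 0 M))
    (hg1_M : g1 M = 0)
    (hg1_pos : ∀ x ∈ Set.Ioo (0:ℝ) M, 0 < g1 x)
    (hg2_cont : ContinuousOn g2 (Set.Icc 0 M))
    (hg2_M : g2 M = 0)
    (hg2_pos : ∀ x ∈ Set.Ioo (0:ℝ) M, 0 < g2 x)
    (A1 A2 : ℝ → ℝ → ℝ)
    (hA1_mem : ∀ x ∈ Set.Ioo (0:ℝ) M, ∀ t : ℝ, 0 ≤ t → A1 t x ∈ Set.Ioc 0 M)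
    (hA1_eq : ∀ x ∈ Set.Ioo (0:ℝ) M, ∀ t : ℝ, 0 ≤ t →
      A1 t x = x + ∫ u in (0:ℝ)..t, g1 (A1 u x))
    (hA2_mem : ∀ x ∈ Set.Ioo (0:ℝ) M, ∀ t : ℝ, 0 ≤ t → A2 t x ∈ Set.Ioc 0 M)
    (hA2_eq : ∀ x ∈ Set.Ioo (0:ℝ) M, ∀ t : ℝ, 0 ≤ t →
      A2 t x = x + ∫ u in (0:ℝ)..t, g2 (A2 u x))
    (hratio : ∀ y ∈ Set.Ioo (0:ℝ) M, (b2 y + D) / g2 y ≤ (b1 y + D) / g1 y)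
    (x : ℝ) (hx : x ∈ Set.Ioo (0:ℝ) M) (X : ℝ)
    (T1 T2 : ℝ) (hT1 : 0 ≤ T1) (hT2 : 0 ≤ T2)
    (hT1X : (∫ u in (0:ℝ)..T1, b1 (A1 u x) + D) = X)
    (hT2X : (∫ u in (0:ℝ)..T2, b2 (A2 u x) + D) = X) :
    A1 T1 x ≤ A2 T2 x := by
  have hφ1 : IsIntegralSolution g1 x (fun t => A1 t x) := hA1_eq x hx
  have hφ2 : IsIntegralSolution g2 x (fun t => A2 t x) := hA2_eq x hx
  have hmem1 t (ht : 0 ≤ t) : A1 t x ∈ Icc 0 M := Ioc_subset_Icc_self (hA1_mem x hx t ht)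
  have hmem2 t (ht : 0 ≤ t) : A2 t x ∈ Icc 0 M := Ioc_subset_Icc_self (hA2_mem x hx t ht)
  have hint1 T (hT : 0 ≤ T) := hφ1.intervalIntegrable_of_isCompact isCompact_Icc hg1_cont hmem1 hT
  have hint2 T (hT : 0 ≤ T) := hφ2.intervalIntegrable_of_isCompact isCompact_Icc hg2_cont hmem2 hT
  have hmono1 := hφ1.monotoneOn hint1 fun t ht =>
    nonneg_of_mem_Ioc hg1_M hg1_pos (hA1_mem x hx t ht)
  have hmono2 := hφ2.monotoneOn hint2 fun t ht =>
    nonneg_of_mem_Ioc hg2_M hg2_pos (hA2_mem x hx t ht)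
  rcases (hA2_mem x hx T2 hT2).2.eq_or_lt with hM2 | hlt2
  · exact hM2 ▸ (hA1_mem x hx T1 hT1).2
  by_contra! hlt
  obtain ⟨w, hzw, hwA⟩ := exists_between hlt
  have hxz : x ≤ A2 T2 x := hφ2.le_apply hmono2 hT2
  have hsub : Icc x w ⊆ Ioo 0 M := Icc_subset_Ioo hx.1 (hwA.trans_le (hA1_mem x hx T1 hT1).2)
  have hX2 : X = ∫ y in x..A2 T2 x, (b2 y + D) / g2 y :=
    hT2X ▸ hφ2.integral_rate_eq hint2 hmono2 hx.1 hb2_cont hg2_cont hg2_pos hT2 hlt2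
  have hX1 : ∫ y in x..w, (b1 y + D) / g1 y ≤ X := hT1X ▸ hφ1.integral_div_le_integral_rate
    hint1 hmono1 hmem1 hx.1 hb1_cont hb1_nonneg hD.le hg1_cont hg1_pos hT1 (hxz.trans hzw.le)
    hwA.le (hsub ⟨hxz.trans hzw.le, le_rfl⟩).2
  have hρ2_pos : ∀ y ∈ Ioo 0 M, 0 < (b2 y + D) / g2 y := fun y hy =>
    div_pos (add_pos_of_nonneg_of_pos (hb2_nonneg y (Ioo_subset_Icc_self hy)) hD) (hg2_pos y hy)
  have := integral_lt_integral_of_pos_of_le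
    ((continuousOn_add_div hb1_cont hg1_cont hg1_pos).mono hsub)
    ((continuousOn_add_div hb2_cont hg2_cont hg2_pos).mono hsub) (fun y hy => hratio y (hsub hy))
    (fun y hy => hρ2_pos y (hsub ⟨hxz.trans hy.1.le, hy.2.le⟩)) hxz hzw
  linarith

/-- Comparison of flows at equal cumulated event rate: if `g(S¹,·) ≤ g(S²,·)` and
`(b(S²,y)+D)/g(S²,y) ≤ (b(S¹,y)+D)/g(S¹,y)`, and `Tⁱ` satisfies
`∫_0^{Tⁱ} (b(Sⁱ, A^{Sⁱ}_u(x)) + D) du = X`, then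
`A^{S¹}_{T¹}(x) ≤ A^{S²}_{T²}(x)`. -/
theorem statement10 (M D : ℝ) (hM : 0 < M) (hD : 0 < D)
    (b1 g1 b2 g2 : ℝ → ℝ)
    (hb1_cont : ContinuousOn b1 (Set.Icc 0 M))
    (hb1_nonneg : ∀ x ∈ Set.Icc (0:ℝ) M, 0 ≤ b1 x)
    (hb2_cont : ContinuousOn b2 (Set.Icc 0 M))
    (hb2_nonneg : ∀ x ∈ Set.Icc (0:ℝ) M, 0 ≤ b2 x)
    (hg1_cont : ContinuousOn g1 (Set.Icc 0 M))
    (hg1_diff : ContDiffOn ℝ 1 g1 (Set.Ioo 0 M))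
    (hg1_0 : g1 0 = 0) (hg1_M : g1 M = 0)
    (hg1_pos : ∀ x ∈ Set.Ioo (0:ℝ) M, 0 < g1 x)
    (hg2_cont : ContinuousOn g2 (Set.Icc 0 M))
    (hg2_diff : ContDiffOn ℝ 1 g2 (Set.Ioo 0 M))
    (hg2_0 : g2 0 = 0) (hg2_M : g2 M = 0)
    (hg2_pos : ∀ x ∈ Set.Ioo (0:ℝ) M, 0 < g2 x)
    (A1 A2 : ℝ → ℝ → ℝ)
    (hA1_mem : ∀ x ∈ Set.Ioo (0:ℝ) M, ∀ t : ℝ, 0 ≤ t → A1 t x ∈ Set.Ioc 0 M)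
    (hA1_eq : ∀ x ∈ Set.Ioo (0:ℝ) M, ∀ t : ℝ, 0 ≤ t →
      A1 t x = x + ∫ u in (0:ℝ)..t, g1 (A1 u x))
    (hA2_mem : ∀ x ∈ Set.Ioo (0:ℝ) M, ∀ t : ℝ, 0 ≤ t → A2 t x ∈ Set.Ioc 0 M)
    (hA2_eq : ∀ x ∈ Set.Ioo (0:ℝ) M, ∀ t : ℝ, 0 ≤ t →
      A2 t x = x + ∫ u in (0:ℝ)..t, g2 (A2 u x))
    (hg_le : ∀ y ∈ Set.Icc (0:ℝ) M, g1 y ≤ g2 y)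
    (hratio : ∀ y ∈ Set.Ioo (0:ℝ) M, (b2 y + D) / g2 y ≤ (b1 y + D) / g1 y)
    (x : ℝ) (hx : x ∈ Set.Ioo (0:ℝ) M) (X : ℝ) (hX : 0 ≤ X)
    (T1 T2 : ℝ) (hT1 : 0 ≤ T1) (hT2 : 0 ≤ T2)
    (hT1X : (∫ u in (0:ℝ)..T1, b1 (A1 u x) + D) = X)
    (hT2X : (∫ u in (0:ℝ)..T2, b2 (A2 u x) + D) = X) :
    A1 T1 x ≤ A2 T2 x :=
  statement10_general M D hD b1 g1 b2 g2 hb1_cont hb1_nonneg hb2_cont hb2_nonneg hg1_cont hg1_M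
    hg1_pos hg2_cont hg2_M hg2_pos A1 A2 hA1_mem hA1_eq hA2_mem hA2_eq hratio x hx X T1 T2 hT1 hT2
    hT1X hT2X
end

section
/- Let q be a division kernel on [0,M] such that for each α ∈ [0,1] the map x ↦ q(x,α) is continuous on [0,M], and such that q(x,α) ≤ q̄(α) for all x, α for some integrable q̄ : [0,1] → [0,∞). Then there exists ε ∈ (0, M/2) such that inf_{x ∈ [ε, M−ε]} ∫_{ε/(M−2ε)}^{1/2} q(x,α) dα > 0. -/
open MeasureTheory Set Filter

/-- For a division kernel `q` which is continuous in `x` and dominated by an integrable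
function, there exists `ε ∈ (0, M/2)` such that
`inf_{x ∈ [ε, M−ε]} ∫_{ε/(M−2ε)}^{1/2} q(x,α) dα > 0`. -/
theorem statement13 (M : ℝ) (hM : 0 < M)
    (q : ℝ → ℝ → ℝ) (hq : IsDivisionKernel M q)
    (hq_cont : ∀ α ∈ Set.Icc (0:ℝ) 1, ContinuousOn (fun x => q x α) (Set.Icc 0 M))
    (qbar : ℝ → ℝ) (hqbar_int : MeasureTheory.IntegrableOn qbar (Set.Icc 0 1))
    (hqbar : ∀ x ∈ Set.Icc (0:ℝ) M, ∀ α ∈ Set.Icc (0:ℝ) 1, q x α ≤ qbar α) :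
    ∃ ε : ℝ, 0 < ε ∧ ε < M / 2 ∧
      ∃ c : ℝ, 0 < c ∧
        ∀ x ∈ Set.Icc ε (M - ε), c ≤ ∫ α in (ε / (M - 2 * ε))..(1/2 : ℝ), q x α := by
  obtain ⟨hmeas, hnn, hint1, hsym⟩ := hq
  -- nonnegativity of qbar on [0,1]
  have h0M : (0:ℝ) ∈ Set.Icc (0:ℝ) M := ⟨le_rfl, hM.le⟩
  have hqbar_nn : ∀ α ∈ Set.Icc (0:ℝ) 1, 0 ≤ qbar α := fun α hα =>
    (hnn 0 h0M α hα).trans (hqbar 0 h0M α hα)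
  -- integrability of q x on [0,1]
  have hqx_int : ∀ x ∈ Set.Icc (0:ℝ) M, IntegrableOn (q x) (Set.Icc 0 1) := by
    intro x hx
    have hm : AEStronglyMeasurable (q x) (volume.restrict (Set.Icc (0:ℝ) 1)) := by
      have : Measurable (q x) := hmeas.comp (measurable_const.prodMk measurable_id)
      exact this.aestronglyMeasurable
    refine hqbar_int.mono' hm ?_
    filter_upwards [ae_restrict_mem measurableSet_Icc] with α hα
    rw [Real.norm_eq_abs, abs_of_nonneg (hnn x hx α hα)]
    exact hqbar x hx α hα
  have hqbar_ii : IntervalIntegrable qbar volume 0 1 := by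
    rw [intervalIntegrable_iff_integrableOn_Icc_of_le zero_le_one]; exact hqbar_int
  have hqx_ii : ∀ x ∈ Set.Icc (0:ℝ) M, IntervalIntegrable (q x) volume 0 1 := by
    intro x hx
    rw [intervalIntegrable_iff_integrableOn_Icc_of_le zero_le_one]; exact hqx_int x hx
  have hqx_sub : ∀ x ∈ Set.Icc (0:ℝ) M, ∀ a b : ℝ, 0 ≤ a → a ≤ b → b ≤ 1 →
      IntervalIntegrable (q x) volume a b := by
    intro x hx a b h0a hab hb1
    apply (hqx_ii x hx).mono_set
    rw [Set.uIcc_of_le zero_le_one, Set.uIcc_of_le hab]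
    exact Set.Icc_subset_Icc h0a hb1
  have hqbar_sub : ∀ a b : ℝ, 0 ≤ a → a ≤ b → b ≤ 1 →
      IntervalIntegrable qbar volume a b := by
    intro a b h0a hab hb1
    apply hqbar_ii.mono_set
    rw [Set.uIcc_of_le zero_le_one, Set.uIcc_of_le hab]
    exact Set.Icc_subset_Icc h0a hb1
  -- half integral equals 1/2
  have hhalf : ∀ x ∈ Set.Icc (0:ℝ) M, (∫ α in (0:ℝ)..(1/2), q x α) = 1/2 := by
    intro x hx
    have hii1 : IntervalIntegrable (q x) volume 0 (1/2) :=
      hqx_sub x hx 0 (1/2) le_rfl (by norm_num) (by norm_num)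
    have hii2 : IntervalIntegrable (q x) volume (1/2) 1 :=
      hqx_sub x hx (1/2) 1 (by norm_num) (by norm_num) le_rfl
    have hadd : (∫ α in (0:ℝ)..(1/2), q x α) + (∫ α in (1/2:ℝ)..1, q x α)
        = ∫ α in (0:ℝ)..1, q x α := intervalIntegral.integral_add_adjacent_intervals hii1 hii2
    have hsymm : (∫ α in (1/2:ℝ)..1, q x α) = ∫ α in (0:ℝ)..(1/2), q x α := by
      have h1 : (∫ α in (0:ℝ)..(1/2), q x (1 - α)) = ∫ α in (1 - (1/2:ℝ))..(1 - 0), q x α :=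
        intervalIntegral.integral_comp_sub_left (q x) 1
      have h2 : (∫ α in (0:ℝ)..(1/2), q x (1 - α)) = ∫ α in (0:ℝ)..(1/2), q x α := by
        apply intervalIntegral.integral_congr
        intro α hα
        rw [Set.uIcc_of_le (by norm_num : (0:ℝ) ≤ 1/2)] at hα
        exact (hsym x hx α ⟨hα.1, hα.2.trans (by norm_num)⟩).symm
      rw [← h2, h1]; norm_num
    rw [hsymm, hint1 x hx] at hadd
    linarith
  -- the primitive of qbar is continuous, pick δ
  have hF : ContinuousOn (fun δ => ∫ t in (0:ℝ)..δ, qbar t) (Set.Icc (0:ℝ) 1) := by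
    have := intervalIntegral.continuousOn_primitive_interval
      (a := (0:ℝ)) (b := 1) (f := qbar) (μ := volume)
      (by rw [Set.uIcc_of_le zero_le_one]; exact hqbar_int)
    rwa [Set.uIcc_of_le zero_le_one] at this
  have hF0 : (∫ t in (0:ℝ)..(0:ℝ), qbar t) = 0 := intervalIntegral.integral_same
  have hev : ∀ᶠ δ in nhdsWithin (0:ℝ) (Set.Icc 0 1),
      (∫ t in (0:ℝ)..δ, qbar t) < 1/4 := by
    have htend : Tendsto (fun δ => ∫ t in (0:ℝ)..δ, qbar t)
        (nhdsWithin (0:ℝ) (Set.Icc 0 1)) (nhds (∫ t in (0:ℝ)..(0:ℝ), qbar t)) :=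
      hF 0 ⟨le_rfl, zero_le_one⟩
    rw [hF0] at htend
    exact htend (Iio_mem_nhds (by norm_num))
  have hne : (nhdsWithin (0:ℝ) (Set.Ioo 0 1)).NeBot := by
    rw [← mem_closure_iff_nhdsWithin_neBot, closure_Ioo one_ne_zero.symm]
    exact ⟨le_rfl, zero_le_one⟩
  have hev0 : ∀ᶠ δ in nhdsWithin (0:ℝ) (Set.Ioo 0 1),
      (∫ t in (0:ℝ)..δ, qbar t) < 1/4 := nhdsWithin_mono _ Set.Ioo_subset_Icc_self hev
  have hev' : ∀ᶠ δ in nhdsWithin (0:ℝ) (Set.Ioo 0 1),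
      (∫ t in (0:ℝ)..δ, qbar t) < 1/4 ∧ δ ∈ Set.Ioo (0:ℝ) 1 :=
    hev0.and eventually_mem_nhdsWithin
  obtain ⟨δ, hδF, hδmem⟩ := hev'.exists
  obtain ⟨hδ0, hδ1⟩ := hδmem
  -- choose ε
  set t : ℝ := min (δ/4) (1/4) with ht
  have ht0 : 0 < t := lt_min (by linarith) (by norm_num)
  have ht4 : t ≤ 1/4 := min_le_right _ _
  refine ⟨t * M, mul_pos ht0 hM, by nlinarith, 1/4, by norm_num, ?_⟩
  set a : ℝ := t * M / (M - 2 * (t * M)) with ha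
  have hden : M - 2 * (t * M) = (1 - 2*t) * M := by ring
  have hden0 : 0 < M - 2 * (t * M) := by rw [hden]; exact mul_pos (by linarith) hM
  have h2t : (1:ℝ) - 2*t ≠ 0 := (by linarith : (0:ℝ) < 1 - 2*t).ne'
  have ha_eq : a = t / (1 - 2*t) := by
    rw [ha, hden, mul_comm (1 - 2*t) M, mul_comm t M]
    exact mul_div_mul_left _ _ hM.ne'
  have ha0 : 0 < a := div_pos (mul_pos ht0 hM) hden0
  have ha_le2t : a ≤ 2 * t := by
    rw [ha_eq, div_le_iff₀ (by linarith : (0:ℝ) < 1 - 2*t)]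
    nlinarith
  have ha_half : a ≤ 1/2 := le_trans ha_le2t (by linarith)
  have ha_δ : a ≤ δ := le_trans ha_le2t (by
    have : t ≤ δ/4 := min_le_left _ _
    linarith)
  intro x hx
  have hxM : x ∈ Set.Icc (0:ℝ) M :=
    ⟨le_trans (mul_pos ht0 hM).le hx.1, le_trans hx.2 (by nlinarith)⟩
  -- split
  have hii_a : IntervalIntegrable (q x) volume 0 a :=
    hqx_sub x hxM 0 a le_rfl ha0.le (by linarith)
  have hii_b : IntervalIntegrable (q x) volume a (1/2) :=
    hqx_sub x hxM a (1/2) ha0.le ha_half (by norm_num)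
  have hsplit : (∫ α in (0:ℝ)..a, q x α) + (∫ α in a..(1/2:ℝ), q x α)
      = ∫ α in (0:ℝ)..(1/2), q x α :=
    intervalIntegral.integral_add_adjacent_intervals hii_a hii_b
  -- bound ∫_0^a q x by ∫_0^a qbar ≤ ∫_0^δ qbar < 1/4
  have hqbar_ii_a : IntervalIntegrable qbar volume 0 a :=
    hqbar_sub 0 a le_rfl ha0.le (by linarith)
  have hmono1 : (∫ α in (0:ℝ)..a, q x α) ≤ ∫ α in (0:ℝ)..a, qbar α := by
    apply intervalIntegral.integral_mono_on ha0.le hii_a hqbar_ii_a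
    intro α hα
    exact hqbar x hxM α ⟨hα.1, hα.2.trans (by linarith)⟩
  have hmono2 : (∫ α in (0:ℝ)..a, qbar α) ≤ ∫ α in (0:ℝ)..δ, qbar α := by
    apply intervalIntegral.integral_mono_interval le_rfl ha0.le ha_δ
    · filter_upwards [ae_restrict_mem measurableSet_Ioc] with α hα
      exact hqbar_nn α ⟨hα.1.le, hα.2.trans hδ1.le⟩
    · exact hqbar_sub 0 δ le_rfl hδ0.le hδ1.le
  have hh := hhalf x hxM
  linarith [hsplit, hmono1, hmono2, hδF, hh]
end

section
/- Let q be a division kernel on [0,M] satisfying Assumption (Q). Let f₁, f₂ : [0,M] → [0,∞) be bounded measurable non-increasing functions with f₁(z) ≥ f₂(z) for all z ∈ [0,M], and let 0 ≤ y₁ ≤ y₂ ≤ M. Then ∫_0^1 q(y₁,α) f₁(α y₁) f₁((1−α) y₁) dα ≥ ∫_0^1 q(y₂,α) f₂(α y₂) f₂((1−α) y₂) dα. -/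
open MeasureTheory Set Filter

namespace Statement18Aux

open MeasureTheory Set Filter
open scoped ENNReal NNReal

variable {M : ℝ} {q : ℝ → ℝ → ℝ}

lemma qy_meas (hq : IsDivisionKernel M q) (y : ℝ) : Measurable (q y) :=
  hq.1.of_uncurry_left

lemma qy_int (hq : IsDivisionKernel M q) {y : ℝ} (hy : y ∈ Icc 0 M) :
    IntegrableOn (q y) (Ioc 0 1) := by
  by_contra h
  have hni : ¬ IntervalIntegrable (q y) volume 0 1 := by
    rw [intervalIntegrable_iff_integrableOn_Ioc_of_le zero_le_one]; exact h
  have h0 := intervalIntegral.integral_undef hni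
  have h1 := hq.2.2.1 y hy
  rw [h0] at h1; norm_num at h1

lemma cdf_mono (hq : IsDivisionKernel M q) {y : ℝ} (hy : y ∈ Icc 0 M) {a b : ℝ}
    (ha : 0 ≤ a) (hab : a ≤ b) (hb : b ≤ 1) : cdf q y a ≤ cdf q y b := by
  have hIa : IntervalIntegrable (q y) volume 0 a :=
    (intervalIntegrable_iff_integrableOn_Ioc_of_le ha).2
      ((qy_int hq hy).mono_set (Ioc_subset_Ioc le_rfl (hab.trans hb)))
  have hIab : IntervalIntegrable (q y) volume a b :=
    (intervalIntegrable_iff_integrableOn_Ioc_of_le hab).2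
      ((qy_int hq hy).mono_set (Ioc_subset_Ioc ha hb))
  have hadd := intervalIntegral.integral_add_adjacent_intervals hIa hIab
  have hnn : 0 ≤ ∫ t in a..b, q y t :=
    intervalIntegral.integral_nonneg hab fun u hu => hq.2.1 y hy u ⟨ha.trans hu.1, hu.2.trans hb⟩
  unfold cdf
  linarith [hadd]

lemma cdf_zero (q : ℝ → ℝ → ℝ) (y : ℝ) : cdf q y 0 = 0 :=
  intervalIntegral.integral_same

lemma cdf_one (hq : IsDivisionKernel M q) {y : ℝ} (hy : y ∈ Icc 0 M) : cdf q y 1 = 1 :=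
  hq.2.2.1 y hy

lemma cdf_nonneg (hq : IsDivisionKernel M q) {y : ℝ} (hy : y ∈ Icc 0 M) {u : ℝ}
    (hu : u ∈ Icc (0:ℝ) 1) : 0 ≤ cdf q y u := by
  have := cdf_mono hq hy le_rfl hu.1 hu.2
  rwa [cdf_zero] at this

lemma cdf_le_one (hq : IsDivisionKernel M q) {y : ℝ} (hy : y ∈ Icc 0 M) {u : ℝ}
    (hu : u ∈ Icc (0:ℝ) 1) : cdf q y u ≤ 1 := by
  have := cdf_mono hq hy hu.1 hu.2 le_rfl
  rwa [cdf_one hq hy] at this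

lemma cdf_continuousOn (hq : IsDivisionKernel M q) {y : ℝ} (hy : y ∈ Icc 0 M) :
    ContinuousOn (cdf q y) (Icc 0 1) := by
  have hI : IntegrableOn (q y) (uIcc (0:ℝ) 1) := by
    rw [uIcc_of_le zero_le_one, integrableOn_Icc_iff_integrableOn_Ioc]
    exact qy_int hq hy
  have := intervalIntegral.continuousOn_primitive_interval hI
  rwa [uIcc_of_le zero_le_one] at this

lemma bddBelow_S (q : ℝ → ℝ → ℝ) (y v : ℝ) :
    BddBelow {u ∈ Icc (0:ℝ) 1 | v ≤ cdf q y u} :=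
  ⟨0, fun x hx => hx.1.1⟩

lemma one_mem_S (hq : IsDivisionKernel M q) {y : ℝ} (hy : y ∈ Icc 0 M) {v : ℝ} (hv : v ≤ 1) :
    (1:ℝ) ∈ {u ∈ Icc (0:ℝ) 1 | v ≤ cdf q y u} :=
  ⟨⟨zero_le_one, le_rfl⟩, by rw [cdf_one hq hy]; exact hv⟩

lemma cdfInv_nonneg (q : ℝ → ℝ → ℝ) (y v : ℝ) : 0 ≤ cdfInv q y v :=
  Real.sInf_nonneg fun x hx => hx.1.1

lemma cdfInv_le_one (hq : IsDivisionKernel M q) {y : ℝ} (hy : y ∈ Icc 0 M) {v : ℝ}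
    (hv : v ≤ 1) : cdfInv q y v ≤ 1 :=
  csInf_le (bddBelow_S q y v) (one_mem_S hq hy hv)

lemma cdfInv_mem (hq : IsDivisionKernel M q) {y : ℝ} (hy : y ∈ Icc 0 M) {v : ℝ}
    (hv : v ≤ 1) : cdfInv q y v ∈ Icc (0:ℝ) 1 :=
  ⟨cdfInv_nonneg q y v, cdfInv_le_one hq hy hv⟩

lemma cdfInv_le_iff (hq : IsDivisionKernel M q) {y : ℝ} (hy : y ∈ Icc 0 M) {v : ℝ}
    (hv : v ∈ Ioo (0:ℝ) 1) {u : ℝ} (hu : u ∈ Icc (0:ℝ) 1) :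
    cdfInv q y v ≤ u ↔ v ≤ cdf q y u := by
  constructor
  · intro h
    have hclosed : IsClosed {w ∈ Icc (0:ℝ) 1 | v ≤ cdf q y w} :=
      (cdf_continuousOn hq hy).preimage_isClosed_of_isClosed isClosed_Icc
        (isClosed_Ici (a := v))
    have hne : Set.Nonempty {w ∈ Icc (0:ℝ) 1 | v ≤ cdf q y w} := ⟨1, one_mem_S hq hy hv.2.le⟩
    have hmem := hclosed.csInf_mem hne (bddBelow_S q y v)
    exact hmem.2.trans (cdf_mono hq hy hmem.1.1 h hu.2)
  · intro h
    exact csInf_le (bddBelow_S q y v) ⟨hu, h⟩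

lemma cdfInv_mono (hq : IsDivisionKernel M q) {y : ℝ} (hy : y ∈ Icc 0 M) {v v' : ℝ}
    (hvv' : v ≤ v') (hv' : v' ≤ 1) : cdfInv q y v ≤ cdfInv q y v' :=
  csInf_le_csInf (bddBelow_S q y v) ⟨1, one_mem_S hq hy hv'⟩
    (fun u hu => ⟨hu.1, hvv'.trans hu.2⟩)

lemma cdfInv_aemeasurable (hq : IsDivisionKernel M q) {y : ℝ} (hy : y ∈ Icc 0 M) :
    AEMeasurable (cdfInv q y) (volume.restrict (Ioo 0 1)) := by
  have hmono : Monotone fun v => cdfInv q y (min v 1) := fun a b hab =>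
    cdfInv_mono hq hy (min_le_min hab le_rfl) (min_le_right _ _)
  refine hmono.measurable.aemeasurable.congr ?_
  exact (ae_restrict_mem measurableSet_Ioo).mono fun v hv => by
    simp [min_eq_left hv.2.le]

lemma qy_ae_nonneg (hq : IsDivisionKernel M q) {y : ℝ} (hy : y ∈ Icc 0 M) {u : ℝ}
    (hu : u ≤ 1) : ∀ᵐ α ∂(volume.restrict (Ioc (0:ℝ) u)), 0 ≤ q y α :=
  (ae_restrict_iff' measurableSet_Ioc).2
    (ae_of_all _ fun α hα => hq.2.1 y hy α ⟨hα.1.le, hα.2.trans hu⟩)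

lemma lint_eq (hq : IsDivisionKernel M q) {y : ℝ} (hy : y ∈ Icc 0 M) {u : ℝ}
    (hu0 : 0 ≤ u) (hu1 : u ≤ 1) :
    (∫⁻ α in Ioc (0:ℝ) u, ENNReal.ofReal (q y α)) = ENNReal.ofReal (cdf q y u) := by
  rw [← ofReal_integral_eq_lintegral_ofReal
      ((qy_int hq hy).mono_set (Ioc_subset_Ioc le_rfl hu1)) (qy_ae_nonneg hq hy hu1),
    cdf, intervalIntegral.integral_of_le hu0]

lemma map_cdfInv (hq : IsDivisionKernel M q) {y : ℝ} (hy : y ∈ Icc 0 M) :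
    Measure.map (cdfInv q y) (volume.restrict (Ioo 0 1)) =
      (volume.restrict (Ioc 0 1)).withDensity fun α => ENNReal.ofReal (q y α) := by
  haveI fin1 : IsFiniteMeasure
      ((volume.restrict (Ioc (0:ℝ) 1)).withDensity fun α => ENNReal.ofReal (q y α)) := by
    constructor
    rw [withDensity_apply _ MeasurableSet.univ, Measure.restrict_restrict MeasurableSet.univ,
      Set.univ_inter, lint_eq hq hy zero_le_one le_rfl]
    exact ENNReal.ofReal_lt_top
  haveI fin2 : IsFiniteMeasure (Measure.map (cdfInv q y) (volume.restrict (Ioo (0:ℝ) 1))) := by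
    constructor
    rw [Measure.map_apply_of_aemeasurable (cdfInv_aemeasurable hq hy) MeasurableSet.univ,
      Set.preimage_univ, Measure.restrict_apply_univ, Real.volume_Ioo]
    exact ENNReal.ofReal_lt_top
  refine Measure.ext_of_Iic _ _ fun u => ?_
  rw [Measure.map_apply_of_aemeasurable (cdfInv_aemeasurable hq hy) measurableSet_Iic,
    Measure.restrict_apply' measurableSet_Ioo,
    withDensity_apply _ measurableSet_Iic, Measure.restrict_restrict measurableSet_Iic]
  rcases lt_or_ge u 0 with hu | hu
  · have h1 : cdfInv q y ⁻¹' Iic u ∩ Ioo 0 1 = (∅ : Set ℝ) := by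
      ext v
      simp only [mem_inter_iff, mem_preimage, mem_Iic, mem_Ioo, mem_empty_iff_false, iff_false]
      rintro ⟨hle, -⟩
      exact absurd (le_trans (cdfInv_nonneg q y v) hle) (not_le.2 hu)
    have h2 : Iic u ∩ Ioc (0:ℝ) 1 = (∅ : Set ℝ) := by
      ext x
      simp only [mem_inter_iff, mem_Iic, mem_Ioc, mem_empty_iff_false, iff_false]
      rintro ⟨hle, hx, -⟩
      linarith
    rw [h1, h2]
    simp
  rcases le_or_gt u 1 with hu1 | hu1
  · have hset : cdfInv q y ⁻¹' Iic u ∩ Ioo 0 1 = Iic (cdf q y u) ∩ Ioo 0 1 := by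
      ext v
      simp only [mem_inter_iff, mem_preimage, mem_Iic, mem_Ioo]
      constructor
      · rintro ⟨h, hv⟩
        exact ⟨(cdfInv_le_iff hq hy ⟨hv.1, hv.2⟩ ⟨hu, hu1⟩).1 h, hv⟩
      · rintro ⟨h, hv⟩
        exact ⟨(cdfInv_le_iff hq hy ⟨hv.1, hv.2⟩ ⟨hu, hu1⟩).2 h, hv⟩
    have hset2 : Iic u ∩ Ioc (0:ℝ) 1 = Ioc 0 u := by
      ext x
      simp only [mem_inter_iff, mem_Iic, mem_Ioc]
      constructor
      · rintro ⟨h, hx, -⟩; exact ⟨hx, h⟩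
      · rintro ⟨hx, h⟩; exact ⟨h, hx, h.trans hu1⟩
    rw [hset, hset2, lint_eq hq hy hu hu1]
    have hc0 : 0 ≤ cdf q y u := cdf_nonneg hq hy ⟨hu, hu1⟩
    have hc1 : cdf q y u ≤ 1 := cdf_le_one hq hy ⟨hu, hu1⟩
    apply le_antisymm
    · calc volume (Iic (cdf q y u) ∩ Ioo 0 1) ≤ volume (Ioc 0 (cdf q y u)) :=
            measure_mono fun x hx => ⟨hx.2.1, hx.1⟩
        _ = ENNReal.ofReal (cdf q y u) := by rw [Real.volume_Ioc, sub_zero]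
    · calc ENNReal.ofReal (cdf q y u) = volume (Ioo 0 (cdf q y u)) := by
            rw [Real.volume_Ioo, sub_zero]
        _ ≤ volume (Iic (cdf q y u) ∩ Ioo 0 1) :=
            measure_mono fun x hx => ⟨hx.2.le, hx.1, lt_of_lt_of_le hx.2 hc1⟩
  · have hset : cdfInv q y ⁻¹' Iic u ∩ Ioo 0 1 = Ioo 0 1 :=
      inter_eq_right.2 fun v hv => (cdfInv_le_one hq hy hv.2.le).trans hu1.le
    have hset2 : Iic u ∩ Ioc (0:ℝ) 1 = Ioc 0 1 :=
      inter_eq_right.2 fun x hx => hx.2.trans hu1.le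
    rw [hset, hset2, lint_eq hq hy zero_le_one le_rfl, cdf_one hq hy, Real.volume_Ioo]
    norm_num

lemma key (hq : IsDivisionKernel M q) {y : ℝ} (hy : y ∈ Icc 0 M) {g : ℝ → ℝ}
    (hg : Measurable g) :
    (∫ α in (0:ℝ)..1, q y α * g α) = ∫ v in Ioo (0:ℝ) 1, g (cdfInv q y v) := by
  rw [intervalIntegral.integral_of_le zero_le_one]
  have h1 : (∫ α in Ioc (0:ℝ) 1, q y α * g α)
      = ∫ α, g α ∂((volume.restrict (Ioc (0:ℝ) 1)).withDensity
          fun α => ENNReal.ofReal (q y α)) := by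
    have hd : (fun α => ENNReal.ofReal (q y α))
        = fun α => ((q y α).toNNReal : ℝ≥0∞) := rfl
    rw [hd, integral_withDensity_eq_integral_smul₀ ((qy_meas hq y).real_toNNReal.aemeasurable) g]
    refine integral_congr_ae ((ae_restrict_iff' measurableSet_Ioc).2 (ae_of_all _ fun α hα => ?_))
    simp [NNReal.smul_def, Real.coe_toNNReal _ (hq.2.1 y hy α ⟨hα.1.le, hα.2⟩)]
  rw [h1, ← map_cdfInv hq hy,
    integral_map (cdfInv_aemeasurable hq hy) hg.aestronglyMeasurable]

lemma mem_args {c y : ℝ} (hc : c ∈ Icc (0:ℝ) 1) (hy : y ∈ Icc 0 M) : c * y ∈ Icc 0 M := by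
  constructor
  · exact mul_nonneg hc.1 hy.1
  · calc c * y ≤ 1 * M := mul_le_mul hc.2 hy.2 hy.1 zero_le_one
      _ = M := one_mul M

lemma one_sub_mem {c : ℝ} (hc : c ∈ Icc (0:ℝ) 1) : 1 - c ∈ Icc (0:ℝ) 1 :=
  ⟨by linarith [hc.2], by linarith [hc.1]⟩

end Statement18Aux

open Statement18Aux

/-- Two-function version of the comparison lemma: for non-increasing bounded measurable
`f₁ ≥ f₂ ≥ 0` on `[0,M]` and `0 ≤ y₁ ≤ y₂ ≤ M`,
`∫_0^1 q(y₁,α) f₁(αy₁) f₁((1−α)y₁) dα ≥ ∫_0^1 q(y₂,α) f₂(αy₂) f₂((1−α)y₂) dα`. -/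
theorem statement18 (M : ℝ) (hM : 0 < M) (q : ℝ → ℝ → ℝ)
    (hq : IsDivisionKernel M q) (hQ : AssumptionQ M q)
    (f₁ f₂ : ℝ → ℝ) (hf₁_meas : Measurable f₁) (hf₂_meas : Measurable f₂)
    (hf₁_bdd : ∃ C : ℝ, ∀ z ∈ Set.Icc (0:ℝ) M, f₁ z ≤ C)
    (hf₂_bdd : ∃ C : ℝ, ∀ z ∈ Set.Icc (0:ℝ) M, f₂ z ≤ C)
    (hf₁_nonneg : ∀ z ∈ Set.Icc (0:ℝ) M, 0 ≤ f₁ z)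
    (hf₂_nonneg : ∀ z ∈ Set.Icc (0:ℝ) M, 0 ≤ f₂ z)
    (hf₁_anti : AntitoneOn f₁ (Set.Icc 0 M))
    (hf₂_anti : AntitoneOn f₂ (Set.Icc 0 M))
    (hf₁₂ : ∀ z ∈ Set.Icc (0:ℝ) M, f₂ z ≤ f₁ z)
    (y₁ y₂ : ℝ) (hy₁ : 0 ≤ y₁) (hy₁₂ : y₁ ≤ y₂) (hy₂ : y₂ ≤ M) :
    (∫ α in (0:ℝ)..1, q y₂ α * f₂ (α * y₂) * f₂ ((1 - α) * y₂))
      ≤ ∫ α in (0:ℝ)..1, q y₁ α * f₁ (α * y₁) * f₁ ((1 - α) * y₁) := by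
  obtain ⟨C₁, hC₁⟩ := hf₁_bdd
  obtain ⟨C₂, hC₂⟩ := hf₂_bdd
  have h0M : (0:ℝ) ∈ Icc (0:ℝ) M := ⟨le_rfl, hM.le⟩
  have hy₁M : y₁ ∈ Icc (0:ℝ) M := ⟨hy₁, hy₁₂.trans hy₂⟩
  have hy₂M : y₂ ∈ Icc (0:ℝ) M := ⟨hy₁.trans hy₁₂, hy₂⟩
  set g₁ : ℝ → ℝ := fun α => f₁ (α * y₁) * f₁ ((1 - α) * y₁) with hg₁def
  set g₂ : ℝ → ℝ := fun α => f₂ (α * y₂) * f₂ ((1 - α) * y₂) with hg₂def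
  have hg₁_meas : Measurable g₁ :=
    (hf₁_meas.comp (measurable_id.mul_const y₁)).mul
      (hf₁_meas.comp ((measurable_const.sub measurable_id).mul_const y₁))
  have hg₂_meas : Measurable g₂ :=
    (hf₂_meas.comp (measurable_id.mul_const y₂)).mul
      (hf₂_meas.comp ((measurable_const.sub measurable_id).mul_const y₂))
  have e₁ : (∫ α in (0:ℝ)..1, q y₁ α * f₁ (α * y₁) * f₁ ((1 - α) * y₁))
      = ∫ v in Ioo (0:ℝ) 1, g₁ (cdfInv q y₁ v) := by
    rw [← key hq hy₁M hg₁_meas]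
    apply intervalIntegral.integral_congr
    intro α _
    simp [hg₁def, mul_assoc]
  have e₂ : (∫ α in (0:ℝ)..1, q y₂ α * f₂ (α * y₂) * f₂ ((1 - α) * y₂))
      = ∫ v in Ioo (0:ℝ) 1, g₂ (cdfInv q y₂ v) := by
    rw [← key hq hy₂M hg₂_meas]
    apply intervalIntegral.integral_congr
    intro α _
    simp [hg₂def, mul_assoc]
  rw [e₁, e₂]
  have hint : ∀ (y : ℝ), y ∈ Icc (0:ℝ) M → ∀ (f : ℝ → ℝ), Measurable f →
      ∀ C : ℝ, (∀ z ∈ Icc (0:ℝ) M, f z ≤ C) → (∀ z ∈ Icc (0:ℝ) M, 0 ≤ f z) →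
      IntegrableOn (fun v => f (cdfInv q y v * y) * f ((1 - cdfInv q y v) * y))
        (Ioo (0:ℝ) 1) volume := by
    intro y hyM f hf_meas C hC hnn
    have hC0 : (0:ℝ) ≤ C := (hnn 0 h0M).trans (hC 0 h0M)
    have haem : AEStronglyMeasurable
        (fun v => f (cdfInv q y v * y) * f ((1 - cdfInv q y v) * y))
        (volume.restrict (Ioo (0:ℝ) 1)) :=
      ((hf_meas.comp_aemeasurable ((cdfInv_aemeasurable hq hyM).mul_const y)).mul
        (hf_meas.comp_aemeasurable
          ((aemeasurable_const.sub (cdfInv_aemeasurable hq hyM)).mul_const y))).aestronglyMeasurable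
    refine Integrable.mono' (integrable_const (C * C)) haem ?_
    refine (ae_restrict_iff' measurableSet_Ioo).2 (ae_of_all _ fun v hv => ?_)
    have hc : cdfInv q y v ∈ Icc (0:ℝ) 1 := cdfInv_mem hq hyM hv.2.le
    have ha := mem_args hc hyM
    have hb := mem_args (one_sub_mem hc) hyM
    rw [Real.norm_eq_abs, abs_of_nonneg (mul_nonneg (hnn _ ha) (hnn _ hb))]
    exact mul_le_mul (hC _ ha) (hC _ hb) (hnn _ hb) hC0
  refine setIntegral_mono_on (hint y₂ hy₂M f₂ hf₂_meas C₂ hC₂ hf₂_nonneg)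
    (hint y₁ hy₁M f₁ hf₁_meas C₁ hC₁ hf₁_nonneg) measurableSet_Ioo fun v hv => ?_
  obtain ⟨hQ1, hQ2⟩ := hQ v hv y₁ y₂ hy₁ hy₁₂ hy₂
  have hc₁ : cdfInv q y₁ v ∈ Icc (0:ℝ) 1 := cdfInv_mem hq hy₁M hv.2.le
  have hc₂ : cdfInv q y₂ v ∈ Icc (0:ℝ) 1 := cdfInv_mem hq hy₂M hv.2.le
  have ha₁ := mem_args hc₁ hy₁M
  have ha₂ := mem_args hc₂ hy₂M
  have hb₁ := mem_args (one_sub_mem hc₁) hy₁M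
  have hb₂ := mem_args (one_sub_mem hc₂) hy₂M
  have h1 : cdfInv q y₁ v * y₁ ≤ cdfInv q y₂ v * y₂ := by
    rw [mul_comm, mul_comm (cdfInv q y₂ v)]; exact hQ1
  have h2 : (1 - cdfInv q y₁ v) * y₁ ≤ (1 - cdfInv q y₂ v) * y₂ := by
    rw [mul_comm, mul_comm (1 - cdfInv q y₂ v)]; exact hQ2
  have A : f₂ (cdfInv q y₂ v * y₂) ≤ f₁ (cdfInv q y₁ v * y₁) :=
    (hf₁₂ _ ha₂).trans (hf₁_anti ha₁ ha₂ h1)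
  have B : f₂ ((1 - cdfInv q y₂ v) * y₂) ≤ f₁ ((1 - cdfInv q y₁ v) * y₁) :=
    (hf₁₂ _ hb₂).trans (hf₁_anti hb₁ hb₂ h2)
  exact mul_le_mul A B (hf₂_nonneg _ hb₂) (hf₁_nonneg _ ha₁)
end

section
/- Let S¹ ≤ S² be two parameter values such that g(S¹,y) ≤ g(S²,y) for all y ∈ [0,M] and b(S,x) is non-decreasing in both S and x. Then for every x ∈ (0,M), p^{S¹}_1(x) ≥ p^{S²}_1(x), where p^S_1(x) = D ∫_0^∞ e^{−Dt − ∫_0^t b(S, A^S_u(x)) du} dt is the probability that the first event affecting the initial individual is a death. -/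
open MeasureTheory Set Filter
open scoped Topology

/-! Both trajectories start at `x` and are non-decreasing, and `g(S¹,·) ≤ g(S²,·)` with `g(S²,·)`
locally Lipschitz below `M`. At the last time `τ` before a hypothetical overtaking where the two
trajectories meet, their difference `d ≥ 0` satisfies `d' ≤ K d` on a short interval after `τ`,
so Grönwall's inequality forces `d = 0` there: hence `A^{S¹}_t(x) ≤ A^{S²}_t(x)` for all `t`.
Monotonicity of `b` then makes the cumulative division rate along the second trajectory larger,
so the integrand defining `p^{S²}_1(x)` is pointwise smaller. -/

section Primitive

variable {E : Type*} [NormedAddCommGroup E] [NormedSpace ℝ E] [CompleteSpace E]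

theorem hasDerivWithinAt_integral_of_continuousOn_Ici {f : ℝ → E} {a t : ℝ}
    (hf : ContinuousOn f (Ici a)) (ht : a ≤ t) :
    HasDerivWithinAt (fun s => ∫ u in a..s, f u) (f t) (Ici a) t := by
  have hcont : Continuous fun u => f (max a u) :=
    hf.comp_continuous (continuous_const.max continuous_id) fun u => le_max_left a u
  have heq : ∀ s, a ≤ s → ∫ u in a..s, f (max a u) = ∫ u in a..s, f u := fun s hs =>
    intervalIntegral.integral_congr fun u hu => by
      rw [uIcc_of_le hs] at hu
      simp only [max_eq_right hu.1]
  have h := (hcont.integral_hasStrictDerivAt a t).hasDerivAt.hasDerivWithinAt (s := Ici a)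
  rw [max_eq_right ht] at h
  exact h.congr (fun s hs => (heq s hs).symm) (heq t ht).symm

end Primitive

theorem continuousOn_Icc_of_eq_add_integral {a f : ℝ → ℝ} {x s : ℝ} (hs : 0 ≤ s)
    (hf : IntervalIntegrable f volume 0 s)
    (ha : ∀ t ∈ Icc 0 s, a t = x + ∫ u in (0:ℝ)..t, f u) : ContinuousOn a (Icc 0 s) := by
  have h := intervalIntegral.continuousOn_primitive_interval' hf left_mem_uIcc
  rw [uIcc_of_le hs] at h
  exact (continuousOn_const.add h).congr ha

section IntegralEquation

variable {K : Set ℝ} {G a : ℝ → ℝ} {x : ℝ}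

theorem intervalIntegrable_of_eq_add_integral (hK : IsCompact K) (hG : ContinuousOn G K)
    (ha_mem : ∀ t, 0 ≤ t → a t ∈ K)
    (ha_eq : ∀ t, 0 ≤ t → a t = x + ∫ u in (0:ℝ)..t, G (a u)) {t : ℝ} (ht : 0 ≤ t) :
    IntervalIntegrable (fun u => G (a u)) volume 0 t := by
  set f := fun u => G (a u)
  obtain ⟨C, hC⟩ := hK.exists_bound_of_continuousOn hG
  set I := {s | 0 ≤ s ∧ IntervalIntegrable f volume 0 s}
  by_contra hnot
  have hbdd : BddAbove I := ⟨t, fun s hs => le_of_not_gt fun hts =>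
    hnot (hs.2.mono_set (uIcc_subset_uIcc left_mem_uIcc (mem_uIcc_of_le ht hts.le)))⟩
  have hI0 : (0 : ℝ) ∈ I := ⟨le_rfl, .refl⟩
  set T := sSup I
  have hT0 : 0 ≤ T := le_csSup hbdd hI0
  -- Past `T` the integral in `ha_eq` takes its junk value `0`, so `a` is constant there.
  have hf_const : ∀ s, T < s → f s = G x := fun s hs => by
    have hs' : ¬ IntervalIntegrable f volume 0 s := fun h =>
      (le_csSup hbdd ⟨hT0.trans hs.le, h⟩).not_gt hs
    simp only [f]
    rw [ha_eq s (hT0.trans hs.le), intervalIntegral.integral_undef hs', add_zero]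
  have hf_cont : ContinuousOn f (Ioo 0 T) := fun u hu => by
    obtain ⟨s, hs, hus⟩ := exists_lt_of_lt_csSup ⟨0, hI0⟩ hu.2
    have h := hG.comp (continuousOn_Icc_of_eq_add_integral hs.1 hs.2 fun r hr => ha_eq r hr.1)
      fun r hr => ha_mem r hr.1
    exact (h.continuousAt (Icc_mem_nhds hu.1 hus)).continuousWithinAt
  have hf_T : IntegrableOn f (Ioc 0 T) := by
    refine (IntegrableOn.of_bound measure_Ioo_lt_top
      (hf_cont.aestronglyMeasurable measurableSet_Ioo) C ?_).congr_set_ae Ioo_ae_eq_Ioc.symm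
    exact ae_restrict_of_forall_mem measurableSet_Ioo fun u hu => hC _ (ha_mem u hu.1.le)
  have hf_T1 : IntegrableOn f (Ioc T (T + 1)) :=
    (integrableOn_const measure_Ioc_lt_top.ne).congr_fun (fun u hu => (hf_const u hu.1).symm)
      measurableSet_Ioc
  have hT1 : T + 1 ∈ I := by
    refine ⟨by linarith, (intervalIntegrable_iff_integrableOn_Ioc_of_le (by linarith)).2 ?_⟩
    rw [← Ioc_union_Ioc_eq_Ioc hT0 (by linarith)]
    exact hf_T.union hf_T1
  linarith [le_csSup hbdd hT1]

theorem continuousOn_Ici_of_eq_add_integral (hK : IsCompact K) (hG : ContinuousOn G K)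
    (ha_mem : ∀ t, 0 ≤ t → a t ∈ K)
    (ha_eq : ∀ t, 0 ≤ t → a t = x + ∫ u in (0:ℝ)..t, G (a u)) : ContinuousOn a (Ici 0) := by
  intro t (ht : 0 ≤ t)
  have h := continuousOn_Icc_of_eq_add_integral (by linarith : (0 : ℝ) ≤ t + 1)
    (intervalIntegrable_of_eq_add_integral hK hG ha_mem ha_eq (by linarith))
    fun s hs => ha_eq s hs.1
  have hnhds : Icc 0 (t + 1) ∈ 𝓝[Ici 0] t := by
    rw [← Ici_inter_Iic]
    exact inter_mem_nhdsWithin _ (Iic_mem_nhds (lt_add_one t))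
  exact (h t ⟨ht, by linarith⟩).mono_of_mem_nhdsWithin hnhds

theorem hasDerivWithinAt_of_eq_add_integral (hK : IsCompact K) (hG : ContinuousOn G K)
    (ha_mem : ∀ t, 0 ≤ t → a t ∈ K)
    (ha_eq : ∀ t, 0 ≤ t → a t = x + ∫ u in (0:ℝ)..t, G (a u)) {t : ℝ} (ht : 0 ≤ t) :
    HasDerivWithinAt a (G (a t)) (Ici 0) t := by
  have hf : ContinuousOn (fun u => G (a u)) (Ici 0) :=
    hG.comp (continuousOn_Ici_of_eq_add_integral hK hG ha_mem ha_eq) fun u hu => ha_mem u hu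
  exact ((hasDerivWithinAt_integral_of_continuousOn_Ici hf ht).const_add x).congr
    (fun s hs => ha_eq s hs) (ha_eq t ht)

theorem monotoneOn_of_eq_add_integral (hK : IsCompact K) (hG : ContinuousOn G K)
    (ha_mem : ∀ t, 0 ≤ t → a t ∈ K)
    (ha_eq : ∀ t, 0 ≤ t → a t = x + ∫ u in (0:ℝ)..t, G (a u))
    (hG_nonneg : ∀ t, 0 ≤ t → 0 ≤ G (a t)) : MonotoneOn a (Ici 0) := by
  refine monotoneOn_of_hasDerivWithinAt_nonneg (f' := fun t => G (a t)) (convex_Ici 0)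
    (continuousOn_Ici_of_eq_add_integral hK hG ha_mem ha_eq) (fun t ht => ?_) fun t ht => ?_
  · rw [interior_Ici] at ht ⊢
    exact (hasDerivWithinAt_of_eq_add_integral hK hG ha_mem ha_eq ht.le).mono Ioi_subset_Ici_self
  · rw [interior_Ici] at ht
    exact hG_nonneg t ht.le

end IntegralEquation

theorem nonpos_of_hasDerivWithinAt_le_mul {d d' : ℝ → ℝ} {K τ σ : ℝ}
    (hd : ContinuousOn d (Icc τ σ)) (hd' : ∀ s ∈ Ico τ σ, HasDerivWithinAt d (d' s) (Ici s) s)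
    (hτ : d τ ≤ 0) (bound : ∀ s ∈ Ico τ σ, d' s ≤ K * d s) : ∀ s ∈ Icc τ σ, d s ≤ 0 := by
  intro s hs
  have h := le_gronwallBound_of_liminf_deriv_right_le (ε := 0) hd
    (fun s hs r hr => by
      simpa only [slope_def_field, div_eq_inv_mul] using (hd' s hs).liminf_right_slope_le hr)
    hτ (fun s hs => by simpa only [add_zero] using bound s hs) s hs
  rwa [gronwallBound_ε0_δ0] at h

theorem exists_last_zero {d : ℝ → ℝ} {a b : ℝ} (hab : a ≤ b) (hd : ContinuousOn d (Icc a b))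
    (ha : d a ≤ 0) (hb : 0 < d b) : ∃ τ ∈ Ico a b, d τ = 0 ∧ ∀ s ∈ Ioc τ b, 0 < d s := by
  set Z := Icc a b ∩ d ⁻¹' {0}
  have hZ_closed : IsClosed Z := hd.preimage_isClosed_of_isClosed isClosed_Icc isClosed_singleton
  have hZ_bdd : BddAbove Z := ⟨b, fun s hs => hs.1.2⟩
  obtain ⟨r, hr, hr0⟩ := intermediate_value_Icc hab hd ⟨ha, hb.le⟩
  have hτ : sSup Z ∈ Z := hZ_closed.csSup_mem ⟨r, hr, hr0⟩ hZ_bdd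
  refine ⟨sSup Z, ⟨hτ.1.1, hτ.1.2.lt_of_ne fun h => ?_⟩, hτ.2, fun s hs => ?_⟩
  · exact hb.ne' (h ▸ hτ.2)
  · by_contra! hs0
    obtain ⟨r, hr, hr0⟩ := intermediate_value_Icc hs.2 (hd.mono (Icc_subset_Icc_left
      (hτ.1.1.trans hs.1.le))) ⟨hs0, hb.le⟩
    have : r ≤ sSup Z := le_csSup hZ_bdd ⟨⟨hτ.1.1.trans (hs.1.le.trans hr.1), hr.2⟩, hr0⟩
    linarith [hs.1, hr.1]

theorem le_of_hasDerivWithinAt_of_lipschitzOnWith {M x : ℝ} {G₁ G₂ a₁ a₂ : ℝ → ℝ}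
    (hG : ∀ y ∈ Icc x M, G₁ y ≤ G₂ y) (hG₂ : ∀ m < M, ∃ K, LipschitzOnWith K G₂ (Icc x m))
    (ha₁ : ContinuousOn a₁ (Ici 0)) (ha₂ : ContinuousOn a₂ (Ici 0))
    (ha₁' : ∀ t, 0 ≤ t → HasDerivWithinAt a₁ (G₁ (a₁ t)) (Ici t) t)
    (ha₂' : ∀ t, 0 ≤ t → HasDerivWithinAt a₂ (G₂ (a₂ t)) (Ici t) t)
    (h0 : a₁ 0 ≤ a₂ 0) (ha₁_le : ∀ t, 0 ≤ t → a₁ t ≤ M) (ha₂_ge : ∀ t, 0 ≤ t → x ≤ a₂ t)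
    (ha₂_mono : MonotoneOn a₂ (Ici 0)) {t : ℝ} (ht : 0 ≤ t) : a₁ t ≤ a₂ t := by
  by_contra! hlt
  set d := fun s => a₁ s - a₂ s
  have hd : ContinuousOn d (Ici 0) := ha₁.sub ha₂
  obtain ⟨τ, ⟨hτ0, hτt⟩, hdτ, hpos⟩ := exists_last_zero ht (hd.mono Icc_subset_Ici_self)
    (sub_nonpos.2 h0) (sub_pos.2 hlt)
  obtain ⟨m, hm, hmM⟩ := exists_between (hlt.trans_le (ha₁_le t ht))
  obtain ⟨K, hK⟩ := hG₂ m hmM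
  obtain ⟨σ, ⟨hτσ, hσt⟩, hσ⟩ : ∃ σ ∈ Ioc τ t, ∀ s ∈ Icc τ σ, a₁ s ≤ m := by
    have hτm : a₁ τ < m := by
      have : a₁ τ = a₂ τ := sub_eq_zero.1 hdτ
      linarith [ha₂_mono (show (0 : ℝ) ≤ τ from hτ0) ht hτt.le]
    have h := ((ha₁ τ hτ0).mono (Ici_subset_Ici.2 hτ0)) (Iio_mem_nhds hτm)
    obtain ⟨u, hu, hsub⟩ := mem_nhdsGE_iff_exists_Icc_subset.1 h
    exact ⟨min u t, ⟨lt_min hu hτt, min_le_right u t⟩,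
      fun s hs => (hsub ⟨hs.1, hs.2.trans (min_le_left u t)⟩).le⟩
  have hd_nonpos := nonpos_of_hasDerivWithinAt_le_mul (d := d) (K := K)
    (hd.mono (Icc_subset_Ici_iff (hτσ.le) |>.2 hτ0))
    (fun s hs => (ha₁' s (hτ0.trans hs.1)).sub (ha₂' s (hτ0.trans hs.1))) hdτ.le
    (fun s hs => ?_) σ ⟨hτσ.le, le_rfl⟩
  · exact (hpos σ ⟨hτσ, hσt⟩).not_ge hd_nonpos
  have hds : 0 ≤ d s := hs.1.eq_or_lt.elim (fun h => h ▸ hdτ.ge)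
    fun h => (hpos s ⟨h, hs.2.le.trans hσt⟩).le
  have ha₂₁ : a₂ s ≤ a₁ s := sub_nonneg.1 hds
  have ha₁s : a₁ s ≤ m := hσ s ⟨hs.1, hs.2.le⟩
  have ha₂s : a₂ s ∈ Icc x m := ⟨ha₂_ge s (hτ0.trans hs.1), ha₂₁.trans ha₁s⟩
  have ha₁s' : a₁ s ∈ Icc x m := ⟨ha₂s.1.trans ha₂₁, ha₁s⟩
  have hlip := hK.dist_le_mul _ ha₁s' _ ha₂s
  rw [Real.dist_eq, Real.dist_eq, abs_of_nonneg hds] at hlip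
  calc G₁ (a₁ s) - G₂ (a₂ s) ≤ G₂ (a₁ s) - G₂ (a₂ s) :=
        sub_le_sub_right (hG _ ⟨ha₁s'.1, ha₁s.trans hmM.le⟩) _
    _ ≤ K * d s := (le_abs_self _).trans hlip

theorem le_of_eq_add_integral {M x : ℝ} {G₁ G₂ a₁ a₂ : ℝ → ℝ} (hx : 0 < x)
    (hG₁ : ContinuousOn G₁ (Icc 0 M)) (hG₂ : ContinuousOn G₂ (Icc 0 M))
    (hG₂_diff : ContDiffOn ℝ 1 G₂ (Ioo 0 M)) (hG₂_nonneg : ∀ y ∈ Ioc 0 M, 0 ≤ G₂ y)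
    (hG : ∀ y ∈ Icc 0 M, G₁ y ≤ G₂ y)
    (ha₁ : ∀ t, 0 ≤ t → a₁ t ∈ Ioc 0 M) (ha₂ : ∀ t, 0 ≤ t → a₂ t ∈ Ioc 0 M)
    (ha₁_eq : ∀ t, 0 ≤ t → a₁ t = x + ∫ u in (0:ℝ)..t, G₁ (a₁ u))
    (ha₂_eq : ∀ t, 0 ≤ t → a₂ t = x + ∫ u in (0:ℝ)..t, G₂ (a₂ u)) {t : ℝ} (ht : 0 ≤ t) :
    a₁ t ≤ a₂ t := by
  have hmem₁ : ∀ t, 0 ≤ t → a₁ t ∈ Icc 0 M := fun t ht => Ioc_subset_Icc_self (ha₁ t ht)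
  have hmem₂ : ∀ t, 0 ≤ t → a₂ t ∈ Icc 0 M := fun t ht => Ioc_subset_Icc_self (ha₂ t ht)
  have ha₁0 : a₁ 0 = x := by simpa using ha₁_eq 0 le_rfl
  have ha₂0 : a₂ 0 = x := by simpa using ha₂_eq 0 le_rfl
  have hmono := monotoneOn_of_eq_add_integral isCompact_Icc hG₂ hmem₂ ha₂_eq
    fun t ht => hG₂_nonneg _ (ha₂ t ht)
  refine le_of_hasDerivWithinAt_of_lipschitzOnWith (fun y hy => hG y ⟨hx.le.trans hy.1, hy.2⟩)
    (fun m hm => ?_) (continuousOn_Ici_of_eq_add_integral isCompact_Icc hG₁ hmem₁ ha₁_eq)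
    (continuousOn_Ici_of_eq_add_integral isCompact_Icc hG₂ hmem₂ ha₂_eq)
    (fun s hs => (hasDerivWithinAt_of_eq_add_integral isCompact_Icc hG₁ hmem₁ ha₁_eq hs).mono
      (Ici_subset_Ici.2 hs))
    (fun s hs => (hasDerivWithinAt_of_eq_add_integral isCompact_Icc hG₂ hmem₂ ha₂_eq hs).mono
      (Ici_subset_Ici.2 hs))
    (by rw [ha₁0, ha₂0]) (fun s hs => (ha₁ s hs).2)
    (fun s hs => ha₂0 ▸ hmono (le_refl (0 : ℝ)) hs hs) hmono ht
  exact (hG₂_diff.mono fun y hy => ⟨hx.trans_le hy.1, hy.2.trans_lt hm⟩).exists_lipschitzOnWith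
    one_ne_zero (convex_Icc x m) isCompact_Icc

/-- `p^S_1(x) = firstDeathProb D (fun u => b S (A^S_u x))`. -/
noncomputable def firstDeathProb (D : ℝ) (β : ℝ → ℝ) : ℝ :=
  D * ∫ t in Ioi 0, Real.exp (-(D * t) - ∫ u in (0:ℝ)..t, β u)

theorem firstDeathProb_le_of_le {D : ℝ} (hD : 0 < D) {β₁ β₂ : ℝ → ℝ}
    (hβ₁ : ContinuousOn β₁ (Ici 0)) (hβ₂ : ContinuousOn β₂ (Ici 0))
    (hβ₁_nonneg : ∀ t, 0 ≤ t → 0 ≤ β₁ t) (hβ : ∀ t, 0 ≤ t → β₁ t ≤ β₂ t) :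
    firstDeathProb D β₂ ≤ firstDeathProb D β₁ := by
  have hsub : ∀ t : ℝ, 0 ≤ t → uIcc 0 t ⊆ Ici 0 := fun t ht => by
    rw [uIcc_of_le ht]; exact Icc_subset_Ici_self
  have hexponent : ContinuousOn (fun t => -(D * t) - ∫ u in (0:ℝ)..t, β₁ u) (Ici 0) :=
    (continuous_const.mul continuous_id).neg.continuousOn.sub fun t ht =>
      (hasDerivWithinAt_integral_of_continuousOn_Ici hβ₁ ht).continuousWithinAt
  have hint : IntegrableOn (fun t => Real.exp (-(D * t) - ∫ u in (0:ℝ)..t, β₁ u)) (Ioi 0) := by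
    refine (exp_neg_integrableOn_Ioi 0 hD).mono'
      ((Real.continuous_exp.comp_continuousOn hexponent).mono Ioi_subset_Ici_self
        |>.aestronglyMeasurable measurableSet_Ioi)
      (ae_restrict_of_forall_mem measurableSet_Ioi fun t (ht : 0 < t) => ?_)
    have : 0 ≤ ∫ u in (0:ℝ)..t, β₁ u :=
      intervalIntegral.integral_nonneg ht.le fun u hu => hβ₁_nonneg u hu.1
    rw [Real.norm_eq_abs, Real.abs_exp, Real.exp_le_exp]
    linarith
  refine mul_le_mul_of_nonneg_left (integral_mono_of_nonneg
    (ae_of_all _ fun t => (Real.exp_pos _).le) hint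
    (ae_restrict_of_forall_mem measurableSet_Ioi fun t (ht : 0 < t) => ?_)) hD.le
  have : ∫ u in (0:ℝ)..t, β₁ u ≤ ∫ u in (0:ℝ)..t, β₂ u :=
    intervalIntegral.integral_mono_on ht.le ((hβ₁.mono (hsub t ht.le)).intervalIntegrable)
      ((hβ₂.mono (hsub t ht.le)).intervalIntegrable) fun u hu => hβ u hu.1
  exact Real.exp_le_exp.2 (by linarith)

theorem statement19_general (M D : ℝ) (hD : 0 < D)
    (S1 S2 : ℝ) (hS1 : 0 < S1) (hS12 : S1 ≤ S2)
    (b : ℝ → ℝ → ℝ) (g : ℝ → ℝ → ℝ)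
    (hb_cont : ∀ S : ℝ, 0 < S → ContinuousOn (b S) (Set.Icc 0 M))
    (hb_nonneg : ∀ S : ℝ, 0 < S → ∀ x ∈ Set.Icc (0:ℝ) M, 0 ≤ b S x)
    (hb_monoS : ∀ x ∈ Set.Icc (0:ℝ) M, ∀ Sa Sb : ℝ, 0 < Sa → Sa ≤ Sb → b Sa x ≤ b Sb x)
    (hb_monox : ∀ S : ℝ, 0 < S → MonotoneOn (b S) (Set.Icc 0 M))
    (hg_cont : ∀ S : ℝ, 0 < S → ContinuousOn (g S) (Set.Icc 0 M))
    (hg_diff : ∀ S : ℝ, 0 < S → ContDiffOn ℝ 1 (g S) (Set.Ioo 0 M))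
    (hgM : ∀ S : ℝ, 0 < S → g S M = 0)
    (hg_pos : ∀ S : ℝ, 0 < S → ∀ x ∈ Set.Ioo (0:ℝ) M, 0 < g S x)
    (hg_le : ∀ y ∈ Set.Icc (0:ℝ) M, g S1 y ≤ g S2 y)
    (A : ℝ → ℝ → ℝ → ℝ)
    (hA_mem : ∀ S : ℝ, 0 < S → ∀ x ∈ Set.Ioo (0:ℝ) M, ∀ t : ℝ, 0 ≤ t →
      A S t x ∈ Set.Ioc 0 M)
    (hA_eq : ∀ S : ℝ, 0 < S → ∀ x ∈ Set.Ioo (0:ℝ) M, ∀ t : ℝ, 0 ≤ t →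
      A S t x = x + ∫ u in (0:ℝ)..t, g S (A S u x)) :
    ∀ x ∈ Set.Ioo (0:ℝ) M,
      (D * ∫ t in Set.Ioi (0:ℝ),
          Real.exp (-(D * t) - ∫ u in (0:ℝ)..t, b S2 (A S2 u x)))
        ≤ D * ∫ t in Set.Ioi (0:ℝ),
            Real.exp (-(D * t) - ∫ u in (0:ℝ)..t, b S1 (A S1 u x)) := by
  intro x hx
  have hS2 : 0 < S2 := hS1.trans_le hS12
  have hmem : ∀ S, 0 < S → ∀ t, 0 ≤ t → A S t x ∈ Icc 0 M := fun S hS t ht =>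
    Ioc_subset_Icc_self (hA_mem S hS x hx t ht)
  have hg₂_nonneg : ∀ y ∈ Ioc 0 M, 0 ≤ g S2 y := fun y hy => hy.2.eq_or_lt.elim
    (fun h => (h ▸ hgM S2 hS2).ge) fun h => (hg_pos S2 hS2 y ⟨hy.1, h⟩).le
  have hA_le : ∀ t, 0 ≤ t → A S1 t x ≤ A S2 t x := fun t ht =>
    le_of_eq_add_integral hx.1 (hg_cont S1 hS1) (hg_cont S2 hS2) (hg_diff S2 hS2) hg₂_nonneg hg_le
      (hA_mem S1 hS1 x hx) (hA_mem S2 hS2 x hx) (hA_eq S1 hS1 x hx) (hA_eq S2 hS2 x hx) ht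
  have hb_cont_along : ∀ S, 0 < S → ContinuousOn (fun u => b S (A S u x)) (Ici 0) := fun S hS =>
    (hb_cont S hS).comp (continuousOn_Ici_of_eq_add_integral isCompact_Icc (hg_cont S hS)
      (hmem S hS) (hA_eq S hS x hx)) fun u hu => hmem S hS u hu
  refine firstDeathProb_le_of_le hD (hb_cont_along S1 hS1) (hb_cont_along S2 hS2)
    (fun t ht => hb_nonneg S1 hS1 _ (hmem S1 hS1 t ht)) fun t ht => ?_
  calc b S1 (A S1 t x) ≤ b S1 (A S2 t x) :=
        hb_monox S1 hS1 (hmem S1 hS1 t ht) (hmem S2 hS2 t ht) (hA_le t ht)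
    _ ≤ b S2 (A S2 t x) := hb_monoS _ (hmem S2 hS2 t ht) S1 S2 hS1 hS12

/-- Comparison of the first-generation extinction probabilities: if `g(S¹,·) ≤ g(S²,·)`
and `b` is non-decreasing in both `S` and `x`, then
`p^{S¹}_1(x) = D∫_0^∞ e^{−Dt−∫_0^t b(S¹,A^{S¹}_u(x))du} dt ≥ p^{S²}_1(x)`. -/
theorem statement19 (M D : ℝ) (hM : 0 < M) (hD : 0 < D)
    (S1 S2 : ℝ) (hS1 : 0 < S1) (hS12 : S1 ≤ S2)
    (b : ℝ → ℝ → ℝ) (g : ℝ → ℝ → ℝ)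
    (hb_cont : ∀ S : ℝ, 0 < S → ContinuousOn (b S) (Set.Icc 0 M))
    (hb_nonneg : ∀ S : ℝ, 0 < S → ∀ x ∈ Set.Icc (0:ℝ) M, 0 ≤ b S x)
    (hb_monoS : ∀ x ∈ Set.Icc (0:ℝ) M, ∀ Sa Sb : ℝ, 0 < Sa → Sa ≤ Sb → b Sa x ≤ b Sb x)
    (hb_monox : ∀ S : ℝ, 0 < S → MonotoneOn (b S) (Set.Icc 0 M))
    (hg_cont : ∀ S : ℝ, 0 < S → ContinuousOn (g S) (Set.Icc 0 M))
    (hg_diff : ∀ S : ℝ, 0 < S → ContDiffOn ℝ 1 (g S) (Set.Ioo 0 M))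
    (hg0 : ∀ S : ℝ, 0 < S → g S 0 = 0) (hgM : ∀ S : ℝ, 0 < S → g S M = 0)
    (hg_pos : ∀ S : ℝ, 0 < S → ∀ x ∈ Set.Ioo (0:ℝ) M, 0 < g S x)
    (hg_le : ∀ y ∈ Set.Icc (0:ℝ) M, g S1 y ≤ g S2 y)
    (A : ℝ → ℝ → ℝ → ℝ)
    (hA_mem : ∀ S : ℝ, 0 < S → ∀ x ∈ Set.Ioo (0:ℝ) M, ∀ t : ℝ, 0 ≤ t →
      A S t x ∈ Set.Ioc 0 M)
    (hA_eq : ∀ S : ℝ, 0 < S → ∀ x ∈ Set.Ioo (0:ℝ) M, ∀ t : ℝ, 0 ≤ t →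
      A S t x = x + ∫ u in (0:ℝ)..t, g S (A S u x)) :
    ∀ x ∈ Set.Ioo (0:ℝ) M,
      (D * ∫ t in Set.Ioi (0:ℝ),
          Real.exp (-(D * t) - ∫ u in (0:ℝ)..t, b S2 (A S2 u x)))
        ≤ D * ∫ t in Set.Ioi (0:ℝ),
            Real.exp (-(D * t) - ∫ u in (0:ℝ)..t, b S1 (A S1 u x)) :=
  statement19_general M D hD S1 S2 hS1 hS12 b g hb_cont hb_nonneg hb_monoS hb_monox hg_cont hg_diff
    hgM hg_pos hg_le A hA_mem hA_eq
end
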